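/- arXiv:2310.19949 — 3 statements merged into one kernel-verified Lean document; each statement's English description precedes it below -/
import Mathlib

section
/- If G is a finite connected graph with at least 2 vertices, then gpg'(G) = 2 if and only if there exists a vertex u of G such that for every vertex v ≠ u the pair {u, v} induces a universal line, i.e., L(u,v) = V(G). -/
open Finset SimpleGraph

variable {V : Type*}

/-- `S` is in general position in `G`: no shortest path of `G` contains more than
two vertices of `S`. -/
def IsGPSet (G : SimpleGraph V) (S : Set V) : Prop :=
  ∀ ⦃u v : V⦄ (p : G.Walk u v), p.IsPath → p.length = G.dist u v →
    (S ∩ {x | x ∈ p.support}).ncard ≤ 2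

open scoped Classical in
/-- The set of vertices that can legally be played when the set of already selected
vertices is `S`. -/
noncomputable def playable [Fintype V] (G : SimpleGraph V) (S : Finset V) : Finset V :=
  Finset.univ.filter (fun v => v ∉ S ∧ IsGPSet G (↑(insert v S) : Set V))

open scoped Classical in
/-- Value (final set size with optimal play) of the Builder-Blocker general position game
from position `S` with the given player to move (`true` = Builder, the maximiser;
`false` = Blocker, the minimiser), computed with a fuel parameter. -/
noncomputable def gameValAux [Fintype V] (G : SimpleGraph V) : ℕ → Bool → Finset V → ℕ
  | 0, _, S => S.card
  | fuel + 1, turn, S =>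
    if h : (playable G S).Nonempty then
      if turn then (playable G S).sup' h (fun v => gameValAux G fuel (!turn) (insert v S))
      else (playable G S).inf' h (fun v => gameValAux G fuel (!turn) (insert v S))
    else S.card

/-- Value of the Builder-Blocker general position game from position `S`,
with `turn = true` meaning Builder (the maximiser) is to move. Since at most
`Fintype.card V - S.card` further moves are possible, this fuel suffices. -/
noncomputable def gameVal [Fintype V] (G : SimpleGraph V) (turn : Bool) (S : Finset V) : ℕ :=
  gameValAux G (Fintype.card V - S.card) turn S

/-- The B-game general position number: Builder moves first. -/
noncomputable def gpg [Fintype V] (G : SimpleGraph V) : ℕ := gameVal G true ∅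

/-- The B'-game general position number: Blocker moves first. -/
noncomputable def gpg' [Fintype V] (G : SimpleGraph V) : ℕ := gameVal G false ∅

/-- The line induced by `x` and `y`: vertices `z` with `d(x,y) = d(x,z) + d(z,y)`
or `d(x,y) = |d(x,z) - d(z,y)|`. -/
def gline (G : SimpleGraph V) (x y : V) : Set V :=
  {z | G.dist x y = G.dist x z + G.dist z y ∨
       (G.dist x y : ℤ) = |(G.dist x z : ℤ) - (G.dist z y : ℤ)|}

/-! ### Geodesic lemmas -/

private lemma geo_dist [DecidableEq V] {G : SimpleGraph V} (hG : G.Connected) {x y : V}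
    (p : G.Walk x y) (hd : p.length = G.dist x y) {a : V} (ha : a ∈ p.support) :
    (p.takeUntil a ha).length = G.dist x a ∧ (p.dropUntil a ha).length = G.dist a y ∧
      G.dist x a + G.dist a y = G.dist x y := by
  have h1 : G.dist x a ≤ (p.takeUntil a ha).length := G.dist_le _
  have h2 : G.dist a y ≤ (p.dropUntil a ha).length := G.dist_le _
  have h3 : (p.takeUntil a ha).length + (p.dropUntil a ha).length = p.length := by
    rw [← SimpleGraph.Walk.length_append, p.take_spec ha]
  have h4 : G.dist x y ≤ G.dist x a + G.dist a y := hG.dist_triangle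
  omega

private lemma geo_order [DecidableEq V] {G : SimpleGraph V} (hG : G.Connected) {x y : V}
    (p : G.Walk x y) (hd : p.length = G.dist x y) {a b : V} (ha : a ∈ p.support)
    (hb : b ∈ p.support) (hle : G.dist x a ≤ G.dist x b) :
    G.dist x a + G.dist a b = G.dist x b := by
  obtain ⟨hta, hda, hsa⟩ := geo_dist hG p hd ha
  have hb' : b ∈ (p.takeUntil a ha).support ∨ b ∈ (p.dropUntil a ha).support :=
    (SimpleGraph.Walk.mem_support_append_iff _ _).mp (by rw [p.take_spec ha]; exact hb)
  rcases hb' with hb' | hb'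
  · obtain ⟨_, _, hsum⟩ := geo_dist hG (p.takeUntil a ha) hta hb'
    have hba : G.dist b a = 0 := by omega
    have : b = a := (hG.dist_eq_zero_iff).mp hba
    subst this
    simp [SimpleGraph.dist_self]
  · obtain ⟨_, _, hsum⟩ := geo_dist hG (p.dropUntil a ha) hda hb'
    obtain ⟨_, _, hsb⟩ := geo_dist hG p hd hb
    omega

private lemma between_of_mem_geo {G : SimpleGraph V} (hG : G.Connected) {x y : V}
    (p : G.Walk x y) (hd : p.length = G.dist x y) {u v w : V}
    (hu : u ∈ p.support) (hv : v ∈ p.support) (hw : w ∈ p.support) :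
    G.dist u v = G.dist u w + G.dist w v ∨ G.dist u w = G.dist u v + G.dist v w ∨
      G.dist w v = G.dist w u + G.dist u v := by
  classical
  have key : ∀ a b : V, a ∈ p.support → b ∈ p.support →
      G.dist x a + G.dist a b = G.dist x b ∨ G.dist x b + G.dist b a = G.dist x a := by
    intro a b ha hb
    rcases le_total (G.dist x a) (G.dist x b) with h | h
    · exact Or.inl (geo_order hG p hd ha hb h)
    · exact Or.inr (geo_order hG p hd hb ha h)
  have cuv : G.dist u v = G.dist v u := G.dist_comm
  have cuw : G.dist u w = G.dist w u := G.dist_comm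
  have cvw : G.dist v w = G.dist w v := G.dist_comm
  have k1 := key u v hu hv
  have k2 := key u w hu hw
  have k3 := key v w hv hw
  omega

/-! ### General position lemmas -/

private lemma gp_of_ncard_le {G : SimpleGraph V} {S : Set V} (hfin : S.Finite)
    (h : S.ncard ≤ 2) : IsGPSet G S :=
  fun _ _ _p _ _ => le_trans (Set.ncard_le_ncard Set.inter_subset_left hfin) h

private lemma gp_pair (G : SimpleGraph V) (u v : V) : IsGPSet G {u, v} := by
  apply gp_of_ncard_le (Set.toFinite _)
  exact le_trans (Set.ncard_insert_le _ _) (by simp)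

private lemma gp_single (G : SimpleGraph V) (u : V) : IsGPSet G {u} := by
  apply gp_of_ncard_le (Set.toFinite _); simp

private lemma not_gp_of_between {G : SimpleGraph V} (hG : G.Connected) {a b c : V}
    (hab : a ≠ b) (hac : a ≠ c) (hbc : b ≠ c)
    (h : G.dist a b = G.dist a c + G.dist c b) {S : Set V}
    (hSa : a ∈ S) (hSb : b ∈ S) (hSc : c ∈ S) : ¬ IsGPSet G S := by
  obtain ⟨p1, hp1, hl1⟩ := hG.exists_path_of_dist a c
  obtain ⟨p2, hp2, hl2⟩ := hG.exists_path_of_dist c b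
  have hq : (p1.append p2).length = G.dist a b := by
    rw [SimpleGraph.Walk.length_append, hl1, hl2, h]
  have hqp : (p1.append p2).IsPath := (p1.append p2).isPath_of_length_eq_dist hq
  intro hgp
  have hle := hgp (p1.append p2) hqp hq
  have hsub : ({a, b, c} : Set V) ⊆ S ∩ {x | x ∈ (p1.append p2).support} := by
    intro z hz
    rcases hz with rfl | rfl | rfl
    · exact ⟨hSa, (SimpleGraph.Walk.mem_support_append_iff _ _).mpr
        (Or.inl p1.start_mem_support)⟩
    · exact ⟨hSb, (SimpleGraph.Walk.mem_support_append_iff _ _).mpr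
        (Or.inr p2.end_mem_support)⟩
    · exact ⟨hSc, (SimpleGraph.Walk.mem_support_append_iff _ _).mpr
        (Or.inl p1.end_mem_support)⟩
  have h3 : ({a, b, c} : Set V).ncard = 3 := by
    rw [Set.ncard_insert_of_notMem (by simp [hab, hac]) (Set.toFinite _),
      Set.ncard_insert_of_notMem (by simp [hbc]) (Set.toFinite _), Set.ncard_singleton]
  have hfin : (S ∩ {x | x ∈ (p1.append p2).support}).Finite :=
    Set.Finite.inter_of_right (List.finite_toSet _) S
  have := Set.ncard_le_ncard hsub hfin
  omega

private lemma between_of_not_gp {G : SimpleGraph V} (hG : G.Connected) {u v w : V}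
    (h : ¬ IsGPSet G {u, v, w}) :
    G.dist u v = G.dist u w + G.dist w v ∨ G.dist u w = G.dist u v + G.dist v w ∨
      G.dist w v = G.dist w u + G.dist u v := by
  unfold IsGPSet at h
  push_neg at h
  obtain ⟨x, y, p, hp, hd, hcard⟩ := h
  have hsup : ∀ a b c : V, ({a, b, c} : Set V) = {u, v, w} → a ∉ p.support → False := by
    intro a b c habc ha
    have hsub : ({u, v, w} : Set V) ∩ {x | x ∈ p.support} ⊆ {b, c} := by
      rw [← habc]
      rintro z ⟨hz1, hz2⟩
      simp only [Set.mem_insert_iff, Set.mem_singleton_iff] at hz1 ⊢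
      rcases hz1 with rfl | h' | h'
      · exact absurd hz2 ha
      · exact Or.inl h'
      · exact Or.inr h'
    have h1 := Set.ncard_le_ncard hsub (Set.toFinite _)
    have h2 : ({b, c} : Set V).ncard ≤ 2 := le_trans (Set.ncard_insert_le _ _) (by simp)
    omega
  have hu : u ∈ p.support := by by_contra h'; exact hsup u v w rfl h'
  have hv : v ∈ p.support := by
    by_contra h'; refine hsup v u w ?_ h'; ext z; simp; tauto
  have hw : w ∈ p.support := by
    by_contra h'; refine hsup w u v ?_ h'; ext z; simp; tauto
  exact between_of_mem_geo hG p hd hu hv hw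

/-! ### Line lemmas -/

private lemma mem_gline_iff {G : SimpleGraph V} {u v w : V} :
    w ∈ gline G u v ↔ (G.dist u v = G.dist u w + G.dist w v ∨
      G.dist u w = G.dist u v + G.dist v w ∨ G.dist w v = G.dist w u + G.dist u v) := by
  unfold gline
  simp only [Set.mem_setOf_eq]
  constructor
  · rintro (h | h)
    · exact Or.inl h
    · rcases abs_cases ((G.dist u w : ℤ) - G.dist w v) with ⟨he, _⟩ | ⟨he, _⟩ <;>
        rw [he] at h
      · right; left; rw [SimpleGraph.dist_comm (u := v) (v := w)]; omega
      · right; right; rw [SimpleGraph.dist_comm (u := w) (v := u)]; omega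
  · rintro (h | h | h)
    · exact Or.inl h
    · right
      rw [SimpleGraph.dist_comm (u := v) (v := w)] at h
      have e : (G.dist u w : ℤ) - G.dist w v = (G.dist u v : ℤ) := by omega
      rw [e, Int.abs_natCast]
    · right
      rw [SimpleGraph.dist_comm (u := w) (v := u)] at h
      have e : (G.dist u w : ℤ) - G.dist w v = -(G.dist u v : ℤ) := by omega
      rw [e, abs_neg, Int.abs_natCast]

private lemma left_mem_gline (G : SimpleGraph V) (u v : V) : u ∈ gline G u v := by
  unfold gline; right; simp [SimpleGraph.dist_self]

private lemma right_mem_gline (G : SimpleGraph V) (u v : V) : v ∈ gline G u v := by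
  unfold gline; right; simp [SimpleGraph.dist_self]

/-! ### Game value lemmas -/

open scoped Classical in
private lemma notMem_of_mem_playable [Fintype V] {G : SimpleGraph V} {S : Finset V} {v : V}
    (h : v ∈ playable G S) : v ∉ S ∧ IsGPSet G (↑(insert v S) : Set V) := by
  classical
  simpa [playable] using h

open scoped Classical in
private lemma mem_playable_iff [Fintype V] {G : SimpleGraph V} {S : Finset V} {v : V} :
    v ∈ playable G S ↔ v ∉ S ∧ IsGPSet G (↑(insert v S) : Set V) := by
  classical
  simp [playable]

private lemma card_le_valAux [Fintype V] (G : SimpleGraph V) :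
    ∀ (fuel : ℕ) (turn : Bool) (S : Finset V), S.card ≤ gameValAux G fuel turn S := by
  classical
  intro fuel
  induction fuel with
  | zero => intro turn S; simp [gameValAux]
  | succ n ih =>
    intro turn S
    rw [gameValAux]
    split
    case isTrue h =>
      have hbr : ∀ v ∈ playable G S, S.card ≤ gameValAux G n (!turn) (insert v S) := by
        intro v hv
        exact le_trans (Finset.card_le_card (Finset.subset_insert v S)) (ih _ _)
      split
      · obtain ⟨v, hv⟩ := h
        exact le_trans (hbr v hv)
          (Finset.le_sup' (fun v => gameValAux G n (!turn) (insert v S)) hv)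
      · exact Finset.le_inf' _ _ hbr
    case isFalse h => exact le_refl _

private lemma valAux_of_empty [Fintype V] {G : SimpleGraph V} {S : Finset V}
    (h : playable G S = ∅) : ∀ fuel turn, gameValAux G fuel turn S = S.card := by
  intro fuel turn
  cases fuel with
  | zero => rfl
  | succ n => rw [gameValAux]; simp [h]

private lemma valAux_succ_ge [Fintype V] {G : SimpleGraph V} {S : Finset V}
    (h : (playable G S).Nonempty) (fuel : ℕ) (turn : Bool) :
    S.card + 1 ≤ gameValAux G (fuel + 1) turn S := by
  classical
  rw [gameValAux, dif_pos h]
  have hbr : ∀ v ∈ playable G S, S.card + 1 ≤ gameValAux G fuel (!turn) (insert v S) := by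
    intro v hv
    have hv' : v ∉ S := (notMem_of_mem_playable hv).1
    calc S.card + 1 = (insert v S).card := (Finset.card_insert_of_notMem hv').symm
    _ ≤ _ := card_le_valAux G _ _ _
  split
  · obtain ⟨v, hv⟩ := h
    exact le_trans (hbr v hv)
      (Finset.le_sup' (fun v => gameValAux G fuel (!turn) (insert v S)) hv)
  · exact Finset.le_inf' _ _ hbr

/-- `gpg'(G) = 2` iff there is a vertex `u` such that for every other vertex `v` the
pair `{u, v}` induces a universal line. -/
theorem stmt_10 {V : Type*} [Fintype V] (G : SimpleGraph V) (hG : G.Connected)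
    (h2 : 2 ≤ Fintype.card V) :
    gpg' G = 2 ↔ ∃ u : V, ∀ v : V, v ≠ u → gline G u v = Set.univ := by
  classical
  have hne : Nonempty V := Fintype.card_pos_iff.mp (by omega)
  obtain ⟨m, hm⟩ : ∃ m, Fintype.card V = m + 2 := ⟨Fintype.card V - 2, by omega⟩
  have hP0 : ∀ v : V, v ∈ playable G (∅ : Finset V) := by
    intro v
    rw [mem_playable_iff]
    refine ⟨Finset.notMem_empty v, ?_⟩
    have hs : (↑(insert v (∅ : Finset V)) : Set V) = {v} := by simp
    rw [hs]; exact gp_single G v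
  have hP0ne : (playable G (∅ : Finset V)).Nonempty := ⟨Classical.arbitrary V, hP0 _⟩
  have hP1 : ∀ u v : V, v ≠ u → v ∈ playable G ({u} : Finset V) := by
    intro u v hvu
    rw [mem_playable_iff]
    refine ⟨by simp [hvu], ?_⟩
    have hs : (↑(insert v ({u} : Finset V)) : Set V) = {v, u} := by simp
    rw [hs]; exact gp_pair G v u
  have hP1ne : ∀ u : V, (playable G ({u} : Finset V)).Nonempty := by
    intro u
    obtain ⟨v, hv⟩ := Fintype.exists_ne_of_one_lt_card (by omega) u
    exact ⟨v, hP1 u v hv⟩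
  have hpairmax : ∀ u v : V, v ≠ u →
      (playable G (insert v ({u} : Finset V)) = ∅ ↔ gline G u v = Set.univ) := by
    intro u v hvu
    constructor
    · intro hemp
      ext w
      simp only [Set.mem_univ, iff_true]
      by_cases hw : w = u
      · rw [hw]; exact left_mem_gline G u v
      by_cases hw2 : w = v
      · rw [hw2]; exact right_mem_gline G u v
      · have hwS : w ∉ insert v ({u} : Finset V) := by simp [hw, hw2]
        have hnp : w ∉ playable G (insert v ({u} : Finset V)) := by simp [hemp]
        rw [mem_playable_iff] at hnp
        push_neg at hnp
        have hngp : ¬ IsGPSet G ↑(insert w (insert v ({u} : Finset V))) := hnp hwS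
        have hset : (↑(insert w (insert v ({u} : Finset V))) : Set V) = {u, v, w} := by
          ext z; simp; tauto
        rw [hset] at hngp
        exact mem_gline_iff.mpr (between_of_not_gp hG hngp)
    · intro huniv
      rw [Finset.eq_empty_iff_forall_notMem]
      intro w hw
      rw [mem_playable_iff] at hw
      obtain ⟨hwS, hwgp⟩ := hw
      have hw1 : w ≠ v := by rintro rfl; simp at hwS
      have hw2 : w ≠ u := by rintro rfl; simp at hwS
      have hmem : w ∈ gline G u v := by rw [huniv]; trivial
      rw [mem_gline_iff] at hmem
      have hset : (↑(insert w (insert v ({u} : Finset V))) : Set V) = {u, v, w} := by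
        ext z; simp; tauto
      rw [hset] at hwgp
      have hmemu : u ∈ ({u, v, w} : Set V) := by simp
      have hmemv : v ∈ ({u, v, w} : Set V) := by simp
      have hmemw : w ∈ ({u, v, w} : Set V) := by simp
      rcases hmem with h | h | h
      · exact not_gp_of_between hG (Ne.symm hvu) (Ne.symm hw2) (Ne.symm hw1) h
          hmemu hmemv hmemw hwgp
      · exact not_gp_of_between hG (Ne.symm hw2) (Ne.symm hvu) hw1 h
          hmemu hmemw hmemv hwgp
      · exact not_gp_of_between hG hw1 hw2 hvu h
          hmemw hmemv hmemu hwgp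
  have hB : ∀ u v : V, v ≠ u → gline G u v = Set.univ →
      gameValAux G m false (insert v ({u} : Finset V)) = 2 := by
    intro u v hvu hg
    rw [valAux_of_empty ((hpairmax u v hvu).mpr hg)]
    rw [Finset.card_insert_of_notMem (by simp [hvu]), Finset.card_singleton]
  have hBge : ∀ u v : V, v ≠ u → 2 ≤ gameValAux G m false (insert v ({u} : Finset V)) := by
    intro u v hvu
    have h := card_le_valAux G m false (insert v ({u} : Finset V))
    rwa [Finset.card_insert_of_notMem (by simp [hvu]), Finset.card_singleton] at h
  have hF : ∀ u : V, gameValAux G (m + 1) true ({u} : Finset V) =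
      (playable G ({u} : Finset V)).sup' (hP1ne u)
        (fun v => gameValAux G m false (insert v {u})) := by
    intro u
    rw [gameValAux, dif_pos (hP1ne u)]
    rfl
  have hFge : ∀ u : V, 2 ≤ gameValAux G (m + 1) true ({u} : Finset V) := by
    intro u
    rw [hF u]
    obtain ⟨v, hv⟩ := hP1ne u
    have hvu : v ≠ u := by
      have h := (notMem_of_mem_playable hv).1; simpa using h
    exact le_trans (hBge u v hvu)
      (Finset.le_sup' (fun v => gameValAux G m false (insert v {u})) hv)
  have hgpg : gpg' G = (playable G (∅ : Finset V)).inf' hP0ne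
      (fun u => gameValAux G (m + 1) true (insert u ∅)) := by
    show gameValAux G (Fintype.card V - (∅ : Finset V).card) false ∅ = _
    rw [Finset.card_empty, Nat.sub_zero, hm, gameValAux, dif_pos hP0ne]
    rfl
  constructor
  · intro h
    obtain ⟨u, hu, hval⟩ := Finset.exists_mem_eq_inf' hP0ne
      (fun u => gameValAux G (m + 1) true (insert u ∅))
    refine ⟨u, ?_⟩
    intro v hvu
    have hFu : gameValAux G (m + 1) true ({u} : Finset V) = 2 := by
      have h1 : gameValAux G (m + 1) true (insert u (∅ : Finset V)) = 2 := by
        rw [← hval, ← hgpg, h]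
      rwa [show (insert u (∅ : Finset V)) = ({u} : Finset V) by simp] at h1
    have hvP : v ∈ playable G ({u} : Finset V) := hP1 u v hvu
    have hle : gameValAux G m false (insert v ({u} : Finset V)) ≤ 2 := by
      rw [← hFu, hF u]
      exact Finset.le_sup' (fun v => gameValAux G m false (insert v {u})) hvP
    have hemp : playable G (insert v ({u} : Finset V)) = ∅ := by
      by_contra hne'
      have hne'' : (playable G (insert v ({u} : Finset V))).Nonempty :=
        Finset.nonempty_iff_ne_empty.mpr hne'
      cases m with
      | zero =>
        obtain ⟨w, hw⟩ := hne''
        have hwS := (notMem_of_mem_playable hw).1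
        have hScard : (insert v ({u} : Finset V)).card = 2 := by
          rw [Finset.card_insert_of_notMem (by simp [hvu])]; rfl
        have huniv : insert v ({u} : Finset V) = Finset.univ :=
          Finset.eq_univ_of_card _ (by rw [hScard, hm])
        rw [huniv] at hwS
        exact hwS (Finset.mem_univ w)
      | succ k =>
        have hge := valAux_succ_ge hne'' k false
        rw [Finset.card_insert_of_notMem (by simp [hvu]), Finset.card_singleton] at hge
        omega
    exact (hpairmax u v hvu).mp hemp
  · rintro ⟨u, hu⟩
    have hFu : gameValAux G (m + 1) true ({u} : Finset V) = 2 := by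
      rw [hF u]
      apply le_antisymm
      · apply Finset.sup'_le
        intro v hv
        have hvu : v ≠ u := by
          have h := (notMem_of_mem_playable hv).1; simpa using h
        rw [hB u v hvu (hu v hvu)]
      · exact (hF u) ▸ (hFge u)
    rw [hgpg]
    apply le_antisymm
    · refine le_trans (Finset.inf'_le _ (hP0 u)) ?_
      rw [show (insert u (∅ : Finset V)) = ({u} : Finset V) by simp, hFu]
    · apply Finset.le_inf'
      intro u' hu'
      rw [show (insert u' (∅ : Finset V)) = ({u'} : Finset V) by simp]
      exact hFge u'
end

section
/- For any integers a, b with 2 ≤ a ≤ b, there exists a finite connected graph G with gpg(G) = a and gpg'(G) = b. -/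
open Finset SimpleGraph

variable {V : Type*}

namespace StmtAux

def MG (a b : ℕ) : SimpleGraph (Fin a × Fin b) where
  Adj u v := u.1 ≠ v.1
  symm := ⟨fun u v h => Ne.symm h⟩
  loopless := ⟨fun u h => h rfl⟩

variable {a b : ℕ}

lemma mg_adj {u v : Fin a × Fin b} : (MG a b).Adj u v ↔ u.1 ≠ v.1 := Iff.rfl

lemma exists_ne_col (ha : 2 ≤ a) (c : Fin a) : ∃ c' : Fin a, c' ≠ c := by
  haveI : Nontrivial (Fin a) := Fin.nontrivial_iff_two_le.mpr ha
  exact exists_ne c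

lemma mg_connected (ha : 2 ≤ a) (hb : 1 ≤ b) : (MG a b).Connected := by
  rw [connected_iff]
  constructor
  · intro u v
    by_cases h : u.1 = v.1
    · by_cases huv : u = v
      · exact huv ▸ Reachable.refl u
      · obtain ⟨c', hc'⟩ := exists_ne_col ha u.1
        have h1 : (MG a b).Adj u (c', u.2) := by simp [mg_adj]; exact fun e => hc' e.symm
        have h2 : (MG a b).Adj (c', u.2) v := by simp [mg_adj, h ▸ hc']
        exact (h1.toWalk.append h2.toWalk).reachable
    · exact (SimpleGraph.Adj.toWalk (by exact h : (MG a b).Adj u v)).reachable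
  · have : 0 < a := by omega
    exact ⟨(⟨0, this⟩, ⟨0, hb⟩)⟩

lemma mg_dist_le_two (ha : 2 ≤ a) (u v : Fin a × Fin b) : (MG a b).dist u v ≤ 2 := by
  by_cases h : u.1 = v.1
  · by_cases huv : u = v
    · subst huv; simp [SimpleGraph.dist_self]
    · obtain ⟨c', hc'⟩ := exists_ne_col ha u.1
      have h1 : (MG a b).Adj u (c', u.2) := fun e => hc' e.symm
      have h2 : (MG a b).Adj (c', u.2) v := by rw [mg_adj]; rw [← h]; exact hc'
      have := SimpleGraph.dist_le (h1.toWalk.append h2.toWalk)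
      simpa using this
  · calc (MG a b).dist u v ≤ ((show (MG a b).Adj u v from h).toWalk).length := SimpleGraph.dist_le _
    _ ≤ 2 := by simp

lemma mg_dist_eq_two (ha : 2 ≤ a) (hb : 1 ≤ b) {u v : Fin a × Fin b} (h : u.1 = v.1) (huv : u ≠ v) :
    (MG a b).dist u v = 2 := by
  have h0 : (MG a b).dist u v ≠ 0 := fun hc =>
    huv ((mg_connected ha hb).dist_eq_zero_iff.mp hc)
  have h1 : (MG a b).dist u v ≠ 1 := fun hc =>
    (SimpleGraph.dist_eq_one_iff_adj.mp hc) h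
  have := mg_dist_le_two ha u v
  omega


lemma ncard_le_two_of_subset_pair {W : Type*} {T : Set W} {x y : W} (h : T ⊆ {x, y}) :
    T.ncard ≤ 2 := by
  calc T.ncard ≤ ({x, y} : Set W).ncard :=
        Set.ncard_le_ncard h ((Set.finite_singleton y).insert x)
    _ ≤ ({y} : Set W).ncard + 1 := Set.ncard_insert_le x {y}
    _ ≤ 2 := by rw [Set.ncard_singleton]

lemma isGPSet_iff (ha : 2 ≤ a) (hb : 1 ≤ b) (S : Set (Fin a × Fin b)) :
    IsGPSet (MG a b) S ↔
      (∀ u ∈ S, ∀ v ∈ S, u.1 = v.1) ∨ (∀ u ∈ S, ∀ v ∈ S, u ≠ v → u.1 ≠ v.1) := by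
  constructor
  · intro hGP
    by_contra hcon
    push_neg at hcon
    obtain ⟨⟨x, hx, y, hy, hxy⟩, u, hu, v, hv, huv, hcol⟩ := hcon
    obtain ⟨w, hw, hwcol⟩ : ∃ w ∈ S, w.1 ≠ u.1 := by
      by_cases hxu : x.1 = u.1
      · exact ⟨y, hy, by rw [← hxu]; exact fun e => hxy e.symm⟩
      · exact ⟨x, hx, hxu⟩
    have h1 : (MG a b).Adj u w := fun e => hwcol e.symm
    have h2 : (MG a b).Adj w v := by rw [mg_adj, ← hcol]; exact hwcol
    have huw : u ≠ w := fun e => hwcol (by rw [e])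
    have hwv : w ≠ v := fun e => hwcol (by rw [e, ← hcol])
    set q : (MG a b).Walk u v := SimpleGraph.Walk.cons h1 (SimpleGraph.Walk.cons h2 SimpleGraph.Walk.nil) with hq
    have hsupp : q.support = [u, w, v] := rfl
    have hpath : q.IsPath := by
      rw [SimpleGraph.Walk.isPath_def, hsupp]
      simp [huw, huv, hwv]
    have hlen : q.length = (MG a b).dist u v := by
      rw [mg_dist_eq_two ha hb hcol huv]; rfl
    have hle := hGP q hpath hlen
    have hset : S ∩ {z | z ∈ q.support} = {u, w, v} := by
      rw [hsupp]; ext z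
      simp only [Set.mem_inter_iff, Set.mem_setOf_eq, List.mem_cons, List.mem_singleton,
        List.not_mem_nil, or_false, Set.mem_insert_iff, Set.mem_singleton_iff]
      constructor
      · rintro ⟨_, h⟩; exact h
      · rintro (rfl | rfl | rfl) <;> simp [hu, hw, hv]
    rw [hset] at hle
    have h3 : ({u, w, v} : Set (Fin a × Fin b)).ncard = 3 :=
      Set.ncard_eq_three.mpr ⟨u, w, v, huw, huv, hwv, rfl⟩
    omega
  · intro hS u v p hpath hlen
    have hd := mg_dist_le_two (b := b) ha u v
    cases p with
    | nil =>
      apply ncard_le_two_of_subset_pair (x := u) (y := u)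
      intro z hz
      simp only [Set.mem_inter_iff, Set.mem_setOf_eq, SimpleGraph.Walk.support_nil,
        List.mem_singleton] at hz
      simp [hz.2]
    | cons h q =>
      rename_i w
      cases q with
      | nil =>
        apply ncard_le_two_of_subset_pair (x := u) (y := v)
        intro z hz
        simp only [Set.mem_inter_iff, Set.mem_setOf_eq, SimpleGraph.Walk.support_cons,
          SimpleGraph.Walk.support_nil, List.mem_cons, List.mem_singleton,
          List.not_mem_nil, or_false] at hz
        rcases hz.2 with rfl | rfl <;> simp
      | cons h' r =>
        rename_i w2
        cases r with
        | nil =>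
          -- p = u - w - v, shortest path of length 2
          have hlen2 : (MG a b).dist u v = 2 := by
            rw [← hlen]; rfl
          have huv : u ≠ v := by
            intro e; subst e
            rw [SimpleGraph.dist_self] at hlen2; omega
          have hcoluv : u.1 = v.1 := by
            by_contra hne
            have : (MG a b).dist u v = 1 := SimpleGraph.dist_eq_one_iff_adj.mpr hne
            omega
          have hwcol : w.1 ≠ u.1 := fun e => h e.symm
          have hsupp : (SimpleGraph.Walk.cons h (SimpleGraph.Walk.cons h' SimpleGraph.Walk.nil)).support = [u, w, v] := rfl
          -- not all three can be in S
          have hnot : ¬ (u ∈ S ∧ w ∈ S ∧ v ∈ S) := by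
            rintro ⟨hu, hw, hv⟩
            rcases hS with hS | hS
            · exact hwcol (hS w hw u hu)
            · exact hS u hu v hv huv hcoluv
          by_cases hu : u ∈ S
          · by_cases hw : w ∈ S
            · apply ncard_le_two_of_subset_pair (x := u) (y := w)
              intro z hz
              simp only [Set.mem_inter_iff, Set.mem_setOf_eq, hsupp, List.mem_cons,
                List.mem_singleton, List.not_mem_nil, or_false] at hz
              rcases hz.2 with rfl | rfl | rfl
              · simp
              · simp
              · exact absurd ⟨hu, hw, hz.1⟩ hnot
            · apply ncard_le_two_of_subset_pair (x := u) (y := v)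
              intro z hz
              simp only [Set.mem_inter_iff, Set.mem_setOf_eq, hsupp, List.mem_cons,
                List.mem_singleton, List.not_mem_nil, or_false] at hz
              rcases hz.2 with rfl | rfl | rfl
              · simp
              · exact absurd hz.1 hw
              · simp
          · apply ncard_le_two_of_subset_pair (x := w) (y := v)
            intro z hz
            simp only [Set.mem_inter_iff, Set.mem_setOf_eq, hsupp, List.mem_cons,
              List.mem_singleton, List.not_mem_nil, or_false] at hz
            rcases hz.2 with rfl | rfl | rfl
            · exact absurd hz.1 hu
            · simp
            · simp
        | cons h'' r2 =>
          exfalso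
          have : (SimpleGraph.Walk.cons h (SimpleGraph.Walk.cons h' (SimpleGraph.Walk.cons h'' r2))).length = r2.length + 3 := by
            simp only [SimpleGraph.Walk.length_cons]
          rw [this] at hlen
          omega

/-- All vertices in one part. -/
def AllCol (S : Finset (Fin a × Fin b)) : Prop := ∀ u ∈ S, ∀ v ∈ S, u.1 = v.1
/-- At most one vertex per part. -/
def Transv (S : Finset (Fin a × Fin b)) : Prop := ∀ u ∈ S, ∀ v ∈ S, u ≠ v → u.1 ≠ v.1

lemma card_le_of_allCol {S : Finset (Fin a × Fin b)} (hS : AllCol S) : S.card ≤ b := by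
  have : S.card ≤ (Finset.univ : Finset (Fin b)).card := by
    apply Finset.card_le_card_of_injOn Prod.snd (fun x _ => Finset.mem_univ _)
    intro u hu v hv h2
    exact Prod.ext (hS u hu v hv) h2
  simpa using this

lemma card_le_of_transv {S : Finset (Fin a × Fin b)} (hS : Transv S) : S.card ≤ a := by
  have : S.card ≤ (Finset.univ : Finset (Fin a)).card := by
    apply Finset.card_le_card_of_injOn Prod.fst (fun x _ => Finset.mem_univ _)
    intro u hu v hv h1
    by_contra hne
    exact hS u hu v hv hne h1
  simpa using this

lemma mem_playable {S : Finset (Fin a × Fin b)} {v : Fin a × Fin b} :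
    v ∈ playable (MG a b) S ↔ v ∉ S ∧ IsGPSet (MG a b) (↑(insert v S) : Set (Fin a × Fin b)) := by
  classical
  simp [playable]

lemma mem_coe_insert {S : Finset (Fin a × Fin b)} {v z : Fin a × Fin b} :
    z ∈ (↑(insert v S) : Set (Fin a × Fin b)) ↔ z = v ∨ z ∈ S := by simp

lemma mem_playable_col (ha : 2 ≤ a) (hb : 1 ≤ b) {S : Finset (Fin a × Fin b)}
    (hS : AllCol S) (hc : 2 ≤ S.card) {v : Fin a × Fin b} :
    v ∈ playable (MG a b) S ↔ v ∉ S ∧ ∀ u ∈ S, v.1 = u.1 := by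
  obtain ⟨x, hx, y, hy, hxy⟩ := Finset.one_lt_card.mp hc
  rw [mem_playable, isGPSet_iff ha hb]
  constructor
  · rintro ⟨hvS, hGP | hGP⟩
    · exact ⟨hvS, fun u hu => hGP v (by simp) u (by simp [hu])⟩
    · exfalso
      exact hGP x (by simp [hx]) y (by simp [hy]) hxy (hS x hx y hy)
  · rintro ⟨hvS, hcol⟩
    refine ⟨hvS, Or.inl ?_⟩
    intro p hp q hq
    rw [mem_coe_insert] at hp hq
    rcases hp with rfl | hp <;> rcases hq with rfl | hq
    · rfl
    · exact hcol q hq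
    · exact (hcol p hp).symm
    · exact hS p hp q hq

lemma mem_playable_transv (ha : 2 ≤ a) (hb : 1 ≤ b) {S : Finset (Fin a × Fin b)}
    (hS : Transv S) (hc : 2 ≤ S.card) {v : Fin a × Fin b} :
    v ∈ playable (MG a b) S ↔ v ∉ S ∧ ∀ u ∈ S, v.1 ≠ u.1 := by
  obtain ⟨x, hx, y, hy, hxy⟩ := Finset.one_lt_card.mp hc
  have hxycol : x.1 ≠ y.1 := hS x hx y hy hxy
  rw [mem_playable, isGPSet_iff ha hb]
  constructor
  · rintro ⟨hvS, hGP | hGP⟩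
    · exact absurd (hGP x (by simp [hx]) y (by simp [hy])) hxycol
    · refine ⟨hvS, fun u hu => ?_⟩
      exact hGP v (by simp) u (by simp [hu]) (fun e => hvS (e ▸ hu))
  · rintro ⟨hvS, hcol⟩
    refine ⟨hvS, Or.inr ?_⟩
    intro p hp q hq hpq
    rw [mem_coe_insert] at hp hq
    rcases hp with rfl | hp <;> rcases hq with rfl | hq
    · exact absurd rfl hpq
    · exact hcol q hq
    · exact fun e => (hcol p hp) e.symm
    · exact hS p hp q hq hpq

lemma playable_col_nonempty {S : Finset (Fin a × Fin b)} (ha : 2 ≤ a) (hb : 1 ≤ b)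
    (hS : AllCol S) (hc : 2 ≤ S.card) (hlt : S.card < b) :
    (playable (MG a b) S).Nonempty := by
  obtain ⟨x, hx⟩ := Finset.card_pos.mp (show 0 < S.card by omega)
  have himg : (S.image Prod.snd).card < b := by
    exact lt_of_le_of_lt (Finset.card_image_le) hlt
  obtain ⟨j, hj⟩ : ∃ j : Fin b, j ∉ S.image Prod.snd := by
    by_contra hcon
    push_neg at hcon
    have : (Finset.univ : Finset (Fin b)) ⊆ S.image Prod.snd := fun j _ => hcon j
    have := Finset.card_le_card this
    simp at this
    omega
  refine ⟨(x.1, j), (mem_playable_col ha hb hS hc).mpr ⟨?_, ?_⟩⟩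
  · intro hmem
    exact hj (Finset.mem_image_of_mem Prod.snd hmem)
  · intro u hu
    exact hS x hx u hu

lemma playable_col_empty {S : Finset (Fin a × Fin b)} (ha : 2 ≤ a) (hb : 1 ≤ b)
    (hS : AllCol S) (hc : 2 ≤ S.card) (heq : S.card = b) :
    ¬ (playable (MG a b) S).Nonempty := by
  rintro ⟨v, hv⟩
  obtain ⟨hvS, hcol⟩ := (mem_playable_col ha hb hS hc).mp hv
  have himg : S.image Prod.snd = Finset.univ := by
    apply Finset.eq_univ_of_card
    rw [Finset.card_image_of_injOn, heq, Fintype.card_fin]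
    intro u hu w hw h2
    exact Prod.ext (hS u hu w hw) h2
  have : v.2 ∈ S.image Prod.snd := by rw [himg]; exact Finset.mem_univ _
  obtain ⟨u, hu, h2⟩ := Finset.mem_image.mp this
  have : u = v := Prod.ext (hcol u hu).symm h2
  exact hvS (this ▸ hu)

lemma playable_transv_nonempty {S : Finset (Fin a × Fin b)} (ha : 2 ≤ a) (hb : 1 ≤ b)
    (hS : Transv S) (hc : 2 ≤ S.card) (hlt : S.card < a) :
    (playable (MG a b) S).Nonempty := by
  have himg : (S.image Prod.fst).card < a := lt_of_le_of_lt Finset.card_image_le hlt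
  obtain ⟨j, hj⟩ : ∃ j : Fin a, j ∉ S.image Prod.fst := by
    by_contra hcon
    push_neg at hcon
    have : (Finset.univ : Finset (Fin a)) ⊆ S.image Prod.fst := fun j _ => hcon j
    have := Finset.card_le_card this
    simp at this
    omega
  have hb0 : 0 < b := by omega
  refine ⟨(j, ⟨0, hb0⟩), (mem_playable_transv ha hb hS hc).mpr ⟨?_, ?_⟩⟩
  · intro hmem
    exact hj (Finset.mem_image_of_mem Prod.fst hmem)
  · intro u hu (e : j = u.1)
    exact hj (e ▸ Finset.mem_image_of_mem Prod.fst hu)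

lemma playable_transv_empty {S : Finset (Fin a × Fin b)} (ha : 2 ≤ a) (hb : 1 ≤ b)
    (hS : Transv S) (hc : 2 ≤ S.card) (heq : S.card = a) :
    ¬ (playable (MG a b) S).Nonempty := by
  rintro ⟨v, hv⟩
  obtain ⟨hvS, hcol⟩ := (mem_playable_transv ha hb hS hc).mp hv
  have himg : S.image Prod.fst = Finset.univ := by
    apply Finset.eq_univ_of_card
    rw [Finset.card_image_of_injOn, heq, Fintype.card_fin]
    intro u hu w hw h1
    by_contra hne
    exact hS u hu w hw hne h1
  have : v.1 ∈ S.image Prod.fst := by rw [himg]; exact Finset.mem_univ _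
  obtain ⟨u, hu, h1⟩ := Finset.mem_image.mp this
  exact hcol u hu h1.symm

lemma sup'_eq_const {β : Type*} {s : Finset β} (h : s.Nonempty) (f : β → ℕ) {c : ℕ}
    (hf : ∀ v ∈ s, f v = c) : s.sup' h f = c := by
  apply le_antisymm
  · exact Finset.sup'_le h f fun v hv => (hf v hv).le
  · obtain ⟨v0, hv0⟩ := h
    exact (hf v0 hv0) ▸ Finset.le_sup' f hv0

lemma inf'_eq_const {β : Type*} {s : Finset β} (h : s.Nonempty) (f : β → ℕ) {c : ℕ}
    (hf : ∀ v ∈ s, f v = c) : s.inf' h f = c := by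
  apply le_antisymm
  · obtain ⟨v0, hv0⟩ := h
    exact (hf v0 hv0) ▸ Finset.inf'_le f hv0
  · exact Finset.le_inf' h f fun v hv => (hf v hv).ge

lemma insert_classical (v : Fin a × Fin b) (S : Finset (Fin a × Fin b)) :
    (@insert _ _ (@Finset.instInsert (Fin a × Fin b)
      (fun x y => Classical.propDecidable (x = y))) v S) = insert v S := by
  congr
  exact Subsingleton.elim _ _

lemma gameValAux_col (ha : 2 ≤ a) (hb : 1 ≤ b) :
    ∀ (fuel : ℕ) (turn : Bool) (S : Finset (Fin a × Fin b)), AllCol S → 2 ≤ S.card →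
      b ≤ fuel + S.card → gameValAux (MG a b) fuel turn S = b := by
  intro fuel
  induction fuel with
  | zero =>
    intro turn S hS hc hf
    have := card_le_of_allCol hS
    simp only [gameValAux]
    omega
  | succ n ih =>
    intro turn S hS hc hf
    have hcb := card_le_of_allCol hS
    by_cases hfull : S.card = b
    · have hpe := playable_col_empty ha hb hS hc hfull
      simp only [gameValAux, dif_neg hpe]
      exact hfull
    · have hlt : S.card < b := lt_of_le_of_ne hcb hfull
      have hne := playable_col_nonempty ha hb hS hc hlt
      have hval : ∀ v ∈ playable (MG a b) S,
          gameValAux (MG a b) n (!turn) (insert v S) = b := by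
        intro v hv
        obtain ⟨hvS, hcol⟩ := (mem_playable_col ha hb hS hc).mp hv
        apply ih
        · intro p hp q hq
          rw [Finset.mem_insert] at hp hq
          rcases hp with rfl | hp <;> rcases hq with rfl | hq
          · rfl
          · exact hcol q hq
          · exact (hcol p hp).symm
          · exact hS p hp q hq
        · rw [Finset.card_insert_of_notMem hvS]; omega
        · rw [Finset.card_insert_of_notMem hvS]; omega
      simp only [gameValAux, dif_pos hne, insert_classical]
      cases turn
      · rw [if_neg (by simp)]
        exact inf'_eq_const hne _ hval
      · rw [if_pos rfl]
        exact sup'_eq_const hne _ hval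

lemma gameValAux_transv (ha : 2 ≤ a) (hb : 1 ≤ b) :
    ∀ (fuel : ℕ) (turn : Bool) (S : Finset (Fin a × Fin b)), Transv S → 2 ≤ S.card →
      a ≤ fuel + S.card → gameValAux (MG a b) fuel turn S = a := by
  intro fuel
  induction fuel with
  | zero =>
    intro turn S hS hc hf
    have := card_le_of_transv hS
    simp only [gameValAux]
    omega
  | succ n ih =>
    intro turn S hS hc hf
    have hca := card_le_of_transv hS
    by_cases hfull : S.card = a
    · have hpe := playable_transv_empty ha hb hS hc hfull
      simp only [gameValAux, dif_neg hpe]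
      exact hfull
    · have hlt : S.card < a := lt_of_le_of_ne hca hfull
      have hne := playable_transv_nonempty ha hb hS hc hlt
      have hval : ∀ v ∈ playable (MG a b) S,
          gameValAux (MG a b) n (!turn) (insert v S) = a := by
        intro v hv
        obtain ⟨hvS, hcol⟩ := (mem_playable_transv ha hb hS hc).mp hv
        apply ih
        · intro p hp q hq hpq
          rw [Finset.mem_insert] at hp hq
          rcases hp with rfl | hp <;> rcases hq with rfl | hq
          · exact absurd rfl hpq
          · exact hcol q hq
          · exact fun e => hcol p hp e.symm
          · exact hS p hp q hq hpq
        · rw [Finset.card_insert_of_notMem hvS]; omega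
        · rw [Finset.card_insert_of_notMem hvS]; omega
      simp only [gameValAux, dif_pos hne, insert_classical]
      cases turn
      · rw [if_neg (by simp)]
        exact inf'_eq_const hne _ hval
      · rw [if_pos rfl]
        exact sup'_eq_const hne _ hval

lemma mem_playable_singleton (ha : 2 ≤ a) (hb : 1 ≤ b) {u v : Fin a × Fin b} :
    v ∈ playable (MG a b) ({u} : Finset (Fin a × Fin b)) ↔ v ≠ u := by
  rw [mem_playable]
  constructor
  · rintro ⟨h, _⟩; simpa using h
  · intro hvu
    refine ⟨by simpa using hvu, ?_⟩
    rw [isGPSet_iff ha hb]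
    by_cases hcol : v.1 = u.1
    · left
      intro p hp q hq
      rw [mem_coe_insert] at hp hq
      simp only [Finset.mem_singleton] at hp hq
      rcases hp with rfl | rfl <;> rcases hq with rfl | rfl
      · rfl
      · exact hcol
      · exact hcol.symm
      · rfl
    · right
      intro p hp q hq hpq
      rw [mem_coe_insert] at hp hq
      simp only [Finset.mem_singleton] at hp hq
      rcases hp with rfl | rfl <;> rcases hq with rfl | rfl
      · exact absurd rfl hpq
      · exact hcol
      · exact fun e => hcol e.symm
      · exact absurd rfl hpq

lemma gameValAux_singleton (ha : 2 ≤ a) (hab : a ≤ b) (fuel : ℕ) (turn : Bool)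
    (u : Fin a × Fin b) (hf : b ≤ fuel + 1) :
    gameValAux (MG a b) fuel turn ({u} : Finset (Fin a × Fin b)) =
      (if turn then b else a) := by
  have hb2 : 2 ≤ b := le_trans ha hab
  have hb : 1 ≤ b := by omega
  cases fuel with
  | zero => omega
  | succ n =>
    obtain ⟨c', hc'⟩ := exists_ne_col ha u.1
    have hvdiff : ((c', u.2) : Fin a × Fin b) ∈ playable (MG a b) ({u} : Finset (Fin a × Fin b)) :=
      (mem_playable_singleton ha hb).mpr (fun e => hc' (congrArg Prod.fst e))
    haveI : Nontrivial (Fin b) := Fin.nontrivial_iff_two_le.mpr hb2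
    obtain ⟨d, hd⟩ := exists_ne u.2
    have hvsame : ((u.1, d) : Fin a × Fin b) ∈ playable (MG a b) ({u} : Finset (Fin a × Fin b)) :=
      (mem_playable_singleton ha hb).mpr (fun e => hd (congrArg Prod.snd e))
    have hne : (playable (MG a b) ({u} : Finset (Fin a × Fin b))).Nonempty := ⟨_, hvdiff⟩
    have hval : ∀ v ∈ playable (MG a b) ({u} : Finset (Fin a × Fin b)),
        gameValAux (MG a b) n (!turn) (insert v ({u} : Finset (Fin a × Fin b))) =
          (if v.1 = u.1 then b else a) := by
      intro v hv
      have hvu : v ≠ u := (mem_playable_singleton ha hb).mp hv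
      have hvu' : v ∉ ({u} : Finset (Fin a × Fin b)) := by simpa using hvu
      have hcard : (insert v ({u} : Finset (Fin a × Fin b))).card = 2 := by
        rw [Finset.card_insert_of_notMem hvu', Finset.card_singleton]
      by_cases hcol : v.1 = u.1
      · rw [if_pos hcol]
        apply gameValAux_col ha hb
        · intro p hp q hq
          rw [Finset.mem_insert, Finset.mem_singleton] at hp hq
          rcases hp with rfl | rfl <;> rcases hq with rfl | rfl
          · rfl
          · exact hcol
          · exact hcol.symm
          · rfl
        · omega
        · omega
      · rw [if_neg hcol]
        apply gameValAux_transv ha hb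
        · intro p hp q hq hpq
          rw [Finset.mem_insert, Finset.mem_singleton] at hp hq
          rcases hp with rfl | rfl <;> rcases hq with rfl | rfl
          · exact absurd rfl hpq
          · exact hcol
          · exact fun e => hcol e.symm
          · exact absurd rfl hpq
        · omega
        · omega
    simp only [gameValAux, dif_pos hne, insert_classical]
    cases turn
    · rw [if_neg (by simp), if_neg (by simp)]
      apply le_antisymm
      · calc (playable (MG a b) ({u} : Finset (Fin a × Fin b))).inf' hne _ ≤ _ :=
              Finset.inf'_le _ hvdiff
          _ = a := by rw [hval _ hvdiff, if_neg hc']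
      · apply Finset.le_inf'
        intro v hv
        rw [hval v hv]
        split <;> omega
    · rw [if_pos rfl, if_pos rfl]
      apply le_antisymm
      · apply Finset.sup'_le
        intro v hv
        rw [hval v hv]
        split <;> omega
      · calc b = gameValAux (MG a b) n (!true) (insert (u.1, d) ({u} : Finset (Fin a × Fin b))) := by
              rw [hval _ hvsame, if_pos rfl]
          _ ≤ _ := Finset.le_sup' (fun x => gameValAux (MG a b) n (!true) (insert x ({u} : Finset (Fin a × Fin b)))) hvsame

lemma mem_playable_empty (ha : 2 ≤ a) (hb : 1 ≤ b) (v : Fin a × Fin b) :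
    v ∈ playable (MG a b) (∅ : Finset (Fin a × Fin b)) := by
  rw [mem_playable]
  refine ⟨by simp, ?_⟩
  rw [isGPSet_iff ha hb]
  left
  intro p hp q hq
  simp only [Finset.coe_insert, Finset.coe_empty, Set.mem_insert_iff,
    Set.mem_empty_iff_false, or_false] at hp hq
  rw [hp, hq]

lemma gpg_gpg' (ha : 2 ≤ a) (hab : a ≤ b) : gpg (MG a b) = a ∧ gpg' (MG a b) = b := by
  have hb2 : 2 ≤ b := le_trans ha hab
  have hb : 1 ≤ b := by omega
  have hcard : Fintype.card (Fin a × Fin b) = a * b := by simp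
  have h4 : 4 ≤ a * b := le_trans (by norm_num) (Nat.mul_le_mul ha hb2)
  have hble : b ≤ a * b := Nat.le_mul_of_pos_left b (by omega)
  obtain ⟨n, hn⟩ : ∃ n, a * b = n + 1 := ⟨a * b - 1, by omega⟩
  have hne : (playable (MG a b) (∅ : Finset (Fin a × Fin b))).Nonempty :=
    ⟨((⟨0, by omega⟩ : Fin a), (⟨0, by omega⟩ : Fin b)), mem_playable_empty ha hb _⟩
  have hsingle : ∀ v : Fin a × Fin b, (insert v (∅ : Finset (Fin a × Fin b))) = {v} := by
    intro v; simp
  constructor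
  · rw [gpg, gameVal, Finset.card_empty, Nat.sub_zero, hcard, hn]
    simp only [gameValAux, dif_pos hne, if_pos rfl, insert_classical]
    apply sup'_eq_const hne
    intro v _
    rw [hsingle v, gameValAux_singleton ha hab n (!true) v (by omega)]
    simp
  · rw [gpg', gameVal, Finset.card_empty, Nat.sub_zero, hcard, hn]
    simp only [gameValAux, dif_pos hne, insert_classical]
    rw [if_neg (by simp)]
    apply inf'_eq_const hne
    intro v _
    rw [hsingle v, gameValAux_singleton ha hab n (!false) v (by omega)]
    simp

end StmtAux

/-- For any `2 ≤ a ≤ b` there is a connected graph `G` with `gpg(G) = a` and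
`gpg'(G) = b`. -/
theorem stmt_13 (a b : ℕ) (ha : 2 ≤ a) (hab : a ≤ b) :
    ∃ (V : Type) (_ : Fintype V) (G : SimpleGraph V),
      G.Connected ∧ gpg G = a ∧ gpg' G = b := by
  have hb : 1 ≤ b := by omega
  exact ⟨Fin a × Fin b, inferInstance, StmtAux.MG a b, StmtAux.mg_connected ha hb,
    (StmtAux.gpg_gpg' ha hab).1, (StmtAux.gpg_gpg' ha hab).2⟩
end

section
/- Let r and s be integers with r > s ≥ 3 and s odd. Then the graph G(r,s) satisfies gpg(G(r,s)) = r + 2 and gpg'(G(r,s)) = s + 2. In particular, the difference gpg(G) − gpg'(G) can be arbitrarily large. -/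
open Finset SimpleGraph

variable {V : Type*}

/-- Base relation for the graph `G(r,s)`: `r` four-cycles `x, x_i, y_i, y` and `s`
triangles `x, w_j, y` glued along the common edge `xy`.  Encoding of vertices:
`x = Sum.inl ()`, `y = Sum.inr (Sum.inl ())`, `x_i` the first `Fin r` summand,
`y_i` the second `Fin r` summand, `w_j` the `Fin s` summand. -/
def GrsRel (r s : ℕ) :
    (Unit ⊕ Unit ⊕ Fin r ⊕ Fin r ⊕ Fin s) → (Unit ⊕ Unit ⊕ Fin r ⊕ Fin r ⊕ Fin s) → Prop
  | Sum.inl _, Sum.inr (Sum.inl _) => True      -- x ~ y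
  | Sum.inl _, Sum.inr (Sum.inr (Sum.inl _)) => True      -- x ~ xᵢ
  | Sum.inr (Sum.inl _), Sum.inr (Sum.inr (Sum.inr (Sum.inl _))) => True      -- y ~ yᵢ
  | Sum.inr (Sum.inr (Sum.inl i)), Sum.inr (Sum.inr (Sum.inr (Sum.inl i'))) => i = i'  -- xᵢ ~ yᵢ
  | Sum.inl _, Sum.inr (Sum.inr (Sum.inr (Sum.inr _))) => True      -- x ~ wⱼ
  | Sum.inr (Sum.inl _), Sum.inr (Sum.inr (Sum.inr (Sum.inr _))) => True      -- y ~ wⱼ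
  | _, _ => False

/-- The graph `G(r,s)` obtained by gluing `r` copies of `C₄` and `s` triangles
along a common edge `xy`. -/
def Grs (r s : ℕ) : SimpleGraph (Unit ⊕ Unit ⊕ Fin r ⊕ Fin r ⊕ Fin s) :=
  SimpleGraph.fromRel (GrsRel r s)
namespace GrsProof

abbrev GV (r s : ℕ) : Type := Unit ⊕ Unit ⊕ Fin r ⊕ Fin r ⊕ Fin s

variable {r s : ℕ}

def vx : GV r s := Sum.inl ()
def vy : GV r s := Sum.inr (Sum.inl ())
def ex (i : Fin r) : GV r s := Sum.inr (Sum.inr (Sum.inl i))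
def ey (i : Fin r) : GV r s := Sum.inr (Sum.inr (Sum.inr (Sum.inl i)))
def ew (j : Fin s) : GV r s := Sum.inr (Sum.inr (Sum.inr (Sum.inr j)))

/-- neighbors of x -/
lemma nbr_vx {u : GV r s} : (Grs r s).Adj vx u ↔ (u = vy ∨ (∃ i, u = ex i) ∨ ∃ j, u = ew j) := by
  rcases u with u | u | i | i | j <;>
    simp [Grs, SimpleGraph.fromRel_adj, GrsRel, vx, vy, ex, ey, ew]

lemma nbr_vy {u : GV r s} : (Grs r s).Adj vy u ↔ (u = vx ∨ (∃ i, u = ey i) ∨ ∃ j, u = ew j) := by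
  rcases u with u | u | i | i | j <;>
    simp [Grs, SimpleGraph.fromRel_adj, GrsRel, vx, vy, ex, ey, ew]

lemma nbr_ex {i : Fin r} {u : GV r s} : (Grs r s).Adj (ex i) u ↔ (u = vx ∨ u = ey i) := by
  rcases u with u | u | i' | i' | j <;>
    simp [Grs, SimpleGraph.fromRel_adj, GrsRel, vx, vy, ex, ey, ew, eq_comm]

lemma nbr_ey {i : Fin r} {u : GV r s} : (Grs r s).Adj (ey i) u ↔ (u = vy ∨ u = ex i) := by
  rcases u with u | u | i' | i' | j <;>
    simp [Grs, SimpleGraph.fromRel_adj, GrsRel, vx, vy, ex, ey, ew, eq_comm]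

lemma nbr_ew {j : Fin s} {u : GV r s} : (Grs r s).Adj (ew j) u ↔ (u = vx ∨ u = vy) := by
  rcases u with u | u | i' | i' | j' <;>
    simp [Grs, SimpleGraph.fromRel_adj, GrsRel, vx, vy, ex, ey, ew]

lemma adj_xy : (Grs r s).Adj vx vy := nbr_vx.2 (Or.inl rfl)
lemma adj_xxi (i : Fin r) : (Grs r s).Adj vx (ex i) := nbr_vx.2 (Or.inr (Or.inl ⟨i, rfl⟩))
lemma adj_xw (j : Fin s) : (Grs r s).Adj vx (ew j) := nbr_vx.2 (Or.inr (Or.inr ⟨j, rfl⟩))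
lemma adj_yyi (i : Fin r) : (Grs r s).Adj vy (ey i) := nbr_vy.2 (Or.inr (Or.inl ⟨i, rfl⟩))
lemma adj_yw (j : Fin s) : (Grs r s).Adj vy (ew j) := nbr_vy.2 (Or.inr (Or.inr ⟨j, rfl⟩))
lemma adj_xiyi (i : Fin r) : (Grs r s).Adj (ex i) (ey i) := nbr_ex.2 (Or.inr rfl)

end GrsProof
namespace GrsProof
open SimpleGraph Walk

variable {r s : ℕ}

section Generic
variable {V : Type*}

lemma dist_eq_two' {G : SimpleGraph V} {u a v : V} (h1 : G.Adj u a) (h2 : G.Adj a v)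
    (hne : u ≠ v) (hna : ¬ G.Adj u v) : G.dist u v = 2 := by
  have hle := SimpleGraph.dist_le (Walk.cons h1 (Walk.cons h2 Walk.nil))
  simp only [Walk.length_cons, Walk.length_nil] at hle
  have hr : G.Reachable u v := ⟨Walk.cons h1 (Walk.cons h2 Walk.nil)⟩
  have h0 : G.dist u v ≠ 0 := fun h => hne (hr.dist_eq_zero_iff.mp h)
  have h1' : G.dist u v ≠ 1 := fun h => hna (SimpleGraph.dist_eq_one_iff_adj.mp h)
  omega

lemma mid_of_walk_two {G : SimpleGraph V} {u v : V} (w : G.Walk u v) (h : w.length = 2) :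
    ∃ m, G.Adj u m ∧ G.Adj m v := by
  cases w with
  | nil => simp at h
  | cons h1 q =>
    cases q with
    | nil => simp at h
    | cons h2 q2 =>
      cases q2 with
      | nil => exact ⟨_, h1, h2⟩
      | cons h3 q3 => simp only [Walk.length_cons] at h; omega

lemma three_le_dist {G : SimpleGraph V} {u v : V} (hne : u ≠ v) (hna : ¬ G.Adj u v)
    (hcom : ∀ m, ¬ (G.Adj u m ∧ G.Adj m v)) (hr : G.Reachable u v) : 3 ≤ G.dist u v := by
  have h0 : G.dist u v ≠ 0 := fun h => hne (hr.dist_eq_zero_iff.mp h)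
  have h1 : G.dist u v ≠ 1 := fun h => hna (SimpleGraph.dist_eq_one_iff_adj.mp h)
  have h2 : G.dist u v ≠ 2 := by
    intro h
    obtain ⟨p, hp⟩ := hr.exists_walk_length_eq_dist
    rw [h] at hp
    obtain ⟨m, hm⟩ := mid_of_walk_two p hp
    exact hcom m hm
  omega

lemma walk_shape_two {G : SimpleGraph V} {u v : V} (p : G.Walk u v) (h : p.length = 2) :
    ∃ a, ∃ (_ : G.Adj u a) (_ : G.Adj a v), p.support = [u, a, v] := by
  cases p with
  | nil => simp at h
  | cons h1 q =>
    cases q with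
    | nil => simp at h
    | cons h2 q2 =>
      cases q2 with
      | nil => exact ⟨_, h1, h2, by simp⟩
      | cons h3 q3 => simp only [Walk.length_cons] at h; omega

lemma walk_shape_three {G : SimpleGraph V} {u v : V} (p : G.Walk u v) (h : p.length = 3) :
    ∃ a b, ∃ (_ : G.Adj u a) (_ : G.Adj a b) (_ : G.Adj b v), p.support = [u, a, b, v] := by
  cases p with
  | nil => simp at h
  | cons h1 q =>
    cases q with
    | nil => simp at h
    | cons h2 q2 =>
      cases q2 with
      | nil => simp at h
      | cons h3 q3 =>
        cases q3 with
        | nil => exact ⟨_, _, h1, h2, h3, by simp⟩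
        | cons h4 q4 => simp only [Walk.length_cons] at h; omega

lemma isPath_two {G : SimpleGraph V} {u a v : V} (h1 : G.Adj u a) (h2 : G.Adj a v)
    (huv : u ≠ v) : (Walk.cons h1 (Walk.cons h2 Walk.nil)).IsPath := by
  rw [Walk.isPath_def]
  simp [h1.ne, h2.ne, huv]

lemma isPath_three {G : SimpleGraph V} {u a b v : V} (h1 : G.Adj u a) (h2 : G.Adj a b)
    (h3 : G.Adj b v) (hub : u ≠ b) (huv : u ≠ v) (hav : a ≠ v) :
    (Walk.cons h1 (Walk.cons h2 (Walk.cons h3 Walk.nil))).IsPath := by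
  rw [Walk.isPath_def]
  simp [h1.ne, h2.ne, h3.ne, hub, huv, hav]

lemma ncard_inter_list_le (S : Set V) (l : List V) :
    (S ∩ {x | x ∈ l}).ncard ≤ l.length := by
  classical
  have h2 : {x : V | x ∈ l} = ↑l.toFinset := by ext x; simp
  calc (S ∩ {x | x ∈ l}).ncard ≤ ({x : V | x ∈ l}).ncard :=
        Set.ncard_le_ncard Set.inter_subset_right (by rw [h2]; exact l.toFinset.finite_toSet)
    _ = l.toFinset.card := by rw [h2, Set.ncard_coe_finset]
    _ ≤ l.length := List.toFinset_card_le l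

lemma not_ncard_le_two [Finite V] {S T : Set V} {a b c : V} (hab : a ≠ b) (hac : a ≠ c)
    (hbc : b ≠ c) (haS : a ∈ S) (hbS : b ∈ S) (hcS : c ∈ S)
    (haT : a ∈ T) (hbT : b ∈ T) (hcT : c ∈ T) : ¬ (S ∩ T).ncard ≤ 2 := by
  intro hle
  have hsub : ({a, b, c} : Set V) ⊆ S ∩ T := by
    intro x hx
    rcases hx with rfl | rfl | rfl
    · exact ⟨haS, haT⟩
    · exact ⟨hbS, hbT⟩
    · exact ⟨hcS, hcT⟩
  have h3 : ({a, b, c} : Set V).ncard = 3 := Set.ncard_eq_three.mpr ⟨a, b, c, hab, hac, hbc, rfl⟩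
  have := Set.ncard_le_ncard hsub (S ∩ T).toFinite
  omega

lemma ncard_le_two_of_subset_pair {T : Set V} {a b : V} (h : T ⊆ {a, b}) : T.ncard ≤ 2 := by
  have h1 := Set.ncard_le_ncard h (Set.toFinite {a, b})
  have h2 := Set.ncard_insert_le a ({b} : Set V)
  have h3 : ({b} : Set V).ncard = 1 := Set.ncard_singleton b
  omega

lemma ncard_triple_le {S : Set V} {a b c : V} (h : ¬(a ∈ S ∧ b ∈ S ∧ c ∈ S)) :
    (S ∩ {x | x ∈ [a, b, c]}).ncard ≤ 2 := by
  by_cases ha : a ∈ S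
  · by_cases hb : b ∈ S
    · refine ncard_le_two_of_subset_pair (a := a) (b := b) ?_
      rintro x ⟨hxS, hxl⟩
      simp only [List.mem_cons, List.mem_singleton, List.not_mem_nil, or_false] at hxl
      rcases hxl with rfl | rfl | rfl
      · exact Or.inl rfl
      · exact Or.inr rfl
      · exact absurd ⟨ha, hb, hxS⟩ h
    · refine ncard_le_two_of_subset_pair (a := a) (b := c) ?_
      rintro x ⟨hxS, hxl⟩
      simp only [List.mem_cons, List.mem_singleton, List.not_mem_nil, or_false] at hxl
      rcases hxl with rfl | rfl | rfl
      · exact Or.inl rfl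
      · exact absurd hxS hb
      · exact Or.inr rfl
  · refine ncard_le_two_of_subset_pair (a := b) (b := c) ?_
    rintro x ⟨hxS, hxl⟩
    simp only [List.mem_cons, List.mem_singleton, List.not_mem_nil, or_false] at hxl
    rcases hxl with rfl | rfl | rfl
    · exact absurd hxS ha
    · exact Or.inl rfl
    · exact Or.inr rfl

set_option maxHeartbeats 1000000 in
lemma ncard_quad_le {S : Set V} {a b c d : V}
    (h1 : ¬(a ∈ S ∧ b ∈ S ∧ c ∈ S)) (h2 : ¬(a ∈ S ∧ b ∈ S ∧ d ∈ S))
    (h3 : ¬(a ∈ S ∧ c ∈ S ∧ d ∈ S)) (h4 : ¬(b ∈ S ∧ c ∈ S ∧ d ∈ S)) :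
    (S ∩ {x | x ∈ [a, b, c, d]}).ncard ≤ 2 := by
  have key : ∀ p q : V, (∀ x, x ∈ S → (x = a ∨ x = b ∨ x = c ∨ x = d) → x = p ∨ x = q) →
      (S ∩ {x | x ∈ [a, b, c, d]}).ncard ≤ 2 := by
    intro p q hx
    refine ncard_le_two_of_subset_pair (a := p) (b := q) ?_
    rintro x ⟨hxS, hxl⟩
    simp only [List.mem_cons, List.mem_singleton, List.not_mem_nil, or_false] at hxl
    rcases hx x hxS hxl with rfl | rfl
    · exact Or.inl rfl
    · exact Or.inr rfl
  have K : ∀ p q : V, (∀ x, x ∈ S → (x = a ∨ x = b ∨ x = c ∨ x = d) → x = p ∨ x = q) →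
      (S ∩ {x | x ∈ [a, b, c, d]}).ncard ≤ 2 := key
  by_cases ha : a ∈ S <;> by_cases hb : b ∈ S <;> by_cases hc : c ∈ S <;> by_cases hd : d ∈ S
  · exact absurd (And.intro ha (And.intro hb hc)) h1
  · exact absurd (And.intro ha (And.intro hb hc)) h1
  · exact absurd (And.intro ha (And.intro hb hd)) h2
  · refine K a b ?_; rintro x hxS (rfl | rfl | rfl | rfl) <;> tauto
  · exact absurd (And.intro ha (And.intro hc hd)) h3
  · refine K a c ?_; rintro x hxS (rfl | rfl | rfl | rfl) <;> tauto
  · refine K a d ?_; rintro x hxS (rfl | rfl | rfl | rfl) <;> tauto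
  · refine K a d ?_; rintro x hxS (rfl | rfl | rfl | rfl) <;> tauto
  · exact absurd (And.intro hb (And.intro hc hd)) h4
  · refine K b c ?_; rintro x hxS (rfl | rfl | rfl | rfl) <;> tauto
  · refine K b d ?_; rintro x hxS (rfl | rfl | rfl | rfl) <;> tauto
  · refine K b d ?_; rintro x hxS (rfl | rfl | rfl | rfl) <;> tauto
  · refine K c d ?_; rintro x hxS (rfl | rfl | rfl | rfl) <;> tauto
  · refine K c d ?_; rintro x hxS (rfl | rfl | rfl | rfl) <;> tauto
  · refine K c d ?_; rintro x hxS (rfl | rfl | rfl | rfl) <;> tauto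
  · refine K c d ?_; rintro x hxS (rfl | rfl | rfl | rfl) <;> tauto

end Generic

/-- Distances in `Grs`. -/
lemma ne_of_fin_ne {i i' : Fin r} (h : i ≠ i') : (ex i : GV r s) ≠ ex i' := by
  simpa [ex] using h

lemma ney_of_fin_ne {i i' : Fin r} (h : i ≠ i') : (ey i : GV r s) ≠ ey i' := by
  simpa [ey] using h

lemma new_of_fin_ne {j j' : Fin s} (h : j ≠ j') : (ew j : GV r s) ≠ ew j' := by
  simpa [ew] using h

lemma not_adj_exex {i i' : Fin r} : ¬ (Grs r s).Adj (ex i) (ex i') := by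
  intro hadj; rcases nbr_ex.mp hadj with h' | h' <;> simp [ex, vx, ey] at h'

lemma not_adj_eyey {i i' : Fin r} : ¬ (Grs r s).Adj (ey i) (ey i') := by
  intro hadj; rcases nbr_ey.mp hadj with h' | h' <;> simp [ey, vy, ex] at h'

lemma not_adj_ewew {j j' : Fin s} : ¬ (Grs r s).Adj (ew j) (ew j') := by
  intro hadj; rcases nbr_ew.mp hadj with h' | h' <;> simp [ew, vx, vy] at h'

lemma not_adj_exew {i : Fin r} {j : Fin s} : ¬ (Grs r s).Adj (ex i) (ew j) := by
  intro hadj; rcases nbr_ex.mp hadj with h' | h' <;> simp [ew, vx, ey] at h'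

lemma not_adj_eyew {i : Fin r} {j : Fin s} : ¬ (Grs r s).Adj (ey i) (ew j) := by
  intro hadj; rcases nbr_ey.mp hadj with h' | h' <;> simp [ew, vy, ex] at h'

lemma not_adj_vxey {i : Fin r} : ¬ (Grs r s).Adj vx (ey i) := by
  intro hadj; rcases nbr_vx.mp hadj with h' | ⟨i2, h'⟩ | ⟨j2, h'⟩ <;> simp [ey, vy, ex, ew] at h'

lemma not_adj_vyex {i : Fin r} : ¬ (Grs r s).Adj vy (ex i) := by
  intro hadj; rcases nbr_vy.mp hadj with h' | ⟨i2, h'⟩ | ⟨j2, h'⟩ <;> simp [ex, vx, ey, ew] at h'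

lemma not_adj_exey {i i' : Fin r} (h : i ≠ i') : ¬ (Grs r s).Adj (ex i) (ey i') := by
  intro hadj; rcases nbr_ex.mp hadj with h' | h'
  · simp [ey, vx] at h'
  · rw [(by simpa [ey] using h' : i' = i)] at h; exact h rfl

lemma dist_exex {i i' : Fin r} (h : i ≠ i') : (Grs r s).dist (ex i) (ex i') = 2 :=
  dist_eq_two' (adj_xxi i).symm (adj_xxi i') (ne_of_fin_ne h) not_adj_exex

lemma dist_eyey {i i' : Fin r} (h : i ≠ i') : (Grs r s).dist (ey i) (ey i') = 2 :=
  dist_eq_two' (adj_yyi i).symm (adj_yyi i') (ney_of_fin_ne h) not_adj_eyey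

lemma dist_ewew {j j' : Fin s} (h : j ≠ j') : (Grs r s).dist (ew j) (ew j') = 2 :=
  dist_eq_two' (adj_xw j).symm (adj_xw j') (new_of_fin_ne h) not_adj_ewew

lemma dist_exew {i : Fin r} {j : Fin s} : (Grs r s).dist (ex i) (ew j) = 2 :=
  dist_eq_two' (adj_xxi i).symm (adj_xw j) (by simp [ex, ew]) not_adj_exew

lemma dist_eyew {i : Fin r} {j : Fin s} : (Grs r s).dist (ey i) (ew j) = 2 :=
  dist_eq_two' (adj_yyi i).symm (adj_yw j) (by simp [ey, ew]) not_adj_eyew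

lemma dist_vxey {i : Fin r} : (Grs r s).dist vx (ey i) = 2 :=
  dist_eq_two' adj_xy (adj_yyi i) (by simp [vx, ey]) not_adj_vxey

lemma dist_vyex {i : Fin r} : (Grs r s).dist vy (ex i) = 2 :=
  dist_eq_two' adj_xy.symm (adj_xxi i) (by simp [vy, ex]) not_adj_vyex

lemma dist_exey {i i' : Fin r} (h : i ≠ i') : (Grs r s).dist (ex i) (ey i') = 3 := by
  have hle : (Grs r s).dist (ex i) (ey i') ≤ 3 := by
    have h' := SimpleGraph.dist_le (Walk.cons (adj_xxi i).symm (Walk.cons adj_xy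
      (Walk.cons (adj_yyi i') (Walk.nil (G := Grs r s)))))
    simpa using h'
  have hge : 3 ≤ (Grs r s).dist (ex i) (ey i') := by
    refine three_le_dist (by simp [ex, ey]) (not_adj_exey h) ?_
      ⟨Walk.cons (adj_xxi i).symm (Walk.cons adj_xy
        (Walk.cons (adj_yyi i') (Walk.nil (G := Grs r s))))⟩
    rintro m ⟨hm1, hm2⟩
    rcases nbr_ex.mp hm1 with rfl | rfl
    · exact not_adj_vxey hm2
    · rcases nbr_ey.mp hm2 with h' | h'
      · simp [ey, vy] at h'
      · rw [(by simpa [ey, ex] using h' : i' = i)] at h; exact h rfl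
  omega

end GrsProof
namespace GrsProof
open SimpleGraph Walk

variable {r s : ℕ}

/-- The "bad triple" predicate: `S` contains three vertices lying on a common geodesic. -/
def Bad (r s : ℕ) (S : Set (GV r s)) : Prop :=
  (∃ i i' : Fin r, i ≠ i' ∧ vx ∈ S ∧ ex i ∈ S ∧ ex i' ∈ S) ∨
  (∃ i i' : Fin r, i ≠ i' ∧ vy ∈ S ∧ ey i ∈ S ∧ ey i' ∈ S) ∨
  (∃ j j' : Fin s, j ≠ j' ∧ vx ∈ S ∧ ew j ∈ S ∧ ew j' ∈ S) ∨
  (∃ j j' : Fin s, j ≠ j' ∧ vy ∈ S ∧ ew j ∈ S ∧ ew j' ∈ S) ∨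
  (∃ (i : Fin r) (j : Fin s), vx ∈ S ∧ ex i ∈ S ∧ ew j ∈ S) ∨
  (∃ (i : Fin r) (j : Fin s), vy ∈ S ∧ ey i ∈ S ∧ ew j ∈ S) ∨
  (∃ i : Fin r, vx ∈ S ∧ vy ∈ S ∧ ey i ∈ S) ∨
  (∃ i : Fin r, vx ∈ S ∧ vy ∈ S ∧ ex i ∈ S) ∨
  (∃ i : Fin r, vx ∈ S ∧ ex i ∈ S ∧ ey i ∈ S) ∨
  (∃ i : Fin r, vy ∈ S ∧ ex i ∈ S ∧ ey i ∈ S) ∨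
  (∃ i i' : Fin r, i ≠ i' ∧ vx ∈ S ∧ ex i ∈ S ∧ ey i' ∈ S) ∨
  (∃ i i' : Fin r, i ≠ i' ∧ vy ∈ S ∧ ex i ∈ S ∧ ey i' ∈ S) ∨
  (∃ i i' : Fin r, i ≠ i' ∧ ex i ∈ S ∧ ex i' ∈ S ∧ ey i' ∈ S) ∨
  (∃ i i' : Fin r, i ≠ i' ∧ ex i ∈ S ∧ ey i ∈ S ∧ ey i' ∈ S)

section BadIntro
variable {S : Set (GV r s)}

lemma bad1 {i i' : Fin r} (h : i ≠ i') (h1 : vx ∈ S) (h2 : ex i ∈ S) (h3 : ex i' ∈ S) :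
    Bad r s S := Or.inl ⟨i, i', h, h1, h2, h3⟩
lemma bad2 {i i' : Fin r} (h : i ≠ i') (h1 : vy ∈ S) (h2 : ey i ∈ S) (h3 : ey i' ∈ S) :
    Bad r s S := Or.inr (Or.inl ⟨i, i', h, h1, h2, h3⟩)
lemma bad3 {j j' : Fin s} (h : j ≠ j') (h1 : vx ∈ S) (h2 : ew j ∈ S) (h3 : ew j' ∈ S) :
    Bad r s S := Or.inr (Or.inr (Or.inl ⟨j, j', h, h1, h2, h3⟩))
lemma bad4 {j j' : Fin s} (h : j ≠ j') (h1 : vy ∈ S) (h2 : ew j ∈ S) (h3 : ew j' ∈ S) :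
    Bad r s S := Or.inr (Or.inr (Or.inr (Or.inl ⟨j, j', h, h1, h2, h3⟩)))
lemma bad5 {i : Fin r} {j : Fin s} (h1 : vx ∈ S) (h2 : ex i ∈ S) (h3 : ew j ∈ S) :
    Bad r s S := Or.inr (Or.inr (Or.inr (Or.inr (Or.inl ⟨i, j, h1, h2, h3⟩))))
lemma bad6 {i : Fin r} {j : Fin s} (h1 : vy ∈ S) (h2 : ey i ∈ S) (h3 : ew j ∈ S) :
    Bad r s S := Or.inr (Or.inr (Or.inr (Or.inr (Or.inr (Or.inl ⟨i, j, h1, h2, h3⟩)))))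
lemma bad7 {i : Fin r} (h1 : vx ∈ S) (h2 : vy ∈ S) (h3 : ey i ∈ S) :
    Bad r s S := Or.inr (Or.inr (Or.inr (Or.inr (Or.inr (Or.inr (Or.inl ⟨i, h1, h2, h3⟩))))))
lemma bad8 {i : Fin r} (h1 : vx ∈ S) (h2 : vy ∈ S) (h3 : ex i ∈ S) :
    Bad r s S :=
  Or.inr (Or.inr (Or.inr (Or.inr (Or.inr (Or.inr (Or.inr (Or.inl ⟨i, h1, h2, h3⟩)))))))
lemma bad9 {i : Fin r} (h1 : vx ∈ S) (h2 : ex i ∈ S) (h3 : ey i ∈ S) :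
    Bad r s S :=
  Or.inr (Or.inr (Or.inr (Or.inr (Or.inr (Or.inr (Or.inr (Or.inr (Or.inl ⟨i, h1, h2, h3⟩))))))))
lemma bad10 {i : Fin r} (h1 : vy ∈ S) (h2 : ex i ∈ S) (h3 : ey i ∈ S) :
    Bad r s S :=
  Or.inr (Or.inr (Or.inr (Or.inr (Or.inr (Or.inr (Or.inr (Or.inr (Or.inr
    (Or.inl ⟨i, h1, h2, h3⟩)))))))))
lemma bad11 {i i' : Fin r} (h : i ≠ i') (h1 : vx ∈ S) (h2 : ex i ∈ S) (h3 : ey i' ∈ S) :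
    Bad r s S :=
  Or.inr (Or.inr (Or.inr (Or.inr (Or.inr (Or.inr (Or.inr (Or.inr (Or.inr (Or.inr
    (Or.inl ⟨i, i', h, h1, h2, h3⟩))))))))))
lemma bad12 {i i' : Fin r} (h : i ≠ i') (h1 : vy ∈ S) (h2 : ex i ∈ S) (h3 : ey i' ∈ S) :
    Bad r s S :=
  Or.inr (Or.inr (Or.inr (Or.inr (Or.inr (Or.inr (Or.inr (Or.inr (Or.inr (Or.inr (Or.inr
    (Or.inl ⟨i, i', h, h1, h2, h3⟩)))))))))))
lemma bad13 {i i' : Fin r} (h : i ≠ i') (h1 : ex i ∈ S) (h2 : ex i' ∈ S) (h3 : ey i' ∈ S) :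
    Bad r s S :=
  Or.inr (Or.inr (Or.inr (Or.inr (Or.inr (Or.inr (Or.inr (Or.inr (Or.inr (Or.inr (Or.inr
    (Or.inr (Or.inl ⟨i, i', h, h1, h2, h3⟩))))))))))))
lemma bad14 {i i' : Fin r} (h : i ≠ i') (h1 : ex i ∈ S) (h2 : ey i ∈ S) (h3 : ey i' ∈ S) :
    Bad r s S :=
  Or.inr (Or.inr (Or.inr (Or.inr (Or.inr (Or.inr (Or.inr (Or.inr (Or.inr (Or.inr (Or.inr
    (Or.inr (Or.inr ⟨i, i', h, h1, h2, h3⟩))))))))))))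

end BadIntro

/-- Connectivity. -/
lemma reach_vx (u : GV r s) : (Grs r s).Reachable u vx := by
  rcases u with u | u | i | i | j
  · cases u; exact Reachable.refl _
  · cases u; exact (adj_xy (r := r) (s := s)).symm.reachable
  · exact (adj_xxi i).symm.reachable
  · exact ((adj_yyi i).symm.reachable).trans (adj_xy (r := r) (s := s)).symm.reachable
  · exact (adj_xw j).symm.reachable

lemma grs_connected : (Grs r s).Connected := by
  have h : (Grs r s).Preconnected := fun u v => (reach_vx u).trans (reach_vx v).symm
  have : Nonempty (GV r s) := ⟨vx⟩
  exact ⟨h⟩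

lemma dist_vx_le (u : GV r s) : (Grs r s).dist u vx ≤ 2 := by
  rcases u with u | u | i | i | j
  · cases u
    show (Grs r s).dist vx vx ≤ 2
    have := SimpleGraph.dist_le (Walk.nil (G := Grs r s) (u := vx))
    simp only [Walk.length_nil] at this
    omega
  · cases u
    show (Grs r s).dist vy vx ≤ 2
    have := SimpleGraph.dist_le (Walk.cons (adj_xy (r := r) (s := s)).symm
      (Walk.nil (G := Grs r s)))
    simp only [Walk.length_cons, Walk.length_nil] at this
    omega
  · show (Grs r s).dist (ex i) vx ≤ 2
    have := SimpleGraph.dist_le (Walk.cons (adj_xxi i).symm (Walk.nil (G := Grs r s)))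
    simp only [Walk.length_cons, Walk.length_nil] at this
    omega
  · show (Grs r s).dist (ey i) vx ≤ 2
    have := SimpleGraph.dist_le (Walk.cons (adj_yyi i).symm
      (Walk.cons (adj_xy (r := r) (s := s)).symm (Walk.nil (G := Grs r s))))
    simp only [Walk.length_cons, Walk.length_nil] at this
    omega
  · show (Grs r s).dist (ew j) vx ≤ 2
    have := SimpleGraph.dist_le (Walk.cons (adj_xw j).symm (Walk.nil (G := Grs r s)))
    simp only [Walk.length_cons, Walk.length_nil] at this
    omega

lemma dist_vy_le (u : GV r s) : (Grs r s).dist u vy ≤ 2 := by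
  rcases u with u | u | i | i | j
  · cases u
    show (Grs r s).dist vx vy ≤ 2
    have := SimpleGraph.dist_le (Walk.cons (adj_xy (r := r) (s := s)) (Walk.nil (G := Grs r s)))
    simp only [Walk.length_cons, Walk.length_nil] at this
    omega
  · cases u
    show (Grs r s).dist vy vy ≤ 2
    have := SimpleGraph.dist_le (Walk.nil (G := Grs r s) (u := vy))
    simp only [Walk.length_nil] at this
    omega
  · show (Grs r s).dist (ex i) vy ≤ 2
    have := SimpleGraph.dist_le (Walk.cons (adj_xxi i).symm
      (Walk.cons (adj_xy (r := r) (s := s)) (Walk.nil (G := Grs r s))))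
    simp only [Walk.length_cons, Walk.length_nil] at this
    omega
  · show (Grs r s).dist (ey i) vy ≤ 2
    have := SimpleGraph.dist_le (Walk.cons (adj_yyi i).symm (Walk.nil (G := Grs r s)))
    simp only [Walk.length_cons, Walk.length_nil] at this
    omega
  · show (Grs r s).dist (ew j) vy ≤ 2
    have := SimpleGraph.dist_le (Walk.cons (adj_yw j).symm (Walk.nil (G := Grs r s)))
    simp only [Walk.length_cons, Walk.length_nil] at this
    omega

lemma dist_le_three (u v : GV r s) : (Grs r s).dist u v ≤ 3 := by
  have hc := grs_connected (r := r) (s := s)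
  rcases v with v | v | i | i | j
  · cases v
    show (Grs r s).dist u vx ≤ 3
    have := dist_vx_le (r := r) (s := s) u
    omega
  · cases v
    show (Grs r s).dist u vy ≤ 3
    have h1 := hc.dist_triangle (u := u) (v := vx) (w := vy)
    have h2 := dist_vx_le (r := r) (s := s) u
    have h3 : (Grs r s).dist vx vy ≤ 1 := by
      have := SimpleGraph.dist_le (Walk.cons (adj_xy (r := r) (s := s)) (Walk.nil (G := Grs r s)))
      simpa using this
    omega
  · show (Grs r s).dist u (ex i) ≤ 3
    have h1 := hc.dist_triangle (u := u) (v := vx) (w := ex i)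
    have h2 := dist_vx_le (r := r) (s := s) u
    have h3 : (Grs r s).dist vx (ex i) ≤ 1 := by
      have := SimpleGraph.dist_le (Walk.cons (adj_xxi i) (Walk.nil (G := Grs r s)))
      simpa using this
    omega
  · show (Grs r s).dist u (ey i) ≤ 3
    have h1 := hc.dist_triangle (u := u) (v := vy) (w := ey i)
    have h2 := dist_vy_le (r := r) (s := s) u
    have h3 : (Grs r s).dist vy (ey i) ≤ 1 := by
      have := SimpleGraph.dist_le (Walk.cons (adj_yyi i) (Walk.nil (G := Grs r s)))
      simpa using this
    omega
  · show (Grs r s).dist u (ew j) ≤ 3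
    have h1 := hc.dist_triangle (u := u) (v := vx) (w := ew j)
    have h2 := dist_vx_le (r := r) (s := s) u
    have h3 : (Grs r s).dist vx (ew j) ≤ 1 := by
      have := SimpleGraph.dist_le (Walk.cons (adj_xw j) (Walk.nil (G := Grs r s)))
      simpa using this
    omega

end GrsProof
namespace GrsProof
open SimpleGraph Walk

variable {r s : ℕ}

lemma not_gp_of_triple {S : Set (GV r s)} {u v : GV r s} (p : (Grs r s).Walk u v)
    (hp : p.IsPath) (hl : p.length = (Grs r s).dist u v) {a b c : GV r s}
    (hab : a ≠ b) (hac : a ≠ c) (hbc : b ≠ c)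
    (haS : a ∈ S) (hbS : b ∈ S) (hcS : c ∈ S)
    (haT : a ∈ p.support) (hbT : b ∈ p.support) (hcT : c ∈ p.support) :
    ¬ IsGPSet (Grs r s) S := fun h =>
  not_ncard_le_two hab hac hbc haS hbS hcS (by exact haT) (by exact hbT) (by exact hcT)
    (h p hp hl)

lemma not_gp_of_bad {S : Set (GV r s)} (hb : Bad r s S) : ¬ IsGPSet (Grs r s) S := by
  rcases hb with ⟨i,i',hii,h1,h2,h3⟩|⟨i,i',hii,h1,h2,h3⟩|⟨j,j',hjj,h1,h2,h3⟩|
    ⟨j,j',hjj,h1,h2,h3⟩|⟨i,j,h1,h2,h3⟩|⟨i,j,h1,h2,h3⟩|⟨i,h1,h2,h3⟩|⟨i,h1,h2,h3⟩|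
    ⟨i,h1,h2,h3⟩|⟨i,h1,h2,h3⟩|⟨i,i',hii,h1,h2,h3⟩|⟨i,i',hii,h1,h2,h3⟩|
    ⟨i,i',hii,h1,h2,h3⟩|⟨i,i',hii,h1,h2,h3⟩
  · exact not_gp_of_triple
      (Walk.cons (adj_xxi i).symm (Walk.cons (adj_xxi i') (Walk.nil (G := Grs r s))))
      (isPath_two _ _ (ne_of_fin_ne hii)) (by simp [dist_exex hii])
      (by simp [ex, vx]) (ne_of_fin_ne hii) (by simp [ex, vx])
      h2 h1 h3 (by simp) (by simp) (by simp)
  · exact not_gp_of_triple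
      (Walk.cons (adj_yyi i).symm (Walk.cons (adj_yyi i') (Walk.nil (G := Grs r s))))
      (isPath_two _ _ (ney_of_fin_ne hii)) (by simp [dist_eyey hii])
      (by simp [ey, vy]) (ney_of_fin_ne hii) (by simp [ey, vy])
      h2 h1 h3 (by simp) (by simp) (by simp)
  · exact not_gp_of_triple
      (Walk.cons (adj_xw j).symm (Walk.cons (adj_xw j') (Walk.nil (G := Grs r s))))
      (isPath_two _ _ (new_of_fin_ne hjj)) (by simp [dist_ewew hjj])
      (by simp [ew, vx]) (new_of_fin_ne hjj) (by simp [ew, vx])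
      h2 h1 h3 (by simp) (by simp) (by simp)
  · exact not_gp_of_triple
      (Walk.cons (adj_yw j).symm (Walk.cons (adj_yw j') (Walk.nil (G := Grs r s))))
      (isPath_two _ _ (new_of_fin_ne hjj)) (by simp [dist_ewew hjj])
      (by simp [ew, vy]) (new_of_fin_ne hjj) (by simp [ew, vy])
      h2 h1 h3 (by simp) (by simp) (by simp)
  · exact not_gp_of_triple
      (Walk.cons (adj_xxi i).symm (Walk.cons (adj_xw j) (Walk.nil (G := Grs r s))))
      (isPath_two _ _ (by simp [ex, ew])) (by simp [dist_exew])
      (by simp [ex, vx]) (by simp [ex, ew]) (by simp [vx, ew])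
      h2 h1 h3 (by simp) (by simp) (by simp)
  · exact not_gp_of_triple
      (Walk.cons (adj_yyi i).symm (Walk.cons (adj_yw j) (Walk.nil (G := Grs r s))))
      (isPath_two _ _ (by simp [ey, ew])) (by simp [dist_eyew])
      (by simp [ey, vy]) (by simp [ey, ew]) (by simp [vy, ew])
      h2 h1 h3 (by simp) (by simp) (by simp)
  · exact not_gp_of_triple
      (Walk.cons (adj_xy (r := r) (s := s)) (Walk.cons (adj_yyi i) (Walk.nil (G := Grs r s))))
      (isPath_two _ _ (by simp [vx, ey])) (by simp [dist_vxey])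
      (by simp [vx, vy]) (by simp [vx, ey]) (by simp [vy, ey])
      h1 h2 h3 (by simp) (by simp) (by simp)
  · exact not_gp_of_triple
      (Walk.cons (adj_xy (r := r) (s := s)).symm (Walk.cons (adj_xxi i)
        (Walk.nil (G := Grs r s))))
      (isPath_two _ _ (by simp [vy, ex])) (by simp [dist_vyex])
      (by simp [vx, vy]) (by simp [vy, ex]) (by simp [vx, ex])
      h2 h1 h3 (by simp) (by simp) (by simp)
  · exact not_gp_of_triple
      (Walk.cons (adj_xxi i) (Walk.cons (adj_xiyi i) (Walk.nil (G := Grs r s))))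
      (isPath_two _ _ (by simp [vx, ey])) (by simp [dist_vxey])
      (by simp [vx, ex]) (by simp [vx, ey]) (by simp [ex, ey])
      h1 h2 h3 (by simp) (by simp) (by simp)
  · exact not_gp_of_triple
      (Walk.cons (adj_yyi i) (Walk.cons (adj_xiyi i).symm (Walk.nil (G := Grs r s))))
      (isPath_two _ _ (by simp [vy, ex])) (by simp [dist_vyex])
      (by simp [vy, ey]) (by simp [vy, ex]) (by simp [ey, ex])
      h1 h3 h2 (by simp) (by simp) (by simp)
  · exact not_gp_of_triple
      (Walk.cons (adj_xxi i).symm (Walk.cons (adj_xy (r := r) (s := s))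
        (Walk.cons (adj_yyi i') (Walk.nil (G := Grs r s)))))
      (isPath_three _ _ _ (by simp [ex, vy]) (by simp [ex, ey]) (by simp [vx, ey]))
      (by simp [dist_exey hii])
      (by simp [ex, vx]) (by simp [ex, ey]) (by simp [vx, ey])
      h2 h1 h3 (by simp) (by simp) (by simp)
  · exact not_gp_of_triple
      (Walk.cons (adj_xxi i).symm (Walk.cons (adj_xy (r := r) (s := s))
        (Walk.cons (adj_yyi i') (Walk.nil (G := Grs r s)))))
      (isPath_three _ _ _ (by simp [ex, vy]) (by simp [ex, ey]) (by simp [vx, ey]))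
      (by simp [dist_exey hii])
      (by simp [ex, vy]) (by simp [ex, ey]) (by simp [vy, ey])
      h2 h1 h3 (by simp) (by simp) (by simp)
  · exact not_gp_of_triple
      (Walk.cons (adj_xxi i).symm (Walk.cons (adj_xxi i')
        (Walk.cons (adj_xiyi i') (Walk.nil (G := Grs r s)))))
      (isPath_three _ _ _ (ne_of_fin_ne hii) (by simp [ex, ey]) (by simp [vx, ey]))
      (by simp [dist_exey hii])
      (ne_of_fin_ne hii) (by simp [ex, ey]) (by simp [ex, ey])
      h1 h2 h3 (by simp) (by simp) (by simp)
  · exact not_gp_of_triple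
      (Walk.cons (adj_xiyi i) (Walk.cons (adj_yyi i).symm
        (Walk.cons (adj_yyi i') (Walk.nil (G := Grs r s)))))
      (isPath_three _ _ _ (by simp [ex, vy]) (by simp [ex, ey]) (ney_of_fin_ne hii))
      (by simp [dist_exey hii])
      (by simp [ex, ey]) (by simp [ex, ey]) (ney_of_fin_ne hii)
      h1 h2 h3 (by simp) (by simp) (by simp)

lemma mid_bad {S : Set (GV r s)} {u a v : GV r s} (h1 : (Grs r s).Adj u a)
    (h2 : (Grs r s).Adj a v) (hne : u ≠ v) (hna : ¬ (Grs r s).Adj u v)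
    (huS : u ∈ S) (haS : a ∈ S) (hvS : v ∈ S) : Bad r s S := by
  rcases a with a | a | i | i | j
  · cases a
    have hu := nbr_vx.mp h1.symm
    have hv := nbr_vx.mp h2
    rcases hu with rfl | ⟨i, rfl⟩ | ⟨j, rfl⟩ <;> rcases hv with rfl | ⟨i', rfl⟩ | ⟨j', rfl⟩
    · exact absurd rfl hne
    · exact bad8 haS huS hvS
    · exact absurd (adj_yw j') hna
    · exact bad8 haS hvS huS
    · exact bad1 (by rintro rfl; exact hne rfl) haS huS hvS
    · exact bad5 haS huS hvS
    · exact absurd (adj_yw j).symm hna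
    · exact bad5 haS hvS huS
    · exact bad3 (by rintro rfl; exact hne rfl) haS huS hvS
  · cases a
    have hu := nbr_vy.mp h1.symm
    have hv := nbr_vy.mp h2
    rcases hu with rfl | ⟨i, rfl⟩ | ⟨j, rfl⟩ <;> rcases hv with rfl | ⟨i', rfl⟩ | ⟨j', rfl⟩
    · exact absurd rfl hne
    · exact bad7 huS haS hvS
    · exact absurd (adj_xw j') hna
    · exact bad7 hvS haS huS
    · exact bad2 (by rintro rfl; exact hne rfl) haS huS hvS
    · exact bad6 haS huS hvS
    · exact absurd (adj_xw j).symm hna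
    · exact bad6 haS hvS huS
    · exact bad4 (by rintro rfl; exact hne rfl) haS huS hvS
  · have hu := nbr_ex.mp h1.symm
    have hv := nbr_ex.mp h2
    rcases hu with rfl | rfl <;> rcases hv with rfl | rfl
    · exact absurd rfl hne
    · exact bad9 huS haS hvS
    · exact bad9 hvS haS huS
    · exact absurd rfl hne
  · have hu := nbr_ey.mp h1.symm
    have hv := nbr_ey.mp h2
    rcases hu with rfl | rfl <;> rcases hv with rfl | rfl
    · exact absurd rfl hne
    · exact bad10 huS hvS haS
    · exact bad10 hvS huS haS
    · exact absurd rfl hne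
  · have hu := nbr_ew.mp h1.symm
    have hv := nbr_ew.mp h2
    rcases hu with rfl | rfl <;> rcases hv with rfl | rfl
    · exact absurd rfl hne
    · exact absurd (adj_xy (r := r) (s := s)) hna
    · exact absurd (adj_xy (r := r) (s := s)).symm hna
    · exact absurd rfl hne

lemma gp_of_not_bad {S : Set (GV r s)} (hnb : ¬ Bad r s S) : IsGPSet (Grs r s) S := by
  intro u v p hp hl
  have hd3 : (Grs r s).dist u v ≤ 3 := dist_le_three u v
  have hlen3 : p.length ≤ 3 := le_trans (le_of_eq hl) hd3
  by_cases hle1 : p.length ≤ 1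
  · have hsl := p.length_support
    have h2' : p.support.length ≤ 2 := by omega
    exact le_trans (by exact ncard_inter_list_le S p.support) h2'
  by_cases hl2 : p.length = 2
  · obtain ⟨a, h1, h2, hsup⟩ := walk_shape_two p hl2
    have hd : (Grs r s).dist u v = 2 := by rw [← hl]; exact hl2
    have hne : u ≠ v := by
      rintro rfl
      rw [SimpleGraph.dist_self] at hd
      omega
    have hna : ¬ (Grs r s).Adj u v := fun hadj => by
      have := SimpleGraph.dist_eq_one_iff_adj.mpr hadj
      omega
    rw [hsup]
    exact ncard_triple_le (fun ⟨hu', ha', hv'⟩ => hnb (mid_bad h1 h2 hne hna hu' ha' hv'))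
  · have hl3 : p.length = 3 := by omega
    obtain ⟨a, b, h1, h2, h3, hsup⟩ := walk_shape_three p hl3
    have hd : (Grs r s).dist u v = 3 := by rw [← hl]; exact hl3
    have hne : u ≠ v := by
      rintro rfl
      rw [SimpleGraph.dist_self] at hd
      omega
    have hna : ¬ (Grs r s).Adj u v := fun hadj => by
      have := SimpleGraph.dist_eq_one_iff_adj.mpr hadj
      omega
    have hcom : ∀ m, ¬ ((Grs r s).Adj u m ∧ (Grs r s).Adj m v) := by
      rintro m ⟨hm1, hm2⟩
      have := SimpleGraph.dist_le (Walk.cons hm1 (Walk.cons hm2 Walk.nil))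
      simp only [Walk.length_cons, Walk.length_nil] at this
      omega
    rw [hsup]
    rcases u with w | w | i | i | j
    · exfalso
      cases w
      rcases v with w' | w' | k | k | j'
      · cases w'; exact hne rfl
      · cases w'; exact hna (adj_xy (r := r) (s := s))
      · exact hna (adj_xxi k)
      · exact hcom vy ⟨adj_xy (r := r) (s := s), adj_yyi k⟩
      · exact hna (adj_xw j')
    · exfalso
      cases w
      rcases v with w' | w' | k | k | j'
      · cases w'; exact hna (adj_xy (r := r) (s := s)).symm
      · cases w'; exact hne rfl
      · exact hcom vx ⟨(adj_xy (r := r) (s := s)).symm, adj_xxi k⟩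
      · exact hna (adj_yyi k)
      · exact hna (adj_yw j')
    · -- u = ex i
      rcases v with w' | w' | k | k | j'
      · exfalso; cases w'; exact hna (adj_xxi i).symm
      · exfalso; cases w'; exact hcom vx ⟨(adj_xxi i).symm, adj_xy (r := r) (s := s)⟩
      · exact absurd ⟨(adj_xxi i).symm, adj_xxi k⟩ (hcom vx)
      · -- v = ey k : the real case
        have hik : i ≠ k := by rintro rfl; exact hna (adj_xiyi i)
        rcases nbr_ex.mp h1 with rfl | rfl
        · rcases nbr_vx.mp h2 with rfl | ⟨i2, rfl⟩ | ⟨j2, rfl⟩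
          · refine ncard_quad_le ?_ ?_ ?_ ?_
            · rintro ⟨q1, q2, q3⟩; exact hnb (bad8 q2 q3 q1)
            · rintro ⟨q1, q2, q3⟩; exact hnb (bad11 hik q2 q1 q3)
            · rintro ⟨q1, q2, q3⟩; exact hnb (bad12 hik q2 q1 q3)
            · rintro ⟨q1, q2, q3⟩; exact hnb (bad7 q1 q2 q3)
          · have hkey : i2 = k := by
              rcases nbr_ex.mp h3 with h' | h'
              · exact absurd h' (by simp [ey, vx])
              · have h'' : k = i2 := by simpa [ey] using h'
                exact h''.symm
            subst hkey
            refine ncard_quad_le ?_ ?_ ?_ ?_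
            · rintro ⟨q1, q2, q3⟩; exact hnb (bad1 hik q2 q1 q3)
            · rintro ⟨q1, q2, q3⟩; exact hnb (bad11 hik q2 q1 q3)
            · rintro ⟨q1, q2, q3⟩; exact hnb (bad13 hik q1 q2 q3)
            · rintro ⟨q1, q2, q3⟩; exact hnb (bad9 q1 q2 q3)
          · exfalso
            rcases nbr_ew.mp h3 with h' | h' <;> simp [ey, vx, vy] at h'
        · rcases nbr_ey.mp h2 with rfl | rfl
          · refine ncard_quad_le ?_ ?_ ?_ ?_
            · rintro ⟨q1, q2, q3⟩; exact hnb (bad10 q3 q1 q2)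
            · rintro ⟨q1, q2, q3⟩; exact hnb (bad14 hik q1 q2 q3)
            · rintro ⟨q1, q2, q3⟩; exact hnb (bad12 hik q2 q1 q3)
            · rintro ⟨q1, q2, q3⟩; exact hnb (bad2 hik q2 q1 q3)
          · exfalso
            rcases nbr_ex.mp h3 with h' | h'
            · simp [ey, vx] at h'
            · have h'' : k = i := by simpa [ey] using h'
              exact hik h''.symm
      · exact absurd ⟨(adj_xxi i).symm, adj_xw j'⟩ (hcom vx)
    · -- u = ey i
      rcases v with w' | w' | k | k | j'
      · exfalso; cases w'; exact hcom vy ⟨(adj_yyi i).symm, (adj_xy (r := r) (s := s)).symm⟩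
      · exfalso; cases w'; exact hna (adj_yyi i).symm
      · -- v = ex k
        have hki : k ≠ i := by rintro rfl; exact hna (adj_xiyi k).symm
        rcases nbr_ey.mp h1 with rfl | rfl
        · rcases nbr_vy.mp h2 with rfl | ⟨i2, rfl⟩ | ⟨j2, rfl⟩
          · refine ncard_quad_le ?_ ?_ ?_ ?_
            · rintro ⟨q1, q2, q3⟩; exact hnb (bad7 q3 q2 q1)
            · rintro ⟨q1, q2, q3⟩; exact hnb (bad12 hki q2 q3 q1)
            · rintro ⟨q1, q2, q3⟩; exact hnb (bad11 hki q2 q3 q1)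
            · rintro ⟨q1, q2, q3⟩; exact hnb (bad8 q2 q1 q3)
          · have hkey : i2 = k := by
              rcases nbr_ey.mp h3 with h' | h'
              · exact absurd h' (by simp [ex, vy])
              · have h'' : k = i2 := by simpa [ex] using h'
                exact h''.symm
            subst hkey
            refine ncard_quad_le ?_ ?_ ?_ ?_
            · rintro ⟨q1, q2, q3⟩; exact hnb (bad2 hki.symm q2 q1 q3)
            · rintro ⟨q1, q2, q3⟩; exact hnb (bad12 hki q2 q3 q1)
            · rintro ⟨q1, q2, q3⟩; exact hnb (bad14 hki q3 q2 q1)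
            · rintro ⟨q1, q2, q3⟩; exact hnb (bad10 q1 q3 q2)
          · exfalso
            rcases nbr_ew.mp h3 with h' | h' <;> simp [ex, vx, vy] at h'
        · rcases nbr_ex.mp h2 with rfl | rfl
          · refine ncard_quad_le ?_ ?_ ?_ ?_
            · rintro ⟨q1, q2, q3⟩; exact hnb (bad9 q3 q2 q1)
            · rintro ⟨q1, q2, q3⟩; exact hnb (bad13 hki q3 q2 q1)
            · rintro ⟨q1, q2, q3⟩; exact hnb (bad11 hki q2 q3 q1)
            · rintro ⟨q1, q2, q3⟩; exact hnb (bad1 hki.symm q2 q1 q3)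
          · exfalso
            rcases nbr_ey.mp h3 with h' | h'
            · simp [ex, vy] at h'
            · have h'' : k = i := by simpa [ex] using h'
              exact hki h''
      · exact absurd ⟨(adj_yyi i).symm, adj_yyi k⟩ (hcom vy)
      · exact absurd ⟨(adj_yyi i).symm, adj_yw j'⟩ (hcom vy)
    · exfalso
      rcases v with w' | w' | k | k | j'
      · cases w'; exact hna (adj_xw j).symm
      · cases w'; exact hna (adj_yw j).symm
      · exact hcom vx ⟨(adj_xw j).symm, adj_xxi k⟩
      · exact hcom vy ⟨(adj_yw j).symm, adj_yyi k⟩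
      · exact hcom vx ⟨(adj_xw j).symm, adj_xw j'⟩

lemma gp_iff (S : Set (GV r s)) : IsGPSet (Grs r s) S ↔ ¬ Bad r s S :=
  ⟨fun hgp hbad => not_gp_of_bad hbad hgp, gp_of_not_bad⟩

end GrsProof
namespace GrsProof
open Finset SimpleGraph

section Game
variable {V : Type*} [Fintype V] {G : SimpleGraph V}

/-- `insert` with the classical decidability instance, as used inside `gameValAux`. -/
noncomputable def cins {V : Type*} (v : V) (S : Finset V) : Finset V :=
  @insert _ _ (@Finset.instInsert _ (fun a b => Classical.propDecidable (a = b))) v S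

lemma mem_cins {x v : V} {S : Finset V} : x ∈ cins v S ↔ x = v ∨ x ∈ S := by
  unfold cins
  exact @Finset.mem_insert V (fun a b => Classical.propDecidable (a = b)) _ _ _

lemma coe_cins (v : V) (S : Finset V) : (↑(cins v S) : Set V) = insert v (↑S : Set V) := by
  ext x
  simp [mem_cins]

lemma card_cins {v : V} {S : Finset V} (hv : v ∉ S) : (cins v S).card = S.card + 1 := by
  classical
  have : cins v S = insert v S := by ext x; simp [mem_cins]
  rw [this]
  exact Finset.card_insert_of_notMem hv

lemma subset_cins (v : V) (S : Finset V) : S ⊆ cins v S := fun x hx => mem_cins.mpr (Or.inr hx)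

lemma mem_cins_self (v : V) (S : Finset V) : v ∈ cins v S := mem_cins.mpr (Or.inl rfl)

lemma mem_playable {S : Finset V} {v : V} :
    v ∈ playable G S ↔ v ∉ S ∧ IsGPSet G (↑(cins v S) : Set V) := by
  simp only [playable, cins, Finset.mem_filter, Finset.mem_univ, true_and]

lemma gameValAux_succ (f : ℕ) (t : Bool) (S : Finset V) :
    gameValAux G (f + 1) t S =
      if h : (playable G S).Nonempty then
        if t then (playable G S).sup' h (fun v => gameValAux G f (!t) (cins v S))
        else (playable G S).inf' h (fun v => gameValAux G f (!t) (cins v S))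
      else S.card := rfl

/-- A maximal general position set. -/
def MaxGP (G : SimpleGraph V) (M : Finset V) : Prop :=
  IsGPSet G (↑M : Set V) ∧ ∀ v, v ∉ M → ¬ IsGPSet G (↑(cins v M) : Set V)

lemma gameValAux_of_empty {S : Finset V} (h : ¬ (playable G S).Nonempty) (f : ℕ) (t : Bool) :
    gameValAux G f t S = S.card := by
  cases f with
  | zero => rfl
  | succ f => rw [gameValAux_succ, dif_neg h]

lemma maxGP_of_no_playable {S : Finset V} (hgp : IsGPSet G (↑S : Set V))
    (h : ¬ (playable G S).Nonempty) : MaxGP G S := by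
  refine ⟨hgp, fun v hv hgp' => ?_⟩
  exact h ⟨v, mem_playable.mpr ⟨hv, hgp'⟩⟩

lemma builder_step {c f : ℕ} {S : Finset V} {v : V} (hv : v ∈ playable G S)
    (hval : c ≤ gameValAux G f false (cins v S)) : c ≤ gameValAux G (f + 1) true S := by
  rw [gameValAux_succ, dif_pos ⟨v, hv⟩, if_pos rfl]
  exact le_trans hval (Finset.le_sup' (fun v => gameValAux G f (!true) (cins v S)) hv)

lemma blocker_step_all {c f : ℕ} {S : Finset V} (hne : (playable G S).Nonempty)
    (hall : ∀ v ∈ playable G S, c ≤ gameValAux G f true (cins v S)) :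
    c ≤ gameValAux G (f + 1) false S := by
  rw [gameValAux_succ, dif_pos hne, if_neg (by simp)]
  exact Finset.le_inf' hne _ hall

lemma blocker_step_ub {c f : ℕ} {S : Finset V} {v : V} (hv : v ∈ playable G S)
    (hval : gameValAux G f true (cins v S) ≤ c) : gameValAux G (f + 1) false S ≤ c := by
  rw [gameValAux_succ, dif_pos ⟨v, hv⟩, if_neg (by simp)]
  exact le_trans (Finset.inf'_le (fun v => gameValAux G f (!false) (cins v S)) hv) hval

lemma builder_step_all_ub {c f : ℕ} {S : Finset V} (hcard : S.card ≤ c)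
    (hall : ∀ v ∈ playable G S, gameValAux G f false (cins v S) ≤ c) :
    gameValAux G (f + 1) true S ≤ c := by
  by_cases hne : (playable G S).Nonempty
  · rw [gameValAux_succ, dif_pos hne, if_pos rfl]
    exact Finset.sup'_le hne _ hall
  · rw [gameValAux_succ, dif_neg hne]
    exact hcard

lemma val_ge_of_min {c : ℕ} : ∀ (f : ℕ) (t : Bool) (S : Finset V),
    Fintype.card V ≤ S.card + f → IsGPSet G (↑S : Set V) →
    (∀ M : Finset V, MaxGP G M → S ⊆ M → c ≤ M.card) →
    c ≤ gameValAux G f t S := by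
  intro f
  induction f with
  | zero =>
    intro t S hf hgp hM
    have hS : S = Finset.univ := by
      apply Finset.eq_univ_of_card
      have := Finset.card_le_univ S
      omega
    have hmax : MaxGP G S := ⟨hgp, fun v hv => absurd (hS ▸ Finset.mem_univ v) hv⟩
    exact hM S hmax (Finset.Subset.refl S)
  | succ f ih =>
    intro t S hf hgp hM
    by_cases hne : (playable G S).Nonempty
    · have hstep : ∀ v ∈ playable G S, c ≤ gameValAux G f (!t) (cins v S) := by
        intro v hv
        refine ih (!t) (cins v S) ?_ (mem_playable.mp hv).2 ?_
        · rw [card_cins (mem_playable.mp hv).1]; omega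
        · intro M hMax hsub
          exact hM M hMax (le_trans (subset_cins v S) hsub)
      rw [gameValAux_succ, dif_pos hne]
      cases t with
      | true =>
        obtain ⟨v, hv⟩ := hne
        rw [if_pos rfl]
        exact le_trans (hstep v hv)
          (Finset.le_sup' (fun v => gameValAux G f (!true) (cins v S)) hv)
      | false =>
        rw [if_neg (by simp)]
        exact Finset.le_inf' hne _ hstep
    · rw [gameValAux_succ, dif_neg hne]
      exact hM S (maxGP_of_no_playable hgp hne) (Finset.Subset.refl S)

lemma val_le_of_max {c : ℕ} : ∀ (f : ℕ) (t : Bool) (S : Finset V),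
    Fintype.card V ≤ S.card + f → IsGPSet G (↑S : Set V) →
    (∀ M : Finset V, MaxGP G M → S ⊆ M → M.card ≤ c) →
    gameValAux G f t S ≤ c := by
  intro f
  induction f with
  | zero =>
    intro t S hf hgp hM
    have hS : S = Finset.univ := by
      apply Finset.eq_univ_of_card
      have := Finset.card_le_univ S
      omega
    have hmax : MaxGP G S := ⟨hgp, fun v hv => absurd (hS ▸ Finset.mem_univ v) hv⟩
    exact hM S hmax (Finset.Subset.refl S)
  | succ f ih =>
    intro t S hf hgp hM
    by_cases hne : (playable G S).Nonempty
    · have hstep : ∀ v ∈ playable G S, gameValAux G f (!t) (cins v S) ≤ c := by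
        intro v hv
        refine ih (!t) (cins v S) ?_ (mem_playable.mp hv).2 ?_
        · rw [card_cins (mem_playable.mp hv).1]; omega
        · intro M hMax hsub
          exact hM M hMax (le_trans (subset_cins v S) hsub)
      rw [gameValAux_succ, dif_pos hne]
      cases t with
      | true =>
        rw [if_pos rfl]
        exact Finset.sup'_le hne _ hstep
      | false =>
        obtain ⟨v, hv⟩ := hne
        rw [if_neg (by simp)]
        exact le_trans (Finset.inf'_le _ hv) (hstep v hv)
    · rw [gameValAux_succ, dif_neg hne]
      exact hM S (maxGP_of_no_playable hgp hne) (Finset.Subset.refl S)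

end Game
end GrsProof
namespace GrsProof
open Finset SimpleGraph

variable {r s : ℕ}

/-- the set `{w_j : j ∈ A}` as a finset. -/
def WS (A : Finset (Fin s)) : Finset (GV r s) := A.image ew

lemma mem_WS {u : GV r s} {A : Finset (Fin s)} : u ∈ WS A ↔ ∃ j ∈ A, ew j = u := by
  simp [WS]

lemma ew_inj : Function.Injective (ew : Fin s → GV r s) := by
  intro a b h; simpa [ew] using h

lemma ex_inj : Function.Injective (ex : Fin r → GV r s) := by
  intro a b h; simpa [ex] using h

lemma ey_inj : Function.Injective (ey : Fin r → GV r s) := by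
  intro a b h; simpa [ey] using h

lemma card_WS (A : Finset (Fin s)) : (WS A : Finset (GV r s)).card = A.card :=
  Finset.card_image_of_injective A ew_inj

lemma WS_empty : (WS ∅ : Finset (GV r s)) = ∅ := by simp [WS]

lemma mem_cins_elim {u w0 : GV r s} {M : Finset (GV r s)}
    (h : u ∈ (↑(cins w0 M) : Set (GV r s))) : u = w0 ∨ u ∈ M := by
  rw [coe_cins] at h
  rcases h with h | h
  · exact Or.inl h
  · exact Or.inr h

section NotBad

variable {T : Set (GV r s)}

lemma nb_xw (h : ∀ u ∈ T, (∃ i, u = ex i) ∨ ∃ j, u = ew j) : ¬ Bad r s T := by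
  rintro (⟨i,i',hii,h1,h2,h3⟩|⟨i,i',hii,h1,h2,h3⟩|⟨j,j',hjj,h1,h2,h3⟩|
    ⟨j,j',hjj,h1,h2,h3⟩|⟨i,j,h1,h2,h3⟩|⟨i,j,h1,h2,h3⟩|⟨i,h1,h2,h3⟩|⟨i,h1,h2,h3⟩|
    ⟨i,h1,h2,h3⟩|⟨i,h1,h2,h3⟩|⟨i,i',hii,h1,h2,h3⟩|⟨i,i',hii,h1,h2,h3⟩|
    ⟨i,i',hii,h1,h2,h3⟩|⟨i,i',hii,h1,h2,h3⟩)
  <;>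
  first
  | (rcases h _ h1 with ⟨a1, he⟩ | ⟨a1, he⟩ <;> (simp [vx, vy, ex, ey, ew] at he; done))
  | (rcases h _ h2 with ⟨a1, he⟩ | ⟨a1, he⟩ <;> (simp [vx, vy, ex, ey, ew] at he; done))
  | (rcases h _ h3 with ⟨a1, he⟩ | ⟨a1, he⟩ <;> (simp [vx, vy, ex, ey, ew] at he; done))

lemma nb_yw (h : ∀ u ∈ T, (∃ i, u = ey i) ∨ ∃ j, u = ew j) : ¬ Bad r s T := by
  rintro (⟨i,i',hii,h1,h2,h3⟩|⟨i,i',hii,h1,h2,h3⟩|⟨j,j',hjj,h1,h2,h3⟩|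
    ⟨j,j',hjj,h1,h2,h3⟩|⟨i,j,h1,h2,h3⟩|⟨i,j,h1,h2,h3⟩|⟨i,h1,h2,h3⟩|⟨i,h1,h2,h3⟩|
    ⟨i,h1,h2,h3⟩|⟨i,h1,h2,h3⟩|⟨i,i',hii,h1,h2,h3⟩|⟨i,i',hii,h1,h2,h3⟩|
    ⟨i,i',hii,h1,h2,h3⟩|⟨i,i',hii,h1,h2,h3⟩)
  <;>
  first
  | (rcases h _ h1 with ⟨a1, he⟩ | ⟨a1, he⟩ <;> (simp [vx, vy, ex, ey, ew] at he; done))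
  | (rcases h _ h2 with ⟨a1, he⟩ | ⟨a1, he⟩ <;> (simp [vx, vy, ex, ey, ew] at he; done))
  | (rcases h _ h3 with ⟨a1, he⟩ | ⟨a1, he⟩ <;> (simp [vx, vy, ex, ey, ew] at he; done))

lemma nb_x_y_w (h : ∀ u ∈ T, u = vx ∨ (∃ i, u = ey i) ∨ ∃ j, u = ew j)
    (hw : ∀ j j', ew j ∈ T → ew j' ∈ T → j = j') : ¬ Bad r s T := by
  rintro (⟨i,i',hii,h1,h2,h3⟩|⟨i,i',hii,h1,h2,h3⟩|⟨j,j',hjj,h1,h2,h3⟩|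
    ⟨j,j',hjj,h1,h2,h3⟩|⟨i,j,h1,h2,h3⟩|⟨i,j,h1,h2,h3⟩|⟨i,h1,h2,h3⟩|⟨i,h1,h2,h3⟩|
    ⟨i,h1,h2,h3⟩|⟨i,h1,h2,h3⟩|⟨i,i',hii,h1,h2,h3⟩|⟨i,i',hii,h1,h2,h3⟩|
    ⟨i,i',hii,h1,h2,h3⟩|⟨i,i',hii,h1,h2,h3⟩)
  all_goals try (first
  | (rcases h _ h1 with he | ⟨a1, he⟩ | ⟨a1, he⟩ <;> (simp [vx, vy, ex, ey, ew] at he; done))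
  | (rcases h _ h2 with he | ⟨a1, he⟩ | ⟨a1, he⟩ <;> (simp [vx, vy, ex, ey, ew] at he; done))
  | (rcases h _ h3 with he | ⟨a1, he⟩ | ⟨a1, he⟩ <;> (simp [vx, vy, ex, ey, ew] at he; done)))
  -- leftover: T3
  exact hjj (hw _ _ h2 h3)

lemma nb_y_x_w (h : ∀ u ∈ T, u = vy ∨ (∃ i, u = ex i) ∨ ∃ j, u = ew j)
    (hw : ∀ j j', ew j ∈ T → ew j' ∈ T → j = j') : ¬ Bad r s T := by
  rintro (⟨i,i',hii,h1,h2,h3⟩|⟨i,i',hii,h1,h2,h3⟩|⟨j,j',hjj,h1,h2,h3⟩|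
    ⟨j,j',hjj,h1,h2,h3⟩|⟨i,j,h1,h2,h3⟩|⟨i,j,h1,h2,h3⟩|⟨i,h1,h2,h3⟩|⟨i,h1,h2,h3⟩|
    ⟨i,h1,h2,h3⟩|⟨i,h1,h2,h3⟩|⟨i,i',hii,h1,h2,h3⟩|⟨i,i',hii,h1,h2,h3⟩|
    ⟨i,i',hii,h1,h2,h3⟩|⟨i,i',hii,h1,h2,h3⟩)
  all_goals try (first
  | (rcases h _ h1 with he | ⟨a1, he⟩ | ⟨a1, he⟩ <;> (simp [vx, vy, ex, ey, ew] at he; done))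
  | (rcases h _ h2 with he | ⟨a1, he⟩ | ⟨a1, he⟩ <;> (simp [vx, vy, ex, ey, ew] at he; done))
  | (rcases h _ h3 with he | ⟨a1, he⟩ | ⟨a1, he⟩ <;> (simp [vx, vy, ex, ey, ew] at he; done)))
  -- leftover: T4
  exact hjj (hw _ _ h2 h3)

lemma nb_xy_w (h : ∀ u ∈ T, u = vx ∨ u = vy ∨ ∃ j, u = ew j)
    (hw : ∀ j j', ew j ∈ T → ew j' ∈ T → j = j') : ¬ Bad r s T := by
  rintro (⟨i,i',hii,h1,h2,h3⟩|⟨i,i',hii,h1,h2,h3⟩|⟨j,j',hjj,h1,h2,h3⟩|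
    ⟨j,j',hjj,h1,h2,h3⟩|⟨i,j,h1,h2,h3⟩|⟨i,j,h1,h2,h3⟩|⟨i,h1,h2,h3⟩|⟨i,h1,h2,h3⟩|
    ⟨i,h1,h2,h3⟩|⟨i,h1,h2,h3⟩|⟨i,i',hii,h1,h2,h3⟩|⟨i,i',hii,h1,h2,h3⟩|
    ⟨i,i',hii,h1,h2,h3⟩|⟨i,i',hii,h1,h2,h3⟩)
  all_goals try (first
  | (rcases h _ h1 with he | ⟨a1, he⟩ | ⟨a1, he⟩ <;> (simp [vx, vy, ex, ey, ew] at he; done))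
  | (rcases h _ h2 with he | ⟨a1, he⟩ | ⟨a1, he⟩ <;> (simp [vx, vy, ex, ey, ew] at he; done))
  | (rcases h _ h3 with he | ⟨a1, he⟩ | ⟨a1, he⟩ <;> (simp [vx, vy, ex, ey, ew] at he; done)))
  -- leftovers: T3 and T4
  · exact hjj (hw _ _ h2 h3)
  · exact hjj (hw _ _ h2 h3)

lemma nb_pair_w {i0 : Fin r} (h : ∀ u ∈ T, u = ex i0 ∨ u = ey i0 ∨ ∃ j, u = ew j) :
    ¬ Bad r s T := by
  rintro (⟨i,i',hii,h1,h2,h3⟩|⟨i,i',hii,h1,h2,h3⟩|⟨j,j',hjj,h1,h2,h3⟩|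
    ⟨j,j',hjj,h1,h2,h3⟩|⟨i,j,h1,h2,h3⟩|⟨i,j,h1,h2,h3⟩|⟨i,h1,h2,h3⟩|⟨i,h1,h2,h3⟩|
    ⟨i,h1,h2,h3⟩|⟨i,h1,h2,h3⟩|⟨i,i',hii,h1,h2,h3⟩|⟨i,i',hii,h1,h2,h3⟩|
    ⟨i,i',hii,h1,h2,h3⟩|⟨i,i',hii,h1,h2,h3⟩)
  all_goals try (first
  | (rcases h _ h1 with he | ⟨a1, he⟩ | ⟨a1, he⟩ <;> (simp [vx, vy, ex, ey, ew] at he; done))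
  | (rcases h _ h2 with he | ⟨a1, he⟩ | ⟨a1, he⟩ <;> (simp [vx, vy, ex, ey, ew] at he; done))
  | (rcases h _ h3 with he | ⟨a1, he⟩ | ⟨a1, he⟩ <;> (simp [vx, vy, ex, ey, ew] at he; done)))
  -- leftovers: T13 and T14
  · have e1 : i = i0 := by
      rcases h _ h1 with he | he | ⟨a1, he⟩
      · simpa [ex] using he
      · simp [ex, ey] at he
      · simp [ex, ew] at he
    have e2 : i' = i0 := by
      rcases h _ h2 with he | he | ⟨a1, he⟩
      · simpa [ex] using he
      · simp [ex, ey] at he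
      · simp [ex, ew] at he
    exact hii (e1.trans e2.symm)
  · have e1 : i = i0 := by
      rcases h _ h2 with he | he | ⟨a1, he⟩
      · simp [ex, ey] at he
      · simpa [ey] using he
      · simp [ey, ew] at he
    have e2 : i' = i0 := by
      rcases h _ h3 with he | he | ⟨a1, he⟩
      · simp [ex, ey] at he
      · simpa [ey] using he
      · simp [ey, ew] at he
    exact hii (e1.trans e2.symm)

lemma nb_mixed_w {b b' : Fin r} (hbb : b ≠ b')
    (h : ∀ u ∈ T, u = ex b' ∨ u = ey b ∨ ∃ j, u = ew j) : ¬ Bad r s T := by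
  rintro (⟨i,i',hii,h1,h2,h3⟩|⟨i,i',hii,h1,h2,h3⟩|⟨j,j',hjj,h1,h2,h3⟩|
    ⟨j,j',hjj,h1,h2,h3⟩|⟨i,j,h1,h2,h3⟩|⟨i,j,h1,h2,h3⟩|⟨i,h1,h2,h3⟩|⟨i,h1,h2,h3⟩|
    ⟨i,h1,h2,h3⟩|⟨i,h1,h2,h3⟩|⟨i,i',hii,h1,h2,h3⟩|⟨i,i',hii,h1,h2,h3⟩|
    ⟨i,i',hii,h1,h2,h3⟩|⟨i,i',hii,h1,h2,h3⟩)
  all_goals try (first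
  | (rcases h _ h1 with he | ⟨a1, he⟩ | ⟨a1, he⟩ <;> (simp [vx, vy, ex, ey, ew] at he; done))
  | (rcases h _ h2 with he | ⟨a1, he⟩ | ⟨a1, he⟩ <;> (simp [vx, vy, ex, ey, ew] at he; done))
  | (rcases h _ h3 with he | ⟨a1, he⟩ | ⟨a1, he⟩ <;> (simp [vx, vy, ex, ey, ew] at he; done)))
  -- leftovers: T13 and T14
  · have e1 : i = b' := by
      rcases h _ h1 with he | he | ⟨a1, he⟩
      · simpa [ex] using he
      · simp [ex, ey] at he
      · simp [ex, ew] at he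
    have e2 : i' = b' := by
      rcases h _ h2 with he | he | ⟨a1, he⟩
      · simpa [ex] using he
      · simp [ex, ey] at he
      · simp [ex, ew] at he
    exact hii (e1.trans e2.symm)
  · have e1 : i = b' := by
      rcases h _ h1 with he | he | ⟨a1, he⟩
      · simpa [ex] using he
      · simp [ex, ey] at he
      · simp [ex, ew] at he
    have e2 : i = b := by
      rcases h _ h2 with he | he | ⟨a1, he⟩
      · simp [ex, ey] at he
      · simpa [ey] using he
      · simp [ey, ew] at he
    exact hbb (e2.symm.trans e1)

end NotBad

end GrsProof
namespace GrsProof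
open Finset SimpleGraph

variable {r s : ℕ} {M : Finset (GV r s)}

lemma bad_of_not_playable (hM : MaxGP (Grs r s) M) {v : GV r s} (hv : v ∉ M) :
    Bad r s ↑(cins v M) := by
  by_contra hgood
  exact hM.2 v hv ((gp_iff _).mpr hgood)

lemma nb_of_max (hM : MaxGP (Grs r s) M) : ¬ Bad r s ↑M := (gp_iff _).mp hM.1

lemma w_filled (hM : MaxGP (Grs r s) M) (hvx : vx ∉ M) (hvy : vy ∉ M) :
    ∀ j, ew j ∈ M := by
  have hnb := nb_of_max hM
  intro j
  by_contra hj
  have hbad := bad_of_not_playable hM hj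
  rcases hbad with (⟨i,i',hii,h1,h2,h3⟩|⟨i,i',hii,h1,h2,h3⟩|⟨j1,j2,hjj,h1,h2,h3⟩|
    ⟨j1,j2,hjj,h1,h2,h3⟩|⟨i,j1,h1,h2,h3⟩|⟨i,j1,h1,h2,h3⟩|⟨i,h1,h2,h3⟩|⟨i,h1,h2,h3⟩|
    ⟨i,h1,h2,h3⟩|⟨i,h1,h2,h3⟩|⟨i,i',hii,h1,h2,h3⟩|⟨i,i',hii,h1,h2,h3⟩|
    ⟨i,i',hii,h1,h2,h3⟩|⟨i,i',hii,h1,h2,h3⟩)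
  all_goals try (rcases mem_cins_elim h1 with he | hm <;>
    first
    | simp [vx, vy, ex, ey, ew] at he
    | exact hvx hm
    | exact hvy hm)
  -- T13
  · rcases mem_cins_elim h1 with he | hm1
    · simp [ex, ew] at he
    rcases mem_cins_elim h2 with he | hm2
    · simp [ex, ew] at he
    rcases mem_cins_elim h3 with he | hm3
    · simp [ey, ew] at he
    exact hnb (bad13 hii hm1 hm2 hm3)
  -- T14
  · rcases mem_cins_elim h1 with he | hm1
    · simp [ex, ew] at he
    rcases mem_cins_elim h2 with he | hm2
    · simp [ey, ew] at he
    rcases mem_cins_elim h3 with he | hm3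
    · simp [ey, ew] at he
    exact hnb (bad14 hii hm1 hm2 hm3)

lemma ey_filled (hM : MaxGP (Grs r s) M) (hvy : vy ∉ M) (hex : ∀ a, ex a ∉ M) :
    ∀ k, ey k ∈ M := by
  have hnb := nb_of_max hM
  intro k
  by_contra hk
  have hbad := bad_of_not_playable hM hk
  rcases hbad with (⟨i,i',hii,h1,h2,h3⟩|⟨i,i',hii,h1,h2,h3⟩|⟨j1,j2,hjj,h1,h2,h3⟩|
    ⟨j1,j2,hjj,h1,h2,h3⟩|⟨i,j1,h1,h2,h3⟩|⟨i,j1,h1,h2,h3⟩|⟨i,h1,h2,h3⟩|⟨i,h1,h2,h3⟩|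
    ⟨i,h1,h2,h3⟩|⟨i,h1,h2,h3⟩|⟨i,i',hii,h1,h2,h3⟩|⟨i,i',hii,h1,h2,h3⟩|
    ⟨i,i',hii,h1,h2,h3⟩|⟨i,i',hii,h1,h2,h3⟩)
  all_goals try (first
    | (rcases mem_cins_elim h1 with he | hm <;>
        first
        | simp [vx, vy, ex, ey, ew] at he
        | exact hvy hm
        | exact hex _ hm)
    | (rcases mem_cins_elim h2 with he | hm <;>
        first
        | simp [vx, vy, ex, ey, ew] at he
        | exact hvy hm
        | exact hex _ hm)
    | (rcases mem_cins_elim h3 with he | hm <;>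
        first
        | simp [vx, vy, ex, ey, ew] at he
        | exact hvy hm
        | exact hex _ hm))
  -- T3
  · rcases mem_cins_elim h1 with he | hm1
    · simp [vx, ey] at he
    rcases mem_cins_elim h2 with he | hm2
    · simp [ey, ew] at he
    rcases mem_cins_elim h3 with he | hm3
    · simp [ey, ew] at he
    exact hnb (bad3 hjj hm1 hm2 hm3)

lemma ex_filled (hM : MaxGP (Grs r s) M) (hvx : vx ∉ M) (hey : ∀ a, ey a ∉ M) :
    ∀ k, ex k ∈ M := by
  have hnb := nb_of_max hM
  intro k
  by_contra hk
  have hbad := bad_of_not_playable hM hk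
  rcases hbad with (⟨i,i',hii,h1,h2,h3⟩|⟨i,i',hii,h1,h2,h3⟩|⟨j1,j2,hjj,h1,h2,h3⟩|
    ⟨j1,j2,hjj,h1,h2,h3⟩|⟨i,j1,h1,h2,h3⟩|⟨i,j1,h1,h2,h3⟩|⟨i,h1,h2,h3⟩|⟨i,h1,h2,h3⟩|
    ⟨i,h1,h2,h3⟩|⟨i,h1,h2,h3⟩|⟨i,i',hii,h1,h2,h3⟩|⟨i,i',hii,h1,h2,h3⟩|
    ⟨i,i',hii,h1,h2,h3⟩|⟨i,i',hii,h1,h2,h3⟩)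
  all_goals try (first
    | (rcases mem_cins_elim h1 with he | hm <;>
        first
        | simp [vx, vy, ex, ey, ew] at he
        | exact hvx hm
        | exact hey _ hm)
    | (rcases mem_cins_elim h2 with he | hm <;>
        first
        | simp [vx, vy, ex, ey, ew] at he
        | exact hvx hm
        | exact hey _ hm)
    | (rcases mem_cins_elim h3 with he | hm <;>
        first
        | simp [vx, vy, ex, ey, ew] at he
        | exact hvx hm
        | exact hey _ hm))
  -- T4
  · rcases mem_cins_elim h1 with he | hm1
    · simp [vy, ex] at he
    rcases mem_cins_elim h2 with he | hm2
    · simp [ex, ew] at he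
    rcases mem_cins_elim h3 with he | hm3
    · simp [ex, ew] at he
    exact hnb (bad4 hjj hm1 hm2 hm3)

lemma col_filled (hM : MaxGP (Grs r s) M) (hvx : vx ∉ M) (hvy : vy ∉ M)
    (hnopair : ∀ c, ¬ (ex c ∈ M ∧ ey c ∈ M)) : ∀ k, ex k ∈ M ∨ ey k ∈ M := by
  have hnb := nb_of_max hM
  intro k
  by_contra hk
  push_neg at hk
  obtain ⟨hxk, hyk⟩ := hk
  have hbad := bad_of_not_playable hM hxk
  rcases hbad with (⟨i,i',hii,h1,h2,h3⟩|⟨i,i',hii,h1,h2,h3⟩|⟨j1,j2,hjj,h1,h2,h3⟩|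
    ⟨j1,j2,hjj,h1,h2,h3⟩|⟨i,j1,h1,h2,h3⟩|⟨i,j1,h1,h2,h3⟩|⟨i,h1,h2,h3⟩|⟨i,h1,h2,h3⟩|
    ⟨i,h1,h2,h3⟩|⟨i,h1,h2,h3⟩|⟨i,i',hii,h1,h2,h3⟩|⟨i,i',hii,h1,h2,h3⟩|
    ⟨i,i',hii,h1,h2,h3⟩|⟨i,i',hii,h1,h2,h3⟩)
  all_goals try (rcases mem_cins_elim h1 with he | hm <;>
    first
    | simp [vx, vy, ex, ey, ew] at he
    | exact hvx hm
    | exact hvy hm)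
  -- T13 : {ex i, ex i', ey i'}
  · rcases mem_cins_elim h3 with he | hm3
    · simp [ey, ex] at he
    rcases mem_cins_elim h2 with he | hm2
    · have : i' = k := by simpa [ex] using he
      subst this
      exact hyk hm3
    · exact hnopair i' ⟨hm2, hm3⟩
  -- T14 : {ex i, ey i, ey i'}
  · rcases mem_cins_elim h2 with he | hm2
    · simp [ey, ex] at he
    rcases mem_cins_elim h1 with he | hm1
    · have : i = k := by simpa [ex] using he
      subst this
      exact hyk hm2
    · exact hnopair i ⟨hm1, hm2⟩

lemma some_w (hM : MaxGP (Grs r s) M) (hs : 0 < s) (hvx : vx ∈ M) (hvy : vy ∉ M)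
    (hex : ∀ a, ex a ∉ M) : ∃ j, ew j ∈ M := by
  have hnb := nb_of_max hM
  by_contra hno
  push_neg at hno
  have hbad := bad_of_not_playable hM (hno ⟨0, hs⟩)
  rcases hbad with (⟨i,i',hii,h1,h2,h3⟩|⟨i,i',hii,h1,h2,h3⟩|⟨j1,j2,hjj,h1,h2,h3⟩|
    ⟨j1,j2,hjj,h1,h2,h3⟩|⟨i,j1,h1,h2,h3⟩|⟨i,j1,h1,h2,h3⟩|⟨i,h1,h2,h3⟩|⟨i,h1,h2,h3⟩|
    ⟨i,h1,h2,h3⟩|⟨i,h1,h2,h3⟩|⟨i,i',hii,h1,h2,h3⟩|⟨i,i',hii,h1,h2,h3⟩|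
    ⟨i,i',hii,h1,h2,h3⟩|⟨i,i',hii,h1,h2,h3⟩)
  all_goals try (first
    | (rcases mem_cins_elim h1 with he | hm <;>
        first
        | simp [vx, vy, ex, ey, ew] at he
        | exact hvy hm
        | exact hex _ hm)
    | (rcases mem_cins_elim h2 with he | hm <;>
        first
        | simp [vx, vy, ex, ey, ew] at he
        | exact hvy hm
        | exact hex _ hm)
    | (rcases mem_cins_elim h3 with he | hm <;>
        first
        | simp [vx, vy, ex, ey, ew] at he
        | exact hvy hm
        | exact hex _ hm))
  -- T3 : {vx, ew j1, ew j2}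
  · rcases mem_cins_elim h2 with he | hm2
    swap
    · exact hno _ hm2
    rcases mem_cins_elim h3 with he' | hm3
    swap
    · exact hno _ hm3
    exact hjj ((ew_inj he).trans (ew_inj he').symm)

lemma some_w' (hM : MaxGP (Grs r s) M) (hs : 0 < s) (hvy : vy ∈ M) (hvx : vx ∉ M)
    (hey : ∀ a, ey a ∉ M) : ∃ j, ew j ∈ M := by
  have hnb := nb_of_max hM
  by_contra hno
  push_neg at hno
  have hbad := bad_of_not_playable hM (hno ⟨0, hs⟩)
  rcases hbad with (⟨i,i',hii,h1,h2,h3⟩|⟨i,i',hii,h1,h2,h3⟩|⟨j1,j2,hjj,h1,h2,h3⟩|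
    ⟨j1,j2,hjj,h1,h2,h3⟩|⟨i,j1,h1,h2,h3⟩|⟨i,j1,h1,h2,h3⟩|⟨i,h1,h2,h3⟩|⟨i,h1,h2,h3⟩|
    ⟨i,h1,h2,h3⟩|⟨i,h1,h2,h3⟩|⟨i,i',hii,h1,h2,h3⟩|⟨i,i',hii,h1,h2,h3⟩|
    ⟨i,i',hii,h1,h2,h3⟩|⟨i,i',hii,h1,h2,h3⟩)
  all_goals try (first
    | (rcases mem_cins_elim h1 with he | hm <;>
        first
        | simp [vx, vy, ex, ey, ew] at he
        | exact hvx hm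
        | exact hey _ hm)
    | (rcases mem_cins_elim h2 with he | hm <;>
        first
        | simp [vx, vy, ex, ey, ew] at he
        | exact hvx hm
        | exact hey _ hm)
    | (rcases mem_cins_elim h3 with he | hm <;>
        first
        | simp [vx, vy, ex, ey, ew] at he
        | exact hvx hm
        | exact hey _ hm))
  -- T4 : {vy, ew j1, ew j2}
  · rcases mem_cins_elim h2 with he | hm2
    swap
    · exact hno _ hm2
    rcases mem_cins_elim h3 with he' | hm3
    swap
    · exact hno _ hm3
    exact hjj ((ew_inj he).trans (ew_inj he').symm)

end GrsProof
namespace GrsProof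
open Finset SimpleGraph

variable {r s : ℕ} {M : Finset (GV r s)}

lemma card_xwY (j0 : Fin s) :
    (insert vx (insert (ew j0) (Finset.univ.image (ey : Fin r → GV r s)))).card = r + 2 := by
  rw [Finset.card_insert_of_notMem (by simp [vx, ew, ey]),
    Finset.card_insert_of_notMem (by simp [ew, ey]),
    Finset.card_image_of_injective _ ey_inj]
  simp

lemma card_ywX (j0 : Fin s) :
    (insert vy (insert (ew j0) (Finset.univ.image (ex : Fin r → GV r s)))).card = r + 2 := by
  rw [Finset.card_insert_of_notMem (by simp [vy, ew, ex]),
    Finset.card_insert_of_notMem (by simp [ew, ex]),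
    Finset.card_image_of_injective _ ex_inj]
  simp

lemma card_pairW (i0 : Fin r) :
    (insert (ex i0) (insert (ey i0) (WS (Finset.univ : Finset (Fin s)) :
      Finset (GV r s)))).card = s + 2 := by
  rw [Finset.card_insert_of_notMem (by simp [ex, ey, mem_WS, ew]),
    Finset.card_insert_of_notMem (by simp [ey, mem_WS, ew]), card_WS]
  simp

lemma card_xyw (j0 : Fin s) :
    (insert vx (insert vy ({ew j0} : Finset (GV r s)))).card = 3 := by
  rw [Finset.card_insert_of_notMem (by simp [vx, vy, ew]),
    Finset.card_insert_of_notMem (by simp [vy, ew])]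
  simp

/-- transversal bound : if every column is hit and all of `W` is in `M` then `s + r ≤ |M|`. -/
lemma card_trans (hW : ∀ j, ew j ∈ M) (hcol : ∀ k, (ex k : GV r s) ∈ M ∨ ey k ∈ M) :
    s + r ≤ M.card := by
  classical
  set f : Fin r → GV r s := fun k => if ex k ∈ M then ex k else ey k with hf
  have hfM : ∀ k, f k ∈ M := by
    intro k
    by_cases h : ex k ∈ M
    · simp [hf, h]
    · rcases hcol k with h' | h'
      · exact absurd h' h
      · simpa [hf, h] using h'
  have hinj : Function.Injective f := by
    intro a b hab
    simp only [hf] at hab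
    split_ifs at hab with h1 h2
    · exact ex_inj hab
    · simp [ex, ey] at hab
    · simp [ex, ey] at hab
    · exact ey_inj hab
  have hsub : (WS (Finset.univ : Finset (Fin s)) ∪ Finset.univ.image f) ⊆ M := by
    intro v hv
    rcases Finset.mem_union.mp hv with hv | hv
    · obtain ⟨j, _, rfl⟩ := mem_WS.mp hv
      exact hW j
    · obtain ⟨k, _, rfl⟩ := Finset.mem_image.mp hv
      exact hfM k
  have hdisj : Disjoint (WS (Finset.univ : Finset (Fin s)) : Finset (GV r s))
      (Finset.univ.image f) := by
    rw [Finset.disjoint_left]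
    intro v hv hv'
    obtain ⟨j, _, rfl⟩ := mem_WS.mp hv
    obtain ⟨k, _, he⟩ := Finset.mem_image.mp hv'
    simp only [hf] at he
    split_ifs at he
    · simp [ex, ew] at he
    · simp [ey, ew] at he
  have hcard := Finset.card_le_card hsub
  rw [Finset.card_union_of_disjoint hdisj, card_WS,
    Finset.card_image_of_injective _ hinj] at hcard
  simpa using hcard

section MLemmas
variable (hM : MaxGP (Grs r s) M)
include hM

lemma ML_x_yi (hs : 0 < s) {i : Fin r} (hvx : vx ∈ M) (hyi : ey i ∈ M) :
    r + 2 ≤ M.card := by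
  have hnb := nb_of_max hM
  have hvy : vy ∉ M := fun h => hnb (bad7 hvx h hyi)
  have hexall : ∀ a, (ex a : GV r s) ∉ M := by
    intro a h
    by_cases hai : a = i
    · subst hai; exact hnb (bad9 hvx h hyi)
    · exact hnb (bad11 hai hvx h hyi)
  have hY := ey_filled hM hvy hexall
  obtain ⟨j0, hj0⟩ := some_w hM hs hvx hvy hexall
  have hsub : insert vx (insert (ew j0) (Finset.univ.image (ey : Fin r → GV r s))) ⊆ M := by
    intro v hv
    rcases Finset.mem_insert.mp hv with rfl | hv
    · exact hvx
    rcases Finset.mem_insert.mp hv with rfl | hv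
    · exact hj0
    obtain ⟨k, _, rfl⟩ := Finset.mem_image.mp hv
    exact hY k
  have := Finset.card_le_card hsub
  rwa [card_xwY] at this

lemma ML_y_xi (hs : 0 < s) {i : Fin r} (hvy : vy ∈ M) (hxi : ex i ∈ M) :
    r + 2 ≤ M.card := by
  have hnb := nb_of_max hM
  have hvx : vx ∉ M := fun h => hnb (bad8 h hvy hxi)
  have heyall : ∀ a, (ey a : GV r s) ∉ M := by
    intro a h
    by_cases hai : i = a
    · subst hai; exact hnb (bad10 hvy hxi h)
    · exact hnb (bad12 hai hvy hxi h)
  have hX := ex_filled hM hvx heyall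
  obtain ⟨j0, hj0⟩ := some_w' hM hs hvy hvx heyall
  have hsub : insert vy (insert (ew j0) (Finset.univ.image (ex : Fin r → GV r s))) ⊆ M := by
    intro v hv
    rcases Finset.mem_insert.mp hv with rfl | hv
    · exact hvy
    rcases Finset.mem_insert.mp hv with rfl | hv
    · exact hj0
    obtain ⟨k, _, rfl⟩ := Finset.mem_image.mp hv
    exact hX k
  have := Finset.card_le_card hsub
  rwa [card_ywX] at this

lemma ML_pair_lb {i0 : Fin r} (hxi : ex i0 ∈ M) (hyi : ey i0 ∈ M) :
    s + 2 ≤ M.card := by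
  have hnb := nb_of_max hM
  have hvx : vx ∉ M := fun h => hnb (bad9 h hxi hyi)
  have hvy : vy ∉ M := fun h => hnb (bad10 h hxi hyi)
  have hW := w_filled hM hvx hvy
  have hsub : insert (ex i0) (insert (ey i0)
      (WS (Finset.univ : Finset (Fin s)) : Finset (GV r s))) ⊆ M := by
    intro v hv
    rcases Finset.mem_insert.mp hv with rfl | hv
    · exact hxi
    rcases Finset.mem_insert.mp hv with rfl | hv
    · exact hyi
    obtain ⟨j, _, rfl⟩ := mem_WS.mp hv
    exact hW j
  have := Finset.card_le_card hsub
  rwa [card_pairW] at this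

lemma ML_pair_ub {i0 : Fin r} (hxi : ex i0 ∈ M) (hyi : ey i0 ∈ M) :
    M.card ≤ s + 2 := by
  have hnb := nb_of_max hM
  have hvx : vx ∉ M := fun h => hnb (bad9 h hxi hyi)
  have hvy : vy ∉ M := fun h => hnb (bad10 h hxi hyi)
  have hsub : M ⊆ insert (ex i0) (insert (ey i0)
      (WS (Finset.univ : Finset (Fin s)) : Finset (GV r s))) := by
    intro v hv
    rcases v with w | w | k | k | j
    · exact absurd hv (by cases w; exact hvx)
    · exact absurd hv (by cases w; exact hvy)
    · by_cases hk : k = i0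
      · subst hk; exact Finset.mem_insert_self _ _
      · exact absurd hv (fun h => hnb (bad13 hk h hxi hyi))
    · by_cases hk : k = i0
      · subst hk; exact Finset.mem_insert.mpr (Or.inr (Finset.mem_insert_self _ _))
      · exact absurd hv (fun h => hnb (bad14 (Ne.symm hk) hxi hyi h))
    · refine Finset.mem_insert.mpr (Or.inr (Finset.mem_insert.mpr (Or.inr ?_)))
      exact mem_WS.mpr ⟨j, Finset.mem_univ j, rfl⟩
  have := Finset.card_le_card hsub
  rwa [card_pairW] at this

lemma ML_xy_ub (hr : 1 ≤ r) (hvx : vx ∈ M) (hvy : vy ∈ M) : M.card ≤ 3 := by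
  have hnb := nb_of_max hM
  have hex : ∀ a, (ex a : GV r s) ∉ M := fun a h => hnb (bad8 hvx hvy h)
  have hey : ∀ a, (ey a : GV r s) ∉ M := fun a h => hnb (bad7 hvx hvy h)
  by_cases hw : ∃ j, (ew j : GV r s) ∈ M
  · obtain ⟨j0, hj0⟩ := hw
    have hsub : M ⊆ insert vx (insert vy ({ew j0} : Finset (GV r s))) := by
      intro v hv
      rcases v with w | w | k | k | j
      · cases w; exact Finset.mem_insert_self _ _
      · cases w; exact Finset.mem_insert.mpr (Or.inr (Finset.mem_insert_self _ _))
      · exact absurd hv (hex k)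
      · exact absurd hv (hey k)
      · have : j = j0 := by
          by_contra hne
          exact hnb (bad3 hne hvx hv hj0)
        subst this
        exact Finset.mem_insert.mpr (Or.inr (Finset.mem_insert.mpr (Or.inr (by simp [ew]))))
    have := Finset.card_le_card hsub
    rw [card_xyw] at this
    omega
  · push_neg at hw
    have hsub : M ⊆ insert vx ({vy} : Finset (GV r s)) := by
      intro v hv
      rcases v with w | w | k | k | j
      · cases w; exact Finset.mem_insert_self _ _
      · cases w; exact Finset.mem_insert.mpr (Or.inr (by simp [vy]))
      · exact absurd hv (hex k)
      · exact absurd hv (hey k)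
      · exact absurd hv (hw j)
    have h1 := Finset.card_le_card hsub
    have h2 := Finset.card_insert_le vx ({vy} : Finset (GV r s))
    simp at h2
    omega

lemma ML_xw_ub (hr : 1 ≤ r) {j : Fin s} (hvx : vx ∈ M) (hwj : ew j ∈ M) :
    M.card ≤ r + 2 := by
  have hnb := nb_of_max hM
  have hex : ∀ a, (ex a : GV r s) ∉ M := fun a h => hnb (bad5 hvx h hwj)
  by_cases hvy : vy ∈ M
  · have h3 := ML_xy_ub hM hr hvx hvy
    omega
  · have hsub : M ⊆ insert vx (insert (ew j)
        (Finset.univ.image (ey : Fin r → GV r s))) := by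
      intro v hv
      rcases v with w | w | k | k | j'
      · cases w; exact Finset.mem_insert_self _ _
      · exact absurd hv (by cases w; exact hvy)
      · exact absurd hv (hex k)
      · exact Finset.mem_insert.mpr (Or.inr (Finset.mem_insert.mpr (Or.inr
          (Finset.mem_image.mpr ⟨k, Finset.mem_univ k, rfl⟩))))
      · have : j' = j := by
          by_contra hne
          exact hnb (bad3 (Ne.symm hne) hvx hwj hv)
        subst this
        exact Finset.mem_insert.mpr (Or.inr (Finset.mem_insert_self _ _))
    have := Finset.card_le_card hsub
    rwa [card_xwY] at this

lemma ML_xx_w (hs2 : 2 ≤ s) {a b : Fin r} {j : Fin s} (hab : a ≠ b)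
    (hxa : ex a ∈ M) (hxb : ex b ∈ M) (hwj : ew j ∈ M) : r + 2 ≤ M.card := by
  have hnb := nb_of_max hM
  have hvx : vx ∉ M := fun h => hnb (bad5 h hxa hwj)
  by_cases hvy : vy ∈ M
  · have heyall : ∀ k, (ey k : GV r s) ∉ M := by
      intro k h
      by_cases hak : a = k
      · subst hak
        exact hnb (bad12 (Ne.symm hab) hvy hxb h)
      · exact hnb (bad12 hak hvy hxa h)
    have hX := ex_filled hM hvx heyall
    have hsub : insert vy (insert (ew j) (Finset.univ.image (ex : Fin r → GV r s))) ⊆ M := by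
      intro v hv
      rcases Finset.mem_insert.mp hv with rfl | hv
      · exact hvy
      rcases Finset.mem_insert.mp hv with rfl | hv
      · exact hwj
      obtain ⟨k, _, rfl⟩ := Finset.mem_image.mp hv
      exact hX k
    have := Finset.card_le_card hsub
    rwa [card_ywX] at this
  · have hnopair : ∀ c, ¬ ((ex c : GV r s) ∈ M ∧ ey c ∈ M) := by
      rintro c ⟨hc1, hc2⟩
      by_cases hca : c = a
      · subst hca
        exact hnb (bad13 (Ne.symm hab) hxb hc1 hc2)
      · exact hnb (bad13 (fun h => hca h.symm) hxa hc1 hc2)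
    have hW := w_filled hM hvx hvy
    have hcol := col_filled hM hvx hvy hnopair
    have := card_trans hW hcol
    omega

lemma ML_yx_w (hs2 : 2 ≤ s) {a b : Fin r} {j : Fin s} (hab : a ≠ b)
    (hya : ey a ∈ M) (hxb : ex b ∈ M) (hwj : ew j ∈ M) : r + 2 ≤ M.card := by
  have hnb := nb_of_max hM
  have hvx : vx ∉ M := fun h => hnb (bad5 h hxb hwj)
  have hvy : vy ∉ M := fun h => hnb (bad6 h hya hwj)
  have hnopair : ∀ c, ¬ ((ex c : GV r s) ∈ M ∧ ey c ∈ M) := by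
    rintro c ⟨hc1, hc2⟩
    by_cases hca : c = a
    · subst hca
      exact hnb (bad13 (Ne.symm hab) hxb hc1 hc2)
    · exact hnb (bad14 hca hc1 hc2 hya)
  have hW := w_filled hM hvx hvy
  have hcol := col_filled hM hvx hvy hnopair
  have := card_trans hW hcol
  omega

end MLemmas
end GrsProof
namespace GrsProof
open Finset SimpleGraph

variable {r s : ℕ}

lemma cardGV : Fintype.card (GV r s) = 2 + 2 * r + s := by
  simp [GV]
  omega

lemma cardA_le (A : Finset (Fin s)) : A.card ≤ s := by
  simpa using Finset.card_le_univ A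

lemma mem_WS' {u : GV r s} {A : Finset (Fin s)} : u ∈ WS A ↔ ∃ j ∈ A, u = ew j := by
  simp [WS, eq_comm]

lemma playable_intro {S : Finset (GV r s)} {v : GV r s} (h1 : v ∉ S)
    (h2 : ¬ Bad r s ↑(cins v S)) : v ∈ playable (Grs r s) S :=
  mem_playable.mpr ⟨h1, (gp_iff _).mpr h2⟩

lemma playable_elim {S : Finset (GV r s)} {v : GV r s} (h : v ∈ playable (Grs r s) S) :
    v ∉ S ∧ ¬ Bad r s ↑(cins v S) :=
  ⟨(mem_playable.mp h).1, (gp_iff _).mp (mem_playable.mp h).2⟩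

lemma cins_ew_WS {j : Fin s} {A : Finset (Fin s)} :
    cins (ew j) (WS A) = (WS (insert j A) : Finset (GV r s)) := by
  ext u
  simp only [mem_cins, mem_WS', Finset.mem_insert]
  constructor
  · rintro (rfl | ⟨j', hj', rfl⟩)
    · exact ⟨j, Or.inl rfl, rfl⟩
    · exact ⟨j', Or.inr hj', rfl⟩
  · rintro ⟨j', (rfl | hj'), rfl⟩
    · exact Or.inl rfl
    · exact Or.inr ⟨j', hj', rfl⟩

lemma ew_notMem_WS {j : Fin s} {A : Finset (Fin s)} (hj : j ∉ A) :
    (ew j : GV r s) ∉ WS A := by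
  rw [mem_WS']
  rintro ⟨j', hj', he⟩
  rw [ew_inj he] at hj
  exact hj hj'

def other (hr2 : 2 ≤ r) (i : Fin r) : Fin r :=
  if i = ⟨0, by omega⟩ then ⟨1, by omega⟩ else ⟨0, by omega⟩

lemma other_ne (hr2 : 2 ≤ r) (i : Fin r) : other hr2 i ≠ i := by
  unfold other
  split_ifs with h
  · rw [h]
    simp [Fin.ext_iff]
  · exact fun he => h he.symm

def fz (hr2 : 2 ≤ r) : Fin r := ⟨0, by omega⟩

/-- The pure-`W` induction for the B-game lower bound. -/
lemma IndB (hr2 : 2 ≤ r) (hs3 : 3 ≤ s) (hodd : Odd s) :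
    ∀ f : ℕ, ∀ A : Finset (Fin s), Fintype.card (GV r s) ≤ A.card + f →
    (Even A.card → r + 2 ≤ gameValAux (Grs r s) f true (WS A)) ∧
    (¬ Even A.card → r + 2 ≤ gameValAux (Grs r s) f false (WS A)) := by
  have hcardV := cardGV (r := r) (s := s)
  have hcardV2 : Fintype.card (Unit ⊕ Unit ⊕ Fin r ⊕ Fin r ⊕ Fin s) = 2 + 2 * r + s := hcardV
  intro f
  induction f with
  | zero =>
    intro A hf
    have := cardA_le A
    omega
  | succ f ih =>
    intro A hf
    have hAs := cardA_le A
    constructor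
    · -- Builder to move, |A| even : play a new w
      intro heven
      have hAne : A.card ≠ s := by
        intro h
        rw [h] at heven
        exact (Nat.not_even_iff_odd.mpr hodd) heven
      have : A ≠ Finset.univ := by
        intro h
        rw [h] at hAne
        simp at hAne
      obtain ⟨j, hj⟩ : ∃ j, j ∉ A := by
        by_contra h
        push_neg at h
        exact this (Finset.eq_univ_iff_forall.mpr h)
      have hjp : ew j ∈ playable (Grs r s) (WS A) := by
        refine playable_intro (ew_notMem_WS hj) (nb_xw ?_)
        intro u hu
        replace hu : u ∈ cins (ew j) (WS A) := hu
        simp only [mem_cins, mem_WS'] at hu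
        rcases hu with rfl | ⟨j', _, rfl⟩
        · exact Or.inr ⟨j, rfl⟩
        · exact Or.inr ⟨j', rfl⟩
      refine builder_step hjp ?_
      rw [cins_ew_WS]
      refine (ih (insert j A) ?_).2 ?_
      · rw [Finset.card_insert_of_notMem hj]
        omega
      · rw [Finset.card_insert_of_notMem hj]
        simp [Nat.even_add_one, heven]
    · -- Blocker to move, |A| odd
      intro hodd'
      have hA0 : A.card ≠ 0 := by
        intro h
        exact hodd' (by simp [h])
      obtain ⟨j0, hj0⟩ := Finset.card_pos.mp (by omega : 0 < A.card)
      have hexz : ∀ B : Finset (Fin s), (ex (fz hr2) : GV r s) ∈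
          playable (Grs r s) (WS B) := by
        intro B
        refine playable_intro ?_ (nb_xw ?_)
        · rw [mem_WS']
          rintro ⟨j', _, he⟩
          simp [ex, ew] at he
        · intro u hu
          replace hu : u ∈ cins (ex (fz hr2)) (WS B) := hu
          simp only [mem_cins, mem_WS'] at hu
          rcases hu with rfl | ⟨j', _, rfl⟩
          · exact Or.inl ⟨_, rfl⟩
          · exact Or.inr ⟨j', rfl⟩
      refine blocker_step_all ⟨_, hexz A⟩ ?_
      intro v hv
      obtain ⟨hvnot, hvnb⟩ := playable_elim hv
      have hf1 : 1 ≤ f := by omega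
      obtain ⟨f', rfl⟩ : ∃ f', f = f' + 1 := ⟨f - 1, by omega⟩
      rcases v with w | w | i | i | j
      · -- Blocker plays x ; Builder answers y₀ and the final set is forced
        cases w
        show r + 2 ≤ gameValAux (Grs r s) (f' + 1) true (cins vx (WS A))
        have hwu : ∀ j1 j2 : Fin s, (ew j1 : GV r s) ∈ cins (ey (fz hr2)) (cins vx (WS A)) →
            ew j2 ∈ cins (ey (fz hr2)) (cins vx (WS A)) → j1 = j2 := by
          intro j1 j2 hj1 hj2
          by_contra hne
          simp only [mem_cins] at hj1 hj2
          rcases hj1 with he | he | hj1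
          · simp [ew, ey] at he
          · simp [ew, vx] at he
          rcases hj2 with he | he | hj2
          · simp [ew, ey] at he
          · simp [ew, vx] at he
          exact hvnb (bad3 hne (by exact mem_cins_self _ _)
            (by exact mem_cins.mpr (Or.inr hj1)) (by exact mem_cins.mpr (Or.inr hj2)))
        have heyp : (ey (fz hr2) : GV r s) ∈ playable (Grs r s) (cins vx (WS A)) := by
          refine playable_intro ?_ (nb_x_y_w ?_ ?_)
          · rw [mem_cins]
            rintro (he | hm)
            · simp [ey, vx] at he
            · rw [mem_WS'] at hm
              obtain ⟨j', _, he⟩ := hm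
              simp [ey, ew] at he
          · intro u hu
            replace hu : u ∈ cins (ey (fz hr2)) (cins vx (WS A)) := hu
            simp only [mem_cins, mem_WS'] at hu
            rcases hu with rfl | rfl | ⟨j', _, rfl⟩
            · exact Or.inr (Or.inl ⟨_, rfl⟩)
            · exact Or.inl rfl
            · exact Or.inr (Or.inr ⟨j', rfl⟩)
          · exact fun j1 j2 h1 h2 => hwu j1 j2 (by exact h1) (by exact h2)
        refine builder_step heyp ?_
        refine val_ge_of_min (G := Grs r s) f' false _ ?_ ?_ ?_
        · have hc1 : (ey (fz hr2) : GV r s) ∉ cins vx (WS A) :=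
            (playable_elim heyp).1
          have hc2 : (vx : GV r s) ∉ WS A := by
            rw [mem_WS']
            rintro ⟨j', _, he⟩
            simp [vx, ew] at he
          rw [card_cins hc1, card_cins hc2, card_WS]
          omega
        · exact (mem_playable.mp heyp).2
        · intro M hMax hsub
          have h1 : (vx : GV r s) ∈ M := hsub (mem_cins.mpr (Or.inr (mem_cins_self _ _)))
          have h2 : (ey (fz hr2) : GV r s) ∈ M := hsub (mem_cins_self _ _)
          exact ML_x_yi hMax (by omega) h1 h2
      · -- Blocker plays y ; Builder answers x₀
        cases w
        show r + 2 ≤ gameValAux (Grs r s) (f' + 1) true (cins vy (WS A))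
        have hwu : ∀ j1 j2 : Fin s, (ew j1 : GV r s) ∈ cins (ex (fz hr2)) (cins vy (WS A)) →
            ew j2 ∈ cins (ex (fz hr2)) (cins vy (WS A)) → j1 = j2 := by
          intro j1 j2 hj1 hj2
          by_contra hne
          simp only [mem_cins] at hj1 hj2
          rcases hj1 with he | he | hj1
          · simp [ew, ex] at he
          · simp [ew, vy] at he
          rcases hj2 with he | he | hj2
          · simp [ew, ex] at he
          · simp [ew, vy] at he
          exact hvnb (bad4 hne (by exact mem_cins_self _ _)
            (by exact mem_cins.mpr (Or.inr hj1)) (by exact mem_cins.mpr (Or.inr hj2)))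
        have hexp : (ex (fz hr2) : GV r s) ∈ playable (Grs r s) (cins vy (WS A)) := by
          refine playable_intro ?_ (nb_y_x_w ?_ ?_)
          · rw [mem_cins]
            rintro (he | hm)
            · simp [ex, vy] at he
            · rw [mem_WS'] at hm
              obtain ⟨j', _, he⟩ := hm
              simp [ex, ew] at he
          · intro u hu
            replace hu : u ∈ cins (ex (fz hr2)) (cins vy (WS A)) := hu
            simp only [mem_cins, mem_WS'] at hu
            rcases hu with rfl | rfl | ⟨j', _, rfl⟩
            · exact Or.inr (Or.inl ⟨_, rfl⟩)
            · exact Or.inl rfl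
            · exact Or.inr (Or.inr ⟨j', rfl⟩)
          · exact fun j1 j2 h1 h2 => hwu j1 j2 (by exact h1) (by exact h2)
        refine builder_step hexp ?_
        refine val_ge_of_min (G := Grs r s) f' false _ ?_ ?_ ?_
        · have hc1 : (ex (fz hr2) : GV r s) ∉ cins vy (WS A) :=
            (playable_elim hexp).1
          have hc2 : (vy : GV r s) ∉ WS A := by
            rw [mem_WS']
            rintro ⟨j', _, he⟩
            simp [vy, ew] at he
          rw [card_cins hc1, card_cins hc2, card_WS]
          omega
        · exact (mem_playable.mp hexp).2
        · intro M hMax hsub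
          have h1 : (vy : GV r s) ∈ M := hsub (mem_cins.mpr (Or.inr (mem_cins_self _ _)))
          have h2 : (ex (fz hr2) : GV r s) ∈ M := hsub (mem_cins_self _ _)
          exact ML_y_xi hMax (by omega) h1 h2
      · -- Blocker plays x_i ; Builder answers another x
        show r + 2 ≤ gameValAux (Grs r s) (f' + 1) true (cins (ex i) (WS A))
        have hi2 := other_ne hr2 i
        have hxp : (ex (other hr2 i) : GV r s) ∈ playable (Grs r s) (cins (ex i) (WS A)) := by
          refine playable_intro ?_ (nb_xw ?_)
          · rw [mem_cins]
            rintro (he | hm)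
            · exact hi2 (ex_inj he)
            · rw [mem_WS'] at hm
              obtain ⟨j', _, he⟩ := hm
              simp [ex, ew] at he
          · intro u hu
            replace hu : u ∈ cins (ex (other hr2 i)) (cins (ex i) (WS A)) := hu
            simp only [mem_cins, mem_WS'] at hu
            rcases hu with rfl | rfl | ⟨j', _, rfl⟩
            · exact Or.inl ⟨_, rfl⟩
            · exact Or.inl ⟨_, rfl⟩
            · exact Or.inr ⟨j', rfl⟩
        refine builder_step hxp ?_
        refine val_ge_of_min (G := Grs r s) f' false _ ?_ ?_ ?_
        · have hc1 : (ex (other hr2 i) : GV r s) ∉ cins (ex i) (WS A) :=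
            (playable_elim hxp).1
          have hc2 : (ex i : GV r s) ∉ WS A := by
            rw [mem_WS']
            rintro ⟨j', _, he⟩
            simp [ex, ew] at he
          rw [card_cins hc1, card_cins hc2, card_WS]
          omega
        · exact (mem_playable.mp hxp).2
        · intro M hMax hsub
          have h1 : (ex (other hr2 i) : GV r s) ∈ M := hsub (mem_cins_self _ _)
          have h2 : (ex i : GV r s) ∈ M := hsub (mem_cins.mpr (Or.inr (mem_cins_self _ _)))
          have h3 : (ew j0 : GV r s) ∈ M := hsub (mem_cins.mpr (Or.inr (mem_cins.mpr
            (Or.inr (mem_WS'.mpr ⟨j0, hj0, rfl⟩)))))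
          exact ML_xx_w hMax (by omega) hi2 h1 h2 h3
      · -- Blocker plays y_i ; Builder answers some x in another column
        show r + 2 ≤ gameValAux (Grs r s) (f' + 1) true (cins (ey i) (WS A))
        have hi2 := other_ne hr2 i
        have hxp : (ex (other hr2 i) : GV r s) ∈ playable (Grs r s) (cins (ey i) (WS A)) := by
          refine playable_intro ?_ (nb_mixed_w (b := i) (b' := other hr2 i)
            (fun h => hi2 h.symm) ?_)
          · rw [mem_cins]
            rintro (he | hm)
            · simp [ex, ey] at he
            · rw [mem_WS'] at hm
              obtain ⟨j', _, he⟩ := hm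
              simp [ex, ew] at he
          · intro u hu
            replace hu : u ∈ cins (ex (other hr2 i)) (cins (ey i) (WS A)) := hu
            simp only [mem_cins, mem_WS'] at hu
            rcases hu with rfl | rfl | ⟨j', _, rfl⟩
            · exact Or.inl rfl
            · exact Or.inr (Or.inl rfl)
            · exact Or.inr (Or.inr ⟨j', rfl⟩)
        refine builder_step hxp ?_
        refine val_ge_of_min (G := Grs r s) f' false _ ?_ ?_ ?_
        · have hc1 : (ex (other hr2 i) : GV r s) ∉ cins (ey i) (WS A) :=
            (playable_elim hxp).1
          have hc2 : (ey i : GV r s) ∉ WS A := by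
            rw [mem_WS']
            rintro ⟨j', _, he⟩
            simp [ey, ew] at he
          rw [card_cins hc1, card_cins hc2, card_WS]
          omega
        · exact (mem_playable.mp hxp).2
        · intro M hMax hsub
          have h1 : (ex (other hr2 i) : GV r s) ∈ M := hsub (mem_cins_self _ _)
          have h2 : (ey i : GV r s) ∈ M := hsub (mem_cins.mpr (Or.inr (mem_cins_self _ _)))
          have h3 : (ew j0 : GV r s) ∈ M := hsub (mem_cins.mpr (Or.inr (mem_cins.mpr
            (Or.inr (mem_WS'.mpr ⟨j0, hj0, rfl⟩)))))
          exact ML_yx_w hMax (by omega) (fun h => hi2 h.symm) h2 h1 h3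
      · -- Blocker plays another w
        show r + 2 ≤ gameValAux (Grs r s) (f' + 1) true (cins (ew j) (WS A))
        have hjA : j ∉ A := by
          intro h
          exact hvnot (mem_WS'.mpr ⟨j, h, rfl⟩)
        rw [cins_ew_WS]
        refine (ih (insert j A) ?_).1 ?_
        · rw [Finset.card_insert_of_notMem hjA]
          omega
        · rw [Finset.card_insert_of_notMem hjA]
          rcases Nat.even_or_odd A.card with h | h
          · exact absurd h hodd'
          · simpa [Nat.even_add_one] using Nat.not_even_iff_odd.mpr h

end GrsProof
namespace GrsProof
open Finset SimpleGraph

variable {r s : ℕ}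

lemma vx_not_WS {A : Finset (Fin s)} : (vx : GV r s) ∉ WS A := by
  rw [mem_WS']
  rintro ⟨j', _, he⟩
  simp [vx, ew] at he

lemma vy_not_WS {A : Finset (Fin s)} : (vy : GV r s) ∉ WS A := by
  rw [mem_WS']
  rintro ⟨j', _, he⟩
  simp [vy, ew] at he

lemma ex_not_WS {i : Fin r} {A : Finset (Fin s)} : (ex i : GV r s) ∉ WS A := by
  rw [mem_WS']
  rintro ⟨j', _, he⟩
  simp [ex, ew] at he

lemma ey_not_WS {i : Fin r} {A : Finset (Fin s)} : (ey i : GV r s) ∉ WS A := by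
  rw [mem_WS']
  rintro ⟨j', _, he⟩
  simp [ey, ew] at he

/-- The pure-`W` induction for the B'-game upper bound. -/
lemma IndB' (hr1 : 1 ≤ r) (hs3 : 3 ≤ s) (hodd : Odd s) :
    ∀ f : ℕ, ∀ A : Finset (Fin s), Fintype.card (GV r s) ≤ A.card + f →
    (Even A.card → gameValAux (Grs r s) f false (WS A) ≤ s + 2) ∧
    (¬ Even A.card → gameValAux (Grs r s) f true (WS A) ≤ s + 2) := by
  have hcardV := cardGV (r := r) (s := s)
  have hcardV2 : Fintype.card (Unit ⊕ Unit ⊕ Fin r ⊕ Fin r ⊕ Fin s) = 2 + 2 * r + s := hcardV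
  intro f
  induction f with
  | zero =>
    intro A hf
    have := cardA_le A
    omega
  | succ f ih =>
    intro A hf
    have hAs := cardA_le A
    constructor
    · -- Blocker to move, |A| even : play a new w
      intro heven
      have hAne : A.card ≠ s := by
        intro h
        rw [h] at heven
        exact (Nat.not_even_iff_odd.mpr hodd) heven
      obtain ⟨j, hj⟩ : ∃ j, j ∉ A := by
        by_contra h
        push_neg at h
        have : A = Finset.univ := Finset.eq_univ_iff_forall.mpr h
        rw [this] at hAne
        simp at hAne
      have hjp : ew j ∈ playable (Grs r s) (WS A) := by
        refine playable_intro (ew_notMem_WS hj) (nb_xw ?_)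
        intro u hu
        replace hu : u ∈ cins (ew j) (WS A) := hu
        simp only [mem_cins, mem_WS'] at hu
        rcases hu with rfl | ⟨j', _, rfl⟩
        · exact Or.inr ⟨j, rfl⟩
        · exact Or.inr ⟨j', rfl⟩
      refine blocker_step_ub hjp ?_
      rw [cins_ew_WS]
      refine (ih (insert j A) ?_).2 ?_
      · rw [Finset.card_insert_of_notMem hj]
        omega
      · rw [Finset.card_insert_of_notMem hj]
        simp [Nat.even_add_one, heven]
    · -- Builder to move, |A| odd
      intro hodd'
      refine builder_step_all_ub (by rw [card_WS]; omega) ?_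
      intro v hv
      obtain ⟨hvnot, hvnb⟩ := playable_elim hv
      have hf1 : 1 ≤ f := by omega
      obtain ⟨f', rfl⟩ : ∃ f', f = f' + 1 := ⟨f - 1, by omega⟩
      rcases v with w | w | i | i | j
      · -- Builder plays x ; Blocker answers y
        cases w
        show gameValAux (Grs r s) (f' + 1) false (cins vx (WS A)) ≤ s + 2
        have hvyp : (vy : GV r s) ∈ playable (Grs r s) (cins vx (WS A)) := by
          refine playable_intro ?_ (nb_xy_w ?_ ?_)
          · rw [mem_cins]
            rintro (he | hm)
            · simp [vy, vx] at he
            · exact vy_not_WS hm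
          · intro u hu
            replace hu : u ∈ cins vy (cins vx (WS A)) := hu
            simp only [mem_cins, mem_WS'] at hu
            rcases hu with rfl | rfl | ⟨j', _, rfl⟩
            · exact Or.inr (Or.inl rfl)
            · exact Or.inl rfl
            · exact Or.inr (Or.inr ⟨j', rfl⟩)
          · intro j1 j2 hj1 hj2
            by_contra hne
            replace hj1 : ew j1 ∈ cins vy (cins vx (WS A)) := hj1
            replace hj2 : ew j2 ∈ cins vy (cins vx (WS A)) := hj2
            simp only [mem_cins] at hj1 hj2
            rcases hj1 with he | he | hj1
            · simp [ew, vy] at he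
            · simp [ew, vx] at he
            rcases hj2 with he | he | hj2
            · simp [ew, vy] at he
            · simp [ew, vx] at he
            exact hvnb (bad3 hne (by exact mem_cins_self _ _)
              (by exact mem_cins.mpr (Or.inr hj1)) (by exact mem_cins.mpr (Or.inr hj2)))
        refine blocker_step_ub hvyp ?_
        refine val_le_of_max (G := Grs r s) f' true _ ?_ ?_ ?_
        · rw [card_cins (playable_elim hvyp).1, card_cins (by exact vx_not_WS), card_WS]
          omega
        · exact (mem_playable.mp hvyp).2
        · intro M hMax hsub
          have h1 : (vx : GV r s) ∈ M := hsub (mem_cins.mpr (Or.inr (mem_cins_self _ _)))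
          have h2 : (vy : GV r s) ∈ M := hsub (mem_cins_self _ _)
          have := ML_xy_ub hMax hr1 h1 h2
          omega
      · -- Builder plays y ; Blocker answers x
        cases w
        show gameValAux (Grs r s) (f' + 1) false (cins vy (WS A)) ≤ s + 2
        have hvxp : (vx : GV r s) ∈ playable (Grs r s) (cins vy (WS A)) := by
          refine playable_intro ?_ (nb_xy_w ?_ ?_)
          · rw [mem_cins]
            rintro (he | hm)
            · simp [vx, vy] at he
            · exact vx_not_WS hm
          · intro u hu
            replace hu : u ∈ cins vx (cins vy (WS A)) := hu
            simp only [mem_cins, mem_WS'] at hu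
            rcases hu with rfl | rfl | ⟨j', _, rfl⟩
            · exact Or.inl rfl
            · exact Or.inr (Or.inl rfl)
            · exact Or.inr (Or.inr ⟨j', rfl⟩)
          · intro j1 j2 hj1 hj2
            by_contra hne
            replace hj1 : ew j1 ∈ cins vx (cins vy (WS A)) := hj1
            replace hj2 : ew j2 ∈ cins vx (cins vy (WS A)) := hj2
            simp only [mem_cins] at hj1 hj2
            rcases hj1 with he | he | hj1
            · simp [ew, vx] at he
            · simp [ew, vy] at he
            rcases hj2 with he | he | hj2
            · simp [ew, vx] at he
            · simp [ew, vy] at he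
            exact hvnb (bad4 hne (by exact mem_cins_self _ _)
              (by exact mem_cins.mpr (Or.inr hj1)) (by exact mem_cins.mpr (Or.inr hj2)))
        refine blocker_step_ub hvxp ?_
        refine val_le_of_max (G := Grs r s) f' true _ ?_ ?_ ?_
        · rw [card_cins (playable_elim hvxp).1, card_cins (by exact vy_not_WS), card_WS]
          omega
        · exact (mem_playable.mp hvxp).2
        · intro M hMax hsub
          have h1 : (vx : GV r s) ∈ M := hsub (mem_cins_self _ _)
          have h2 : (vy : GV r s) ∈ M := hsub (mem_cins.mpr (Or.inr (mem_cins_self _ _)))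
          have := ML_xy_ub hMax hr1 h1 h2
          omega
      · -- Builder plays x_i ; Blocker answers y_i
        show gameValAux (Grs r s) (f' + 1) false (cins (ex i) (WS A)) ≤ s + 2
        have hyp : (ey i : GV r s) ∈ playable (Grs r s) (cins (ex i) (WS A)) := by
          refine playable_intro ?_ (nb_pair_w (i0 := i) ?_)
          · rw [mem_cins]
            rintro (he | hm)
            · simp [ey, ex] at he
            · exact ey_not_WS hm
          · intro u hu
            replace hu : u ∈ cins (ey i) (cins (ex i) (WS A)) := hu
            simp only [mem_cins, mem_WS'] at hu
            rcases hu with rfl | rfl | ⟨j', _, rfl⟩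
            · exact Or.inr (Or.inl rfl)
            · exact Or.inl rfl
            · exact Or.inr (Or.inr ⟨j', rfl⟩)
        refine blocker_step_ub hyp ?_
        refine val_le_of_max (G := Grs r s) f' true _ ?_ ?_ ?_
        · rw [card_cins (playable_elim hyp).1, card_cins (by exact ex_not_WS), card_WS]
          omega
        · exact (mem_playable.mp hyp).2
        · intro M hMax hsub
          have h1 : (ex i : GV r s) ∈ M := hsub (mem_cins.mpr (Or.inr (mem_cins_self _ _)))
          have h2 : (ey i : GV r s) ∈ M := hsub (mem_cins_self _ _)
          exact ML_pair_ub hMax h1 h2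
      · -- Builder plays y_i ; Blocker answers x_i
        show gameValAux (Grs r s) (f' + 1) false (cins (ey i) (WS A)) ≤ s + 2
        have hxp : (ex i : GV r s) ∈ playable (Grs r s) (cins (ey i) (WS A)) := by
          refine playable_intro ?_ (nb_pair_w (i0 := i) ?_)
          · rw [mem_cins]
            rintro (he | hm)
            · simp [ex, ey] at he
            · exact ex_not_WS hm
          · intro u hu
            replace hu : u ∈ cins (ex i) (cins (ey i) (WS A)) := hu
            simp only [mem_cins, mem_WS'] at hu
            rcases hu with rfl | rfl | ⟨j', _, rfl⟩
            · exact Or.inl rfl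
            · exact Or.inr (Or.inl rfl)
            · exact Or.inr (Or.inr ⟨j', rfl⟩)
        refine blocker_step_ub hxp ?_
        refine val_le_of_max (G := Grs r s) f' true _ ?_ ?_ ?_
        · rw [card_cins (playable_elim hxp).1, card_cins (by exact ey_not_WS), card_WS]
          omega
        · exact (mem_playable.mp hxp).2
        · intro M hMax hsub
          have h1 : (ex i : GV r s) ∈ M := hsub (mem_cins_self _ _)
          have h2 : (ey i : GV r s) ∈ M := hsub (mem_cins.mpr (Or.inr (mem_cins_self _ _)))
          exact ML_pair_ub hMax h1 h2
      · -- Builder plays another w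
        show gameValAux (Grs r s) (f' + 1) false (cins (ew j) (WS A)) ≤ s + 2
        have hjA : j ∉ A := by
          intro h
          exact hvnot (mem_WS'.mpr ⟨j, h, rfl⟩)
        rw [cins_ew_WS]
        refine (ih (insert j A) ?_).1 ?_
        · rw [Finset.card_insert_of_notMem hjA]
          omega
        · rw [Finset.card_insert_of_notMem hjA]
          rcases Nat.even_or_odd A.card with h | h
          · exact absurd h hodd'
          · simpa [Nat.even_add_one] using Nat.not_even_iff_odd.mpr h

/-- The `{x_{i_0}} ∪ W'` positions with Blocker to move: value at least `s + 2`. -/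
lemma IndB2 (hr2 : 2 ≤ r) (hs3 : 3 ≤ s) (hsr : s < r) :
    ∀ (f : ℕ) (A : Finset (Fin s)) (i0 : Fin r), A.Nonempty →
    Fintype.card (GV r s) ≤ A.card + 1 + f →
    s + 2 ≤ gameValAux (Grs r s) f false (cins (ex i0) (WS A)) := by
  have hcardV := cardGV (r := r) (s := s)
  have hcardV2 : Fintype.card (Unit ⊕ Unit ⊕ Fin r ⊕ Fin r ⊕ Fin s) = 2 + 2 * r + s := hcardV
  intro f A i0 hA hf
  obtain ⟨j0, hj0⟩ := hA
  have hAs := cardA_le A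
  obtain ⟨f', rfl⟩ : ∃ f', f = f' + 1 := ⟨f - 1, by omega⟩
  have hpairp : ∀ S : Finset (GV r s),
      (∀ u ∈ S, u = ex i0 ∨ ∃ j', ew j' = u) → ey i0 ∉ S →
      ey i0 ∈ playable (Grs r s) S := by
    intro S hS hnot
    refine playable_intro hnot (nb_pair_w (i0 := i0) ?_)
    intro u hu
    replace hu : u ∈ cins (ey i0) S := hu
    rw [mem_cins] at hu
    rcases hu with rfl | hu
    · exact Or.inr (Or.inl rfl)
    · rcases hS u hu with rfl | ⟨j', rfl⟩
      · exact Or.inl rfl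
      · exact Or.inr (Or.inr ⟨j', rfl⟩)
  have hshape : ∀ u ∈ cins (ex i0) (WS A), u = ex i0 ∨ ∃ j', (ew j' : GV r s) = u := by
    intro u hu
    rw [mem_cins] at hu
    rcases hu with rfl | hu
    · exact Or.inl rfl
    · obtain ⟨j', _, he⟩ := mem_WS.mp hu
      exact Or.inr ⟨j', he⟩
  have heynot : (ey i0 : GV r s) ∉ cins (ex i0) (WS A) := by
    rw [mem_cins]
    rintro (he | hm)
    · simp [ey, ex] at he
    · exact ey_not_WS hm
  refine blocker_step_all ⟨ey i0, hpairp _ hshape heynot⟩ ?_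
  intro v hv
  obtain ⟨hvnot, hvnb⟩ := playable_elim hv
  have hji : (ew j0 : GV r s) ∈ cins (ex i0) (WS A) :=
    mem_cins.mpr (Or.inr (mem_WS'.mpr ⟨j0, hj0, rfl⟩))
  have hii0 : (ex i0 : GV r s) ∈ cins (ex i0) (WS A) := mem_cins_self _ _
  rcases v with w | w | b | b | j
  · -- x is not playable here
    cases w
    exact absurd (bad5 (by exact mem_cins_self _ _)
      (by exact mem_cins.mpr (Or.inr hii0)) (by exact mem_cins.mpr (Or.inr hji))) hvnb
  · -- Blocker plays y
    cases w
    show s + 2 ≤ gameValAux (Grs r s) f' true (cins vy (cins (ex i0) (WS A)))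
    replace hvnot : (vy : GV r s) ∉ cins (ex i0) (WS A) := hvnot
    refine val_ge_of_min (G := Grs r s) f' true _ ?_ ?_ ?_
    · rw [card_cins hvnot, card_cins (by exact ex_not_WS), card_WS]
      omega
    · exact (mem_playable.mp hv).2
    · intro M hMax hsub
      have h1 : (vy : GV r s) ∈ M := hsub (mem_cins_self _ _)
      have h2 : (ex i0 : GV r s) ∈ M := hsub (mem_cins.mpr (Or.inr hii0))
      have := ML_y_xi hMax (by omega) h1 h2
      omega
  · -- Blocker plays x_b
    show s + 2 ≤ gameValAux (Grs r s) f' true (cins (ex b) (cins (ex i0) (WS A)))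
    replace hvnot : (ex b : GV r s) ∉ cins (ex i0) (WS A) := hvnot
    have hb : b ≠ i0 := by
      rintro rfl
      exact hvnot hii0
    refine val_ge_of_min (G := Grs r s) f' true _ ?_ ?_ ?_
    · rw [card_cins hvnot, card_cins (by exact ex_not_WS), card_WS]
      omega
    · exact (mem_playable.mp hv).2
    · intro M hMax hsub
      have h1 : (ex b : GV r s) ∈ M := hsub (mem_cins_self _ _)
      have h2 : (ex i0 : GV r s) ∈ M := hsub (mem_cins.mpr (Or.inr hii0))
      have h3 : (ew j0 : GV r s) ∈ M := hsub (mem_cins.mpr (Or.inr hji))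
      have := ML_xx_w hMax (by omega) hb h1 h2 h3
      omega
  · -- Blocker plays y_b
    show s + 2 ≤ gameValAux (Grs r s) f' true (cins (ey b) (cins (ex i0) (WS A)))
    replace hvnot : (ey b : GV r s) ∉ cins (ex i0) (WS A) := hvnot
    by_cases hb : b = i0
    · subst hb
      refine val_ge_of_min (G := Grs r s) f' true _ ?_ ?_ ?_
      · rw [card_cins hvnot, card_cins (by exact ex_not_WS), card_WS]
        omega
      · exact (mem_playable.mp hv).2
      · intro M hMax hsub
        have h1 : (ey b : GV r s) ∈ M := hsub (mem_cins_self _ _)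
        have h2 : (ex b : GV r s) ∈ M := hsub (mem_cins.mpr (Or.inr hii0))
        exact ML_pair_lb hMax h2 h1
    · refine val_ge_of_min (G := Grs r s) f' true _ ?_ ?_ ?_
      · rw [card_cins hvnot, card_cins (by exact ex_not_WS), card_WS]
        omega
      · exact (mem_playable.mp hv).2
      · intro M hMax hsub
        have h1 : (ey b : GV r s) ∈ M := hsub (mem_cins_self _ _)
        have h2 : (ex i0 : GV r s) ∈ M := hsub (mem_cins.mpr (Or.inr hii0))
        have h3 : (ew j0 : GV r s) ∈ M := hsub (mem_cins.mpr (Or.inr hji))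
        have := ML_yx_w hMax (by omega) hb h1 h2 h3
        omega
  · -- Blocker plays another w ; Builder pairs
    show s + 2 ≤ gameValAux (Grs r s) f' true (cins (ew j) (cins (ex i0) (WS A)))
    replace hvnot : (ew j : GV r s) ∉ cins (ex i0) (WS A) := hvnot
    have hf1 : 1 ≤ f' := by omega
    obtain ⟨f'', rfl⟩ : ∃ f'', f' = f'' + 1 := ⟨f' - 1, by omega⟩
    have hshape2 : ∀ u ∈ cins (ew j) (cins (ex i0) (WS A)),
        u = ex i0 ∨ ∃ j', (ew j' : GV r s) = u := by
      intro u hu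
      rw [mem_cins] at hu
      rcases hu with rfl | hu
      · exact Or.inr ⟨j, rfl⟩
      · exact hshape u hu
    have heynot2 : (ey i0 : GV r s) ∉ cins (ew j) (cins (ex i0) (WS A)) := by
      rw [mem_cins]
      rintro (he | hm)
      · simp [ey, ew] at he
      · exact heynot hm
    refine builder_step (hpairp _ hshape2 heynot2) ?_
    refine val_ge_of_min (G := Grs r s) f'' false _ ?_ ?_ ?_
    · rw [card_cins heynot2, card_cins hvnot, card_cins (by exact ex_not_WS), card_WS]
      omega
    · exact (mem_playable.mp (hpairp _ hshape2 heynot2)).2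
    · intro M hMax hsub
      have h1 : (ey i0 : GV r s) ∈ M := hsub (mem_cins_self _ _)
      have h2 : (ex i0 : GV r s) ∈ M := hsub (mem_cins.mpr (Or.inr (mem_cins.mpr
        (Or.inr hii0))))
      exact ML_pair_lb hMax h2 h1

end GrsProof
namespace GrsProof
open Finset SimpleGraph

variable {r s : ℕ}

lemma nb_x_xi {T : Set (GV r s)} {i0 : Fin r} (h : ∀ u ∈ T, u = vx ∨ u = ex i0) :
    ¬ Bad r s T := by
  rintro (⟨i,i',hii,h1,h2,h3⟩|⟨i,i',hii,h1,h2,h3⟩|⟨j,j',hjj,h1,h2,h3⟩|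
    ⟨j,j',hjj,h1,h2,h3⟩|⟨i,j,h1,h2,h3⟩|⟨i,j,h1,h2,h3⟩|⟨i,h1,h2,h3⟩|⟨i,h1,h2,h3⟩|
    ⟨i,h1,h2,h3⟩|⟨i,h1,h2,h3⟩|⟨i,i',hii,h1,h2,h3⟩|⟨i,i',hii,h1,h2,h3⟩|
    ⟨i,i',hii,h1,h2,h3⟩|⟨i,i',hii,h1,h2,h3⟩)
  all_goals try (first
  | (rcases h _ h1 with he | he <;> (simp [vx, vy, ex, ey, ew] at he; done))
  | (rcases h _ h2 with he | he <;> (simp [vx, vy, ex, ey, ew] at he; done))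
  | (rcases h _ h3 with he | he <;> (simp [vx, vy, ex, ey, ew] at he; done)))
  -- leftover T1
  · have e1 : i = i0 := by
      rcases h _ h2 with he | he
      · simp [ex, vx] at he
      · simpa [ex] using he
    have e2 : i' = i0 := by
      rcases h _ h3 with he | he
      · simp [ex, vx] at he
      · simpa [ex] using he
    exact hii (e1.trans e2.symm)

lemma nb_y_yi {T : Set (GV r s)} {i0 : Fin r} (h : ∀ u ∈ T, u = vy ∨ u = ey i0) :
    ¬ Bad r s T := by
  rintro (⟨i,i',hii,h1,h2,h3⟩|⟨i,i',hii,h1,h2,h3⟩|⟨j,j',hjj,h1,h2,h3⟩|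
    ⟨j,j',hjj,h1,h2,h3⟩|⟨i,j,h1,h2,h3⟩|⟨i,j,h1,h2,h3⟩|⟨i,h1,h2,h3⟩|⟨i,h1,h2,h3⟩|
    ⟨i,h1,h2,h3⟩|⟨i,h1,h2,h3⟩|⟨i,i',hii,h1,h2,h3⟩|⟨i,i',hii,h1,h2,h3⟩|
    ⟨i,i',hii,h1,h2,h3⟩|⟨i,i',hii,h1,h2,h3⟩)
  all_goals try (first
  | (rcases h _ h1 with he | he <;> (simp [vx, vy, ex, ey, ew] at he; done))
  | (rcases h _ h2 with he | he <;> (simp [vx, vy, ex, ey, ew] at he; done))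
  | (rcases h _ h3 with he | he <;> (simp [vx, vy, ex, ey, ew] at he; done)))
  -- leftover T2
  · have e1 : i = i0 := by
      rcases h _ h2 with he | he
      · simp [ey, vy] at he
      · simpa [ey] using he
    have e2 : i' = i0 := by
      rcases h _ h3 with he | he
      · simp [ey, vy] at he
      · simpa [ey] using he
    exact hii (e1.trans e2.symm)

lemma playable_x_xi_empty {i : Fin r} :
    ¬ (playable (Grs r s) (cins vx (cins (ex i) (∅ : Finset (GV r s))))).Nonempty := by
  rintro ⟨u, hu⟩
  obtain ⟨hnot, hnb⟩ := playable_elim hu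
  have hx : (vx : GV r s) ∈ (↑(cins u (cins vx (cins (ex i) ∅))) : Set (GV r s)) := by
    exact mem_cins.mpr (Or.inr (mem_cins_self _ _))
  have hxi : (ex i : GV r s) ∈ (↑(cins u (cins vx (cins (ex i) ∅))) : Set (GV r s)) := by
    exact mem_cins.mpr (Or.inr (mem_cins.mpr (Or.inr (mem_cins_self _ _))))
  have hself : u ∈ (↑(cins u (cins vx (cins (ex i) ∅))) : Set (GV r s)) := by
    exact mem_cins_self _ _
  rcases u with w | w | k | k | j
  · cases w
    exact hnot (mem_cins_self _ _)
  · cases w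
    exact hnb (bad8 hx hself hxi)
  · by_cases hk : k = i
    · subst hk
      exact hnot (mem_cins.mpr (Or.inr (mem_cins_self _ _)))
    · exact hnb (bad1 hk hx hself hxi)
  · by_cases hk : k = i
    · subst hk
      exact hnb (bad9 hx hxi hself)
    · exact hnb (bad11 (Ne.symm hk) hx hxi hself)
  · exact hnb (bad5 hx hxi hself)

lemma playable_y_yi_empty {i : Fin r} :
    ¬ (playable (Grs r s) (cins vy (cins (ey i) (∅ : Finset (GV r s))))).Nonempty := by
  rintro ⟨u, hu⟩
  obtain ⟨hnot, hnb⟩ := playable_elim hu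
  have hy : (vy : GV r s) ∈ (↑(cins u (cins vy (cins (ey i) ∅))) : Set (GV r s)) := by
    exact mem_cins.mpr (Or.inr (mem_cins_self _ _))
  have hyi : (ey i : GV r s) ∈ (↑(cins u (cins vy (cins (ey i) ∅))) : Set (GV r s)) := by
    exact mem_cins.mpr (Or.inr (mem_cins.mpr (Or.inr (mem_cins_self _ _))))
  have hself : u ∈ (↑(cins u (cins vy (cins (ey i) ∅))) : Set (GV r s)) := by
    exact mem_cins_self _ _
  rcases u with w | w | k | k | j
  · cases w
    exact hnb (bad7 hself hy hyi)
  · cases w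
    exact hnot (mem_cins_self _ _)
  · by_cases hk : k = i
    · subst hk
      exact hnb (bad10 hy hself hyi)
    · exact hnb (bad12 hk hy hself hyi)
  · by_cases hk : k = i
    · subst hk
      exact hnot (mem_cins.mpr (Or.inr (mem_cins_self _ _)))
    · exact hnb (bad2 (Ne.symm hk) hy hyi hself)
  · exact hnb (bad6 hy hyi hself)

lemma card_cins2_empty {a b : GV r s} (hab : a ≠ b) :
    (cins a (cins b (∅ : Finset (GV r s)))).card = 2 := by
  rw [card_cins (by rw [mem_cins]; rintro (h | h); exacts [hab h, absurd h (by simp)]),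
    card_cins (by simp)]
  simp

/-- gpg(G(r,s)) = r + 2. -/
lemma main_gpg (hr2 : 2 ≤ r) (hs3 : 3 ≤ s) (hsr : s < r) (hodd : Odd s) :
    gpg (Grs r s) = r + 2 := by
  have hcardV := cardGV (r := r) (s := s)
  have hcardV2 : Fintype.card (Unit ⊕ Unit ⊕ Fin r ⊕ Fin r ⊕ Fin s) = 2 + 2 * r + s := hcardV
  unfold gpg gameVal
  rw [Finset.card_empty, Nat.sub_zero]
  refine le_antisymm ?_ ?_
  · -- upper bound
    obtain ⟨f', hf'⟩ : ∃ f', Fintype.card (Unit ⊕ Unit ⊕ Fin r ⊕ Fin r ⊕ Fin s) = f' + 1 :=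
      ⟨Fintype.card (Unit ⊕ Unit ⊕ Fin r ⊕ Fin r ⊕ Fin s) - 1, by omega⟩
    rw [hf']
    refine builder_step_all_ub (by simp) ?_
    intro v hv
    obtain ⟨hvnot, hvnb⟩ := playable_elim hv
    have hf'1 : 1 ≤ f' := by omega
    obtain ⟨f'', rfl⟩ : ∃ f'', f' = f'' + 1 := ⟨f' - 1, by omega⟩
    rcases v with w | w | i | i | j
    · -- Builder opens x : Blocker answers y
      cases w
      show gameValAux (Grs r s) (f'' + 1) false (cins vx (∅ : Finset (GV r s))) ≤ r + 2
      have hvyp : (vy : GV r s) ∈ playable (Grs r s) (cins vx ∅) := by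
        refine playable_intro ?_ (nb_xy_w ?_ ?_)
        · rw [mem_cins]
          rintro (he | h)
          · simp [vy, vx] at he
          · simp at h
        · intro u hu
          replace hu : u ∈ cins vy (cins vx ∅) := hu
          simp only [mem_cins, Finset.notMem_empty, or_false] at hu
          tauto
        · intro j1 j2 hj1 hj2
          replace hj1 : ew j1 ∈ cins vy (cins vx ∅) := hj1
          simp only [mem_cins, Finset.notMem_empty, or_false] at hj1
          rcases hj1 with he | he
          · simp [ew, vy] at he
          · simp [ew, vx] at he
      refine blocker_step_ub hvyp ?_
      refine val_le_of_max (G := Grs r s) f'' true _ ?_ ?_ ?_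
      · rw [card_cins2_empty (by simp [vy, vx])]
        omega
      · exact (mem_playable.mp hvyp).2
      · intro M hMax hsub
        have h1 : (vx : GV r s) ∈ M := hsub (mem_cins.mpr (Or.inr (mem_cins_self _ _)))
        have h2 : (vy : GV r s) ∈ M := hsub (mem_cins_self _ _)
        have := ML_xy_ub hMax (by omega) h1 h2
        omega
    · -- Builder opens y : Blocker answers x
      cases w
      show gameValAux (Grs r s) (f'' + 1) false (cins vy (∅ : Finset (GV r s))) ≤ r + 2
      have hvxp : (vx : GV r s) ∈ playable (Grs r s) (cins vy ∅) := by
        refine playable_intro ?_ (nb_xy_w ?_ ?_)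
        · rw [mem_cins]
          rintro (he | h)
          · simp [vx, vy] at he
          · simp at h
        · intro u hu
          replace hu : u ∈ cins vx (cins vy ∅) := hu
          simp only [mem_cins, Finset.notMem_empty, or_false] at hu
          tauto
        · intro j1 j2 hj1 hj2
          replace hj1 : ew j1 ∈ cins vx (cins vy ∅) := hj1
          simp only [mem_cins, Finset.notMem_empty, or_false] at hj1
          rcases hj1 with he | he
          · simp [ew, vx] at he
          · simp [ew, vy] at he
      refine blocker_step_ub hvxp ?_
      refine val_le_of_max (G := Grs r s) f'' true _ ?_ ?_ ?_
      · rw [card_cins2_empty (by simp [vx, vy])]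
        omega
      · exact (mem_playable.mp hvxp).2
      · intro M hMax hsub
        have h1 : (vx : GV r s) ∈ M := hsub (mem_cins_self _ _)
        have h2 : (vy : GV r s) ∈ M := hsub (mem_cins.mpr (Or.inr (mem_cins_self _ _)))
        have := ML_xy_ub hMax (by omega) h1 h2
        omega
    · -- Builder opens x_i : Blocker answers x, game over with 2 vertices
      show gameValAux (Grs r s) (f'' + 1) false (cins (ex i) (∅ : Finset (GV r s))) ≤ r + 2
      have hvxp : (vx : GV r s) ∈ playable (Grs r s) (cins (ex i) ∅) := by
        refine playable_intro ?_ (nb_x_xi (i0 := i) ?_)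
        · rw [mem_cins]
          rintro (he | h)
          · simp [vx, ex] at he
          · simp at h
        · intro u hu
          replace hu : u ∈ cins vx (cins (ex i) ∅) := hu
          simp only [mem_cins, Finset.notMem_empty, or_false] at hu
          tauto
      refine blocker_step_ub hvxp ?_
      rw [gameValAux_of_empty playable_x_xi_empty, card_cins2_empty (by simp [vx, ex])]
      omega
    · -- Builder opens y_i : Blocker answers y
      show gameValAux (Grs r s) (f'' + 1) false (cins (ey i) (∅ : Finset (GV r s))) ≤ r + 2
      have hvyp : (vy : GV r s) ∈ playable (Grs r s) (cins (ey i) ∅) := by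
        refine playable_intro ?_ (nb_y_yi (i0 := i) ?_)
        · rw [mem_cins]
          rintro (he | h)
          · simp [vy, ey] at he
          · simp at h
        · intro u hu
          replace hu : u ∈ cins vy (cins (ey i) ∅) := hu
          simp only [mem_cins, Finset.notMem_empty, or_false] at hu
          tauto
      refine blocker_step_ub hvyp ?_
      rw [gameValAux_of_empty playable_y_yi_empty, card_cins2_empty (by simp [vy, ey])]
      omega
    · -- Builder opens w_j : Blocker answers x
      show gameValAux (Grs r s) (f'' + 1) false (cins (ew j) (∅ : Finset (GV r s))) ≤ r + 2
      have hvxp : (vx : GV r s) ∈ playable (Grs r s) (cins (ew j) ∅) := by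
        refine playable_intro ?_ (nb_x_y_w ?_ ?_)
        · rw [mem_cins]
          rintro (he | h)
          · simp [vx, ew] at he
          · simp at h
        · intro u hu
          replace hu : u ∈ cins vx (cins (ew j) ∅) := hu
          simp only [mem_cins, Finset.notMem_empty, or_false] at hu
          rcases hu with rfl | rfl
          · exact Or.inl rfl
          · exact Or.inr (Or.inr ⟨j, rfl⟩)
        · intro j1 j2 hj1 hj2
          replace hj1 : ew j1 ∈ cins vx (cins (ew j) ∅) := hj1
          replace hj2 : ew j2 ∈ cins vx (cins (ew j) ∅) := hj2
          simp only [mem_cins, Finset.notMem_empty, or_false] at hj1 hj2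
          rcases hj1 with he | he
          · simp [ew, vx] at he
          rcases hj2 with he' | he'
          · simp [ew, vx] at he'
          exact (ew_inj he).trans (ew_inj he').symm
      refine blocker_step_ub hvxp ?_
      refine val_le_of_max (G := Grs r s) f'' true _ ?_ ?_ ?_
      · rw [card_cins2_empty (by simp [vx, ew])]
        omega
      · exact (mem_playable.mp hvxp).2
      · intro M hMax hsub
        have h1 : (vx : GV r s) ∈ M := hsub (mem_cins_self _ _)
        have h2 : (ew j : GV r s) ∈ M := hsub (mem_cins.mpr (Or.inr (mem_cins_self _ _)))
        exact ML_xw_ub hMax (by omega) h1 h2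
  · -- lower bound
    have h0 : (∅ : Finset (GV r s)) = WS ∅ := WS_empty.symm
    rw [h0]
    exact (IndB hr2 hs3 hodd _ ∅ (by simp)).1 (by simp)

/-- gpg'(G(r,s)) = s + 2. -/
lemma main_gpg' (hr2 : 2 ≤ r) (hs3 : 3 ≤ s) (hsr : s < r) (hodd : Odd s) :
    gpg' (Grs r s) = s + 2 := by
  have hcardV := cardGV (r := r) (s := s)
  have hcardV2 : Fintype.card (Unit ⊕ Unit ⊕ Fin r ⊕ Fin r ⊕ Fin s) = 2 + 2 * r + s := hcardV
  unfold gpg' gameVal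
  rw [Finset.card_empty, Nat.sub_zero]
  refine le_antisymm ?_ ?_
  · -- upper bound
    have h0 : (∅ : Finset (GV r s)) = WS ∅ := WS_empty.symm
    rw [h0]
    exact (IndB' (by omega) hs3 hodd _ ∅ (by simp)).1 (by simp)
  · -- lower bound
    obtain ⟨f', hf'⟩ : ∃ f', Fintype.card (Unit ⊕ Unit ⊕ Fin r ⊕ Fin r ⊕ Fin s) = f' + 1 :=
      ⟨Fintype.card (Unit ⊕ Unit ⊕ Fin r ⊕ Fin r ⊕ Fin s) - 1, by omega⟩
    rw [hf']
    have hvx0 : (vx : GV r s) ∈ playable (Grs r s) (∅ : Finset (GV r s)) := by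
      refine playable_intro (by simp) (nb_x_y_w ?_ ?_)
      · intro u hu
        replace hu : u ∈ cins vx ∅ := hu
        simp only [mem_cins, Finset.notMem_empty, or_false] at hu
        exact Or.inl hu
      · intro j1 j2 hj1 hj2
        replace hj1 : ew j1 ∈ cins vx ∅ := hj1
        simp only [mem_cins, Finset.notMem_empty, or_false] at hj1
        simp [ew, vx] at hj1
    refine blocker_step_all ⟨vx, hvx0⟩ ?_
    intro v hv
    obtain ⟨hvnot, hvnb⟩ := playable_elim hv
    have hf'1 : 1 ≤ f' := by omega
    obtain ⟨f'', rfl⟩ : ∃ f'', f' = f'' + 1 := ⟨f' - 1, by omega⟩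
    rcases v with w | w | i | i | j
    · -- Blocker opens x : Builder answers y₀
      cases w
      show s + 2 ≤ gameValAux (Grs r s) (f'' + 1) true (cins vx (∅ : Finset (GV r s)))
      have heyp : (ey (fz hr2) : GV r s) ∈ playable (Grs r s) (cins vx ∅) := by
        refine playable_intro ?_ (nb_x_y_w ?_ ?_)
        · rw [mem_cins]
          rintro (he | h)
          · simp [ey, vx] at he
          · simp at h
        · intro u hu
          replace hu : u ∈ cins (ey (fz hr2)) (cins vx ∅) := hu
          simp only [mem_cins, Finset.notMem_empty, or_false] at hu
          rcases hu with rfl | rfl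
          · exact Or.inr (Or.inl ⟨_, rfl⟩)
          · exact Or.inl rfl
        · intro j1 j2 hj1 hj2
          replace hj1 : ew j1 ∈ cins (ey (fz hr2)) (cins vx ∅) := hj1
          simp only [mem_cins, Finset.notMem_empty, or_false] at hj1
          rcases hj1 with he | he
          · simp [ew, ey] at he
          · simp [ew, vx] at he
      refine builder_step heyp ?_
      refine val_ge_of_min (G := Grs r s) f'' false _ ?_ ?_ ?_
      · rw [card_cins2_empty (by simp [ey, vx])]
        omega
      · exact (mem_playable.mp heyp).2
      · intro M hMax hsub
        have h1 : (vx : GV r s) ∈ M := hsub (mem_cins.mpr (Or.inr (mem_cins_self _ _)))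
        have h2 : (ey (fz hr2) : GV r s) ∈ M := hsub (mem_cins_self _ _)
        have := ML_x_yi hMax (by omega) h1 h2
        omega
    · -- Blocker opens y : Builder answers x₀
      cases w
      show s + 2 ≤ gameValAux (Grs r s) (f'' + 1) true (cins vy (∅ : Finset (GV r s)))
      have hexp : (ex (fz hr2) : GV r s) ∈ playable (Grs r s) (cins vy ∅) := by
        refine playable_intro ?_ (nb_y_x_w ?_ ?_)
        · rw [mem_cins]
          rintro (he | h)
          · simp [ex, vy] at he
          · simp at h
        · intro u hu
          replace hu : u ∈ cins (ex (fz hr2)) (cins vy ∅) := hu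
          simp only [mem_cins, Finset.notMem_empty, or_false] at hu
          rcases hu with rfl | rfl
          · exact Or.inr (Or.inl ⟨_, rfl⟩)
          · exact Or.inl rfl
        · intro j1 j2 hj1 hj2
          replace hj1 : ew j1 ∈ cins (ex (fz hr2)) (cins vy ∅) := hj1
          simp only [mem_cins, Finset.notMem_empty, or_false] at hj1
          rcases hj1 with he | he
          · simp [ew, ex] at he
          · simp [ew, vy] at he
      refine builder_step hexp ?_
      refine val_ge_of_min (G := Grs r s) f'' false _ ?_ ?_ ?_
      · rw [card_cins2_empty (by simp [ex, vy])]
        omega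
      · exact (mem_playable.mp hexp).2
      · intro M hMax hsub
        have h1 : (vy : GV r s) ∈ M := hsub (mem_cins.mpr (Or.inr (mem_cins_self _ _)))
        have h2 : (ex (fz hr2) : GV r s) ∈ M := hsub (mem_cins_self _ _)
        have := ML_y_xi hMax (by omega) h1 h2
        omega
    · -- Blocker opens x_i : Builder pairs with y_i
      show s + 2 ≤ gameValAux (Grs r s) (f'' + 1) true (cins (ex i) (∅ : Finset (GV r s)))
      have heyp : (ey i : GV r s) ∈ playable (Grs r s) (cins (ex i) ∅) := by
        refine playable_intro ?_ (nb_pair_w (i0 := i) ?_)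
        · rw [mem_cins]
          rintro (he | h)
          · simp [ey, ex] at he
          · simp at h
        · intro u hu
          replace hu : u ∈ cins (ey i) (cins (ex i) ∅) := hu
          simp only [mem_cins, Finset.notMem_empty, or_false] at hu
          tauto
      refine builder_step heyp ?_
      refine val_ge_of_min (G := Grs r s) f'' false _ ?_ ?_ ?_
      · rw [card_cins2_empty (by simp [ey, ex])]
        omega
      · exact (mem_playable.mp heyp).2
      · intro M hMax hsub
        have h1 : (ex i : GV r s) ∈ M := hsub (mem_cins.mpr (Or.inr (mem_cins_self _ _)))
        have h2 : (ey i : GV r s) ∈ M := hsub (mem_cins_self _ _)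
        exact ML_pair_lb hMax h1 h2
    · -- Blocker opens y_i : Builder pairs with x_i
      show s + 2 ≤ gameValAux (Grs r s) (f'' + 1) true (cins (ey i) (∅ : Finset (GV r s)))
      have hexp : (ex i : GV r s) ∈ playable (Grs r s) (cins (ey i) ∅) := by
        refine playable_intro ?_ (nb_pair_w (i0 := i) ?_)
        · rw [mem_cins]
          rintro (he | h)
          · simp [ex, ey] at he
          · simp at h
        · intro u hu
          replace hu : u ∈ cins (ex i) (cins (ey i) ∅) := hu
          simp only [mem_cins, Finset.notMem_empty, or_false] at hu
          tauto
      refine builder_step hexp ?_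
      refine val_ge_of_min (G := Grs r s) f'' false _ ?_ ?_ ?_
      · rw [card_cins2_empty (by simp [ex, ey])]
        omega
      · exact (mem_playable.mp hexp).2
      · intro M hMax hsub
        have h1 : (ex i : GV r s) ∈ M := hsub (mem_cins_self _ _)
        have h2 : (ey i : GV r s) ∈ M := hsub (mem_cins.mpr (Or.inr (mem_cins_self _ _)))
        exact ML_pair_lb hMax h1 h2
    · -- Blocker opens w_j : Builder answers x₀ and we are in the `IndB2` position
      show s + 2 ≤ gameValAux (Grs r s) (f'' + 1) true (cins (ew j) (∅ : Finset (GV r s)))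
      have hexp : (ex (fz hr2) : GV r s) ∈ playable (Grs r s) (cins (ew j) ∅) := by
        refine playable_intro ?_ (nb_xw ?_)
        · rw [mem_cins]
          rintro (he | h)
          · simp [ex, ew] at he
          · simp at h
        · intro u hu
          replace hu : u ∈ cins (ex (fz hr2)) (cins (ew j) ∅) := hu
          simp only [mem_cins, Finset.notMem_empty, or_false] at hu
          rcases hu with rfl | rfl
          · exact Or.inl ⟨_, rfl⟩
          · exact Or.inr ⟨j, rfl⟩
      refine builder_step hexp ?_
      have hws : cins (ew j) (∅ : Finset (GV r s)) = WS {j} := by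
        ext u
        simp only [mem_cins, Finset.notMem_empty, or_false, mem_WS', Finset.mem_singleton]
        constructor
        · rintro rfl; exact ⟨j, rfl, rfl⟩
        · rintro ⟨j', rfl, rfl⟩; rfl
      rw [hws]
      refine IndB2 hr2 hs3 hsr f'' {j} (fz hr2) ⟨j, by simp⟩ ?_
      simp only [Finset.card_singleton]
      omega

end GrsProof
/-- For `r > s ≥ 3` with `s` odd, `gpg(G(r,s)) = r + 2` and `gpg'(G(r,s)) = s + 2`;
in particular `gpg - gpg'` can be arbitrarily large. -/
theorem stmt_14 (r s : ℕ) (hsr : s < r) (hs : 3 ≤ s) (hodd : Odd s) :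
    (gpg (Grs r s) = r + 2 ∧ gpg' (Grs r s) = s + 2) ∧
    ∀ N : ℕ, ∃ (V : Type) (_ : Fintype V) (G : SimpleGraph V),
      G.Connected ∧ gpg' G + N ≤ gpg G := by
  have hr2 : 2 ≤ r := by omega
  constructor
  · exact ⟨GrsProof.main_gpg hr2 hs hsr hodd, GrsProof.main_gpg' hr2 hs hsr hodd⟩
  · intro N
    refine ⟨GrsProof.GV (s + N + 1) s, inferInstance, Grs (s + N + 1) s,
      GrsProof.grs_connected, ?_⟩
    rw [GrsProof.main_gpg' (by omega) hs (by omega) hodd,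
      GrsProof.main_gpg (by omega) hs (by omega) hodd]
    omega
end
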